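/- arXiv:2001.11348 — 12 statements merged into one kernel-verified Lean document; each statement's English description precedes it below -/
import Mathlib

section
/- Let V be a finite-dimensional real inner product space, K ⊆ V a closed convex cone, L ⊆ V a linear subspace, and X₀, C ∈ V. If a projection P : V → V satisfies the Constraint Set Invariance Conditions for (K, X₀ + L, C), then: (1) P((X₀ + L) ∩ K) ⊆ (X₀ + L) ∩ K; (2) P*((C + L^⊥) ∩ K*) ⊆ (C + L^⊥) ∩ K*; (3) ⟨C, X⟩ = ⟨C, P(X)⟩ for every X ∈ X₀ + L; (4) ⟨X₀, Y⟩ = ⟨X₀, P*(Y)⟩ for every Y ∈ C + L^⊥. -/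
open RealInnerProductSpace

/-- If a projection `P` satisfies the Constraint Set Invariance Conditions
for `(K, X₀ + L, C)`, then it maps the primal feasible set into itself, its adjoint maps
the dual feasible set into itself, and objective values are preserved. -/
theorem stmt1 {V : Type*} [NormedAddCommGroup V] [InnerProductSpace ℝ V]
    [FiniteDimensional ℝ V] (K : ConvexCone ℝ V) (hK : IsClosed (K : Set V))
    (L : Submodule ℝ V) (X₀ C : V) (P : V →ₗ[ℝ] V)
    (hproj : P ∘ₗ P = P)
    (hi : ∀ x ∈ K, P x ∈ K)
    (hii : ∀ X, X - X₀ ∈ L → P X - X₀ ∈ L)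
    (hiii : ∀ Y, Y - C ∈ Lᗮ → LinearMap.adjoint P Y - C ∈ Lᗮ) :
    (∀ X, (X - X₀ ∈ L ∧ X ∈ K) → (P X - X₀ ∈ L ∧ P X ∈ K)) ∧
    (∀ Y, (Y - C ∈ Lᗮ ∧ Y ∈ ProperCone.innerDual (K : Set V)) →
      (LinearMap.adjoint P Y - C ∈ Lᗮ ∧
        LinearMap.adjoint P Y ∈ ProperCone.innerDual (K : Set V))) ∧
    (∀ X, X - X₀ ∈ L → ⟪C, X⟫ = ⟪C, P X⟫) ∧
    (∀ Y, Y - C ∈ Lᗮ → ⟪X₀, Y⟫ = ⟪X₀, LinearMap.adjoint P Y⟫) := by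
  have hP2 : ∀ x : V, P (P x) = P x := by
    intro x
    have := congrArg (fun f : V →ₗ[ℝ] V => f x) hproj
    simpa using this
  refine ⟨?_, ?_, ?_, ?_⟩
  · rintro X ⟨h1, h2⟩
    exact ⟨hii X h1, hi X h2⟩
  · rintro Y ⟨h1, h2⟩
    refine ⟨hiii Y h1, ?_⟩
    rw [ProperCone.mem_innerDual] at h2 ⊢
    intro x hx
    rw [LinearMap.adjoint_inner_right]
    exact h2 (hi x hx)
  · intro X hX
    have hC : LinearMap.adjoint P C - C ∈ Lᗮ := hiii C (by simp)
    have hL : P X - X ∈ L := by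
      have := L.sub_mem (hii X hX) hX
      simpa using this
    have h0 : ⟪P X - X, LinearMap.adjoint P C - C⟫ = 0 := hC (P X - X) hL
    have h1 : ⟪P X - X, LinearMap.adjoint P C⟫ = 0 := by
      rw [LinearMap.adjoint_inner_right, map_sub, hP2]
      simp
    have h2 : ⟪P X - X, C⟫ = 0 := by
      rw [inner_sub_right, h1] at h0
      linarith
    rw [inner_sub_left] at h2
    linarith [real_inner_comm C X, real_inner_comm C (P X)]
  · intro Y hY
    have hX0 : P X₀ - X₀ ∈ L := hii X₀ (by simp)
    have hLp : LinearMap.adjoint P Y - Y ∈ Lᗮ := by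
      have := Lᗮ.sub_mem (hiii Y hY) hY
      simpa using this
    have h0 : ⟪P X₀ - X₀, LinearMap.adjoint P Y - Y⟫ = 0 :=
      hLp (P X₀ - X₀) hX0
    have h1 : ⟪P X₀, LinearMap.adjoint P Y - Y⟫ = 0 := by
      rw [inner_sub_right, LinearMap.adjoint_inner_right, hP2]
      ring
    have h2 : ⟪X₀, LinearMap.adjoint P Y - Y⟫ = 0 := by
      rw [inner_sub_left, h1] at h0
      linarith
    rw [inner_sub_right] at h2
    linarith
end

section
/- Let V be a finite-dimensional real inner product space, K ⊆ V a closed convex cone, L ⊆ V a linear subspace, X₀, C ∈ V, and let S ⊆ V be a linear subspace with orthogonal projection P_S onto S. Write C_L = P_L(C) and X_{0,L^⊥} = P_{L^⊥}(X₀), where P_L and P_{L^⊥} are the orthogonal projections onto L and L^⊥. Then P_S satisfies the Constraint Set Invariance Conditions for (K, X₀ + L, C) if and only if (a) C_L ∈ S and X_{0,L^⊥} ∈ S, (b) P_L(S) ⊆ S, and (c) P_S(K) ⊆ K. -/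
open RealInnerProductSpace

/-- The orthogonal projection onto a subspace `S`, viewed as a map `V → V`. -/
noncomputable def projTo {V : Type*} [NormedAddCommGroup V] [InnerProductSpace ℝ V]
    [FiniteDimensional ℝ V] (S : Submodule ℝ V) : V →ₗ[ℝ] V :=
  S.subtype ∘ₗ (S.orthogonalProjectionOnto).toLinearMap

section aux
variable {V : Type*} [NormedAddCommGroup V] [InnerProductSpace ℝ V] [FiniteDimensional ℝ V]

lemma projTo_mem (S : Submodule ℝ V) (x : V) : projTo S x ∈ S := (S.orthogonalProjectionOnto x).2

lemma projTo_eq_self {S : Submodule ℝ V} {x : V} (h : x ∈ S) : projTo S x = x :=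
  Submodule.starProjection_eq_self_iff.mpr h

lemma projTo_eq_zero {S : Submodule ℝ V} {x : V} (h : x ∈ Sᗮ) : projTo S x = 0 := by
  show ((S.orthogonalProjectionOnto x : S) : V) = 0
  rw [Submodule.orthogonalProjectionOnto_apply_of_mem_orthogonal h]
  rfl

lemma projTo_add_orth (S : Submodule ℝ V) (x : V) : projTo S x + projTo Sᗮ x = x :=
  Submodule.starProjection_add_starProjection_orthogonal (K := S) x

lemma projTo_inner (S : Submodule ℝ V) (u v : V) : ⟪projTo S u, v⟫ = ⟪u, projTo S v⟫ :=
  Submodule.inner_starProjection_left_eq_right S u v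

lemma adjoint_projTo (S : Submodule ℝ V) : LinearMap.adjoint (projTo S) = projTo S :=
  ((LinearMap.eq_adjoint_iff _ _).mpr (projTo_inner S)).symm

lemma mem_iff_projTo_orth_eq_zero {L : Submodule ℝ V} {v : V} : v ∈ L ↔ projTo Lᗮ v = 0 := by
  constructor
  · exact fun h => projTo_eq_zero (L.le_orthogonal_orthogonal h)
  · intro h
    have h2 := projTo_add_orth L v
    rw [h, add_zero] at h2
    rw [← h2]; exact projTo_mem _ _

lemma mem_orth_iff_projTo_eq_zero {L : Submodule ℝ V} {v : V} : v ∈ Lᗮ ↔ projTo L v = 0 := by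
  constructor
  · exact fun h => projTo_eq_zero h
  · intro h
    have h2 := projTo_add_orth L v
    rw [h, zero_add] at h2
    rw [← h2]; exact projTo_mem _ _

lemma projTo_inv_orth {T B : Submodule ℝ V} (h : ∀ x ∈ T, projTo B x ∈ T) :
    ∀ x ∈ Tᗮ, projTo B x ∈ Tᗮ := by
  intro x hx
  rw [Submodule.mem_orthogonal]
  intro u hu
  rw [← projTo_inner]
  exact hx _ (h u hu)

lemma projTo_comm {A B : Submodule ℝ V} (h1 : ∀ x ∈ A, projTo B x ∈ A)
    (h2 : ∀ x ∈ Aᗮ, projTo B x ∈ Aᗮ) (x : V) :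
    projTo A (projTo B x) = projTo B (projTo A x) := by
  conv_lhs => rw [← projTo_add_orth A x]
  rw [map_add, map_add, projTo_eq_self (h1 _ (projTo_mem A x)),
    projTo_eq_zero (h2 _ (projTo_mem Aᗮ x)), add_zero]

lemma projTo_comm_orth {A B : Submodule ℝ V}
    (comm : ∀ x, projTo A (projTo B x) = projTo B (projTo A x)) (x : V) :
    projTo Aᗮ (projTo B x) = projTo B (projTo Aᗮ x) := by
  have d1 : projTo Aᗮ (projTo B x) = projTo B x - projTo A (projTo B x) := by
    rw [eq_sub_iff_add_eq, add_comm]; exact projTo_add_orth A (projTo B x)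
  have d2 : projTo Aᗮ x = x - projTo A x := by
    rw [eq_sub_iff_add_eq, add_comm]; exact projTo_add_orth A x
  rw [d1, d2, map_sub, comm]

end aux

/-- The orthogonal projection `P_S` onto a subspace `S` satisfies the
Constraint Set Invariance Conditions for `(K, X₀ + L, C)` if and only if
(a) `P_L(C), P_{L^⊥}(X₀) ∈ S`, (b) `P_L(S) ⊆ S`, and (c) `P_S(K) ⊆ K`. -/
theorem stmt2 {V : Type*} [NormedAddCommGroup V] [InnerProductSpace ℝ V]
    [FiniteDimensional ℝ V] (K : ConvexCone ℝ V) (hK : IsClosed (K : Set V))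
    (L : Submodule ℝ V) (X₀ C : V) (S : Submodule ℝ V) :
    ((∀ x ∈ K, projTo S x ∈ K) ∧
     (∀ X, X - X₀ ∈ L → projTo S X - X₀ ∈ L) ∧
     (∀ Y, Y - C ∈ Lᗮ → LinearMap.adjoint (projTo S) Y - C ∈ Lᗮ))
    ↔
    ((projTo L C ∈ S ∧ projTo Lᗮ X₀ ∈ S) ∧
     (∀ X ∈ S, projTo L X ∈ S) ∧
     (∀ x ∈ K, projTo S x ∈ K)) := by
  rw [adjoint_projTo]
  constructor
  · rintro ⟨h1, h2, h3⟩
    have hX : projTo S X₀ - X₀ ∈ L := h2 X₀ (by simp)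
    have hSL : ∀ l ∈ L, projTo S l ∈ L := by
      intro l hl
      have h' := h2 (X₀ + l) (by simpa using hl)
      rw [map_add] at h'
      have h'' := L.sub_mem h' hX
      simpa using h''
    have hC : projTo S C - C ∈ Lᗮ := h3 C (by simp)
    have hSLo : ∀ v ∈ Lᗮ, projTo S v ∈ Lᗮ := by
      intro v hv
      have h' := h3 (C + v) (by simpa using hv)
      rw [map_add] at h'
      have h'' := Lᗮ.sub_mem h' hC
      simpa using h''
    have comm : ∀ x, projTo L (projTo S x) = projTo S (projTo L x) :=
      projTo_comm hSL hSLo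
    have commo : ∀ x, projTo Lᗮ (projTo S x) = projTo S (projTo Lᗮ x) :=
      projTo_comm_orth comm
    refine ⟨⟨?_, ?_⟩, ?_, h1⟩
    · have h0 : projTo L (projTo S C - C) = 0 := mem_orth_iff_projTo_eq_zero.mp hC
      rw [map_sub, comm C, sub_eq_zero] at h0
      rw [← h0]; exact projTo_mem _ _
    · have h0 : projTo Lᗮ (projTo S X₀ - X₀) = 0 := mem_iff_projTo_orth_eq_zero.mp hX
      rw [map_sub, commo X₀, sub_eq_zero] at h0
      rw [← h0]; exact projTo_mem _ _
    · intro s hs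
      have h0 := comm s
      rw [projTo_eq_self hs] at h0
      rw [h0]; exact projTo_mem _ _
  · rintro ⟨⟨hCL, hX0⟩, hb, hc⟩
    have hb' : ∀ x ∈ Sᗮ, projTo L x ∈ Sᗮ := projTo_inv_orth hb
    have comm : ∀ x, projTo L (projTo S x) = projTo S (projTo L x) :=
      fun x => (projTo_comm hb hb' x).symm
    have commo : ∀ x, projTo Lᗮ (projTo S x) = projTo S (projTo Lᗮ x) :=
      projTo_comm_orth comm
    have hSL : ∀ l ∈ L, projTo S l ∈ L := by
      intro l hl
      have h0 := comm l
      rw [projTo_eq_self hl] at h0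
      rw [← h0]; exact projTo_mem _ _
    have hSLo : ∀ v ∈ Lᗮ, projTo S v ∈ Lᗮ := by
      intro v hv
      have h0 := commo v
      rw [projTo_eq_self hv] at h0
      rw [← h0]; exact projTo_mem _ _
    have hX : projTo S X₀ - X₀ ∈ L := by
      rw [mem_iff_projTo_orth_eq_zero, map_sub, commo X₀, projTo_eq_self hX0, sub_self]
    have hC : projTo S C - C ∈ Lᗮ := by
      rw [mem_orth_iff_projTo_eq_zero, map_sub, comm C, projTo_eq_self hCL, sub_self]
    refine ⟨hc, ?_, ?_⟩
    · intro X hXm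
      have e : projTo S X - X₀ = projTo S (X - X₀) + (projTo S X₀ - X₀) := by
        rw [map_sub]; abel
      rw [e]
      exact L.add_mem (hSL _ hXm) hX
    · intro Y hYm
      have e : projTo S Y - C = projTo S (Y - C) + (projTo S C - C) := by
        rw [map_sub]; abel
      rw [e]
      exact Lᗮ.add_mem (hSLo _ hYm) hC
end

section
/- Let V be a finite-dimensional real inner product space, K ⊆ V a closed convex cone, L ⊆ V a linear subspace, X₀, C ∈ V, and let S ⊆ V be an admissible subspace (i.e., the orthogonal projection P_S onto S satisfies the CSICs for (K, X₀ + L, C)). Then the infimum of ⟨C, X⟩ over X ∈ (X₀ + L) ∩ K equals the infimum of ⟨P_S(C), X⟩ over X ∈ (P_S(X₀) + (L ∩ S)) ∩ (K ∩ S) (as values in ℝ ∪ {±∞}). -/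
open RealInnerProductSpace

/-- If `S` is an admissible subspace (the orthogonal projection `P_S`
satisfies the CSICs for `(K, X₀ + L, C)`), then the conic program
`inf {⟨C, X⟩ : X ∈ (X₀ + L) ∩ K}` has the same optimal value (in `ℝ ∪ {±∞}`) as the
reduced program `inf {⟨P_S C, X⟩ : X ∈ (P_S X₀ + (L ∩ S)) ∩ (K ∩ S)}`. -/
theorem stmt3 {V : Type*} [NormedAddCommGroup V] [InnerProductSpace ℝ V]
    [FiniteDimensional ℝ V] (K : ConvexCone ℝ V) (hK : IsClosed (K : Set V))
    (L : Submodule ℝ V) (X₀ C : V) (S : Submodule ℝ V)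
    (hi : ∀ x ∈ K, projTo S x ∈ K)
    (hii : ∀ X, X - X₀ ∈ L → projTo S X - X₀ ∈ L)
    (hiii : ∀ Y, Y - C ∈ Lᗮ → LinearMap.adjoint (projTo S) Y - C ∈ Lᗮ) :
    sInf ((fun X => ((⟪C, X⟫ : ℝ) : EReal)) '' {X | X - X₀ ∈ L ∧ X ∈ K}) =
      sInf ((fun X => ((⟪projTo S C, X⟫ : ℝ) : EReal)) ''
        {X | X - projTo S X₀ ∈ L ⊓ S ∧ X ∈ (K : Set V) ∩ (S : Set V)}) := by
  set P : V →ₗ[ℝ] V := projTo S with hPdef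
  have hmemS : ∀ x : V, P x ∈ S := fun x => (S.orthogonalProjectionOnto x).2
  have hself : ∀ x : V, x ∈ S → P x = x := by
    intro x hx
    exact Submodule.starProjection_eq_self_iff.mpr hx
  have hidem : ∀ x : V, P (P x) = P x := fun x => hself _ (hmemS x)
  have hsym : ∀ x y : V, ⟪P x, y⟫ = ⟪x, P y⟫ := fun x y =>
    Submodule.inner_starProjection_left_eq_right S x y
  have hadj : LinearMap.adjoint P = P := by
    symm
    rw [LinearMap.eq_adjoint_iff]
    exact hsym
  have hPC : P C - C ∈ Lᗮ := by
    have := hiii C (by simp)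
    rwa [hadj] at this
  have hPX₀ : P X₀ - X₀ ∈ L := hii X₀ (by simp)
  -- ⟪P C - C, X₀⟫ = 0
  have hCX₀ : ⟪P C - C, X₀⟫ = 0 := by
    have h1 : ⟪P C - C, P X₀ - X₀⟫ = 0 := (Submodule.mem_orthogonal' L _).mp hPC _ hPX₀
    have h2 : ⟪P C - C, P X₀⟫ = 0 := by
      rw [← hsym]
      simp [map_sub, hidem]
    have := inner_sub_right (𝕜 := ℝ) (P C - C) (P X₀) X₀
    rw [h1, h2] at this
    linarith
  have hval : ∀ X : V, X - X₀ ∈ L → ⟪P C - C, X⟫ = 0 := by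
    intro X hX
    have h1 : ⟪P C - C, X - X₀⟫ = 0 := (Submodule.mem_orthogonal' L _).mp hPC _ hX
    have := inner_sub_right (𝕜 := ℝ) (P C - C) X X₀
    rw [h1, hCX₀] at this
    linarith
  congr 1
  ext v
  simp only [Set.mem_image, Set.mem_setOf_eq, Set.mem_inter_iff, SetLike.mem_coe,
    Submodule.mem_inf]
  constructor
  · rintro ⟨X, ⟨hXL, hXK⟩, rfl⟩
    refine ⟨P X, ⟨⟨?_, ?_⟩, hi X hXK, hmemS X⟩, ?_⟩
    · have := hii X hXL
      have := L.sub_mem this hPX₀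
      simpa using this
    · have := S.sub_mem (hmemS X) (hmemS X₀)
      simpa using this
    · have e1 : ⟪P C, P X⟫ = ⟪P C, X⟫ := by
        rw [hsym, hidem, ← hsym]
      have e2 : ⟪P C, X⟫ = ⟪C, X⟫ := by
        have := hval X hXL
        have h := inner_sub_left (𝕜 := ℝ) (P C) C X
        rw [this] at h
        linarith
      rw [e1, e2]
  · rintro ⟨X, ⟨⟨hXL, hXS⟩, hXK, hXinS⟩, rfl⟩
    refine ⟨X, ⟨?_, hXK⟩, ?_⟩
    · have : (X - P X₀) + (P X₀ - X₀) ∈ L := L.add_mem hXL hPX₀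
      simpa using this
    · have : ⟪P C, X⟫ = ⟪C, X⟫ := by rw [hsym, hself X hXinS]
      rw [this]
end

section
/- Let S be a linear subspace of the space 𝕊ⁿ of n × n real symmetric matrices that is unital, i.e., there exists e ∈ S with e ∘ a = a for all a ∈ S under the Jordan product. Let P_S be the orthogonal projection onto S with respect to the trace inner product. Then P_S maps the cone of positive semidefinite matrices into itself (P_S(𝕊ⁿ₊) ⊆ 𝕊ⁿ₊) if and only if S is closed under taking squares (X² ∈ S for all X ∈ S). -/
namespace Stmt5Helpers
open Matrix Polynomial
variable {m : Type*} [Fintype m] [DecidableEq m]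
set_option linter.unusedSectionVars false
set_option linter.unnecessarySimpa false

lemma realHerm {A : Matrix m m ℝ} : A.IsHermitian ↔ A.IsSymm := by
  simp [Matrix.IsHermitian, Matrix.IsSymm, conjTranspose_eq_transpose_of_trivial]

lemma symmDot {Q : Matrix m m ℝ} (hQ : Q.IsSymm) (u v : m → ℝ) :
    v ⬝ᵥ Q *ᵥ u = u ⬝ᵥ Q *ᵥ v := by
  simp only [dotProduct, mulVec, Finset.mul_sum]
  rw [Finset.sum_comm]
  exact Finset.sum_congr rfl fun i _ => Finset.sum_congr rfl fun j _ => by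
    rw [hQ.apply i j]; ring

lemma psdCS {Q : Matrix m m ℝ} (hQ : Q.PosSemidef) (u v : m → ℝ) :
    (u ⬝ᵥ Q *ᵥ v) ^ 2 ≤ (u ⬝ᵥ Q *ᵥ u) * (v ⬝ᵥ Q *ᵥ v) := by
  have key : ∀ t : ℝ, 0 ≤ (v ⬝ᵥ Q *ᵥ v) * (t * t) + (2 * (u ⬝ᵥ Q *ᵥ v)) * t + (u ⬝ᵥ Q *ᵥ u) := by
    intro t
    have h := hQ.dotProduct_mulVec_nonneg (u + t • v)
    simp only [star_trivial] at h
    have hsymm : v ⬝ᵥ Q *ᵥ u = u ⬝ᵥ Q *ᵥ v := symmDot (realHerm.mp hQ.1) u v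
    calc (0:ℝ) ≤ (u + t • v) ⬝ᵥ Q *ᵥ (u + t • v) := h
      _ = (v ⬝ᵥ Q *ᵥ v) * (t * t) + (2 * (u ⬝ᵥ Q *ᵥ v)) * t + (u ⬝ᵥ Q *ᵥ u) := by
        simp [mulVec_add, dotProduct_add, add_dotProduct, smul_dotProduct,
          dotProduct_smul, mulVec_smul, hsymm]
        ring
  have := discrim_le_zero key
  rw [discrim] at this
  nlinarith [this]

lemma psdDiagNonneg {Q : Matrix m m ℝ} (hQ : Q.PosSemidef) (i : m) : 0 ≤ Q i i := by
  have := hQ.dotProduct_mulVec_nonneg (Pi.single i 1)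
  simpa using this

lemma psdTraceNonneg {Q : Matrix m m ℝ} (hQ : Q.PosSemidef) : 0 ≤ Q.trace :=
  Finset.sum_nonneg fun i _ => psdDiagNonneg hQ i

lemma psdEqCTMul {B : Matrix m m ℝ} (hB : B.PosSemidef) : ∃ C : Matrix m m ℝ, B = Cᴴ * C := by
  open scoped MatrixOrder in
  have h0 : 0 ≤ B := Matrix.nonneg_iff_posSemidef.mpr hB
  open scoped MatrixOrder in
  refine ⟨CFC.sqrt B, ?_⟩
  open scoped MatrixOrder in
  rw [← Matrix.star_eq_conjTranspose, (CFC.sqrt_nonneg B).isSelfAdjoint.star_eq,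
    CFC.sqrt_mul_sqrt_self B h0]

lemma psdTraceMulNonneg {A B : Matrix m m ℝ} (hA : A.PosSemidef) (hB : B.PosSemidef) :
    0 ≤ (A * B).trace := by
  obtain ⟨C, rfl⟩ := psdEqCTMul hB
  rw [← Matrix.mul_assoc, Matrix.trace_mul_cycle]
  exact psdTraceNonneg ((hA.mul_mul_conjTranspose_same C))

lemma psdTraceZero {Q : Matrix m m ℝ} (hQ : Q.PosSemidef) (h : Q.trace = 0) : Q = 0 := by
  obtain ⟨C, rfl⟩ := psdEqCTMul hQ
  have hC : C = 0 := by
    have htr : ∑ i, ∑ j, (C j i) ^ 2 = 0 := by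
      rw [← h]
      simp [Matrix.trace, Matrix.diag, Matrix.mul_apply, sq, Matrix.conjTranspose_apply]
    ext i j
    have h1 : ∀ i ∈ Finset.univ, (0:ℝ) ≤ ∑ j, (C j i)^2 :=
      fun i _ => Finset.sum_nonneg fun j _ => sq_nonneg _
    have h2 := (Finset.sum_eq_zero_iff_of_nonneg h1).mp htr j (Finset.mem_univ _)
    have h3 : ∀ k ∈ Finset.univ, (0:ℝ) ≤ (C k j)^2 := fun k _ => sq_nonneg _
    have := (Finset.sum_eq_zero_iff_of_nonneg h3).mp h2 i (Finset.mem_univ _)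
    simpa using pow_eq_zero_iff (n := 2) (by norm_num) |>.mp this
  rw [hC]; simp

/-- Conjugation by a unitary as an algebra homomorphism. -/
noncomputable def conjAH (U : Matrix m m ℝ) (h : U * star U = 1) (h' : star U * U = 1) :
    Matrix m m ℝ →ₐ[ℝ] Matrix m m ℝ where
  toFun M := U * M * star U
  map_one' := by simp only [Matrix.mul_one]; exact h
  map_mul' A B := by
    rw [show U * A * star U * (U * B * star U) = U * A * (star U * U) * B * star U by
      noncomm_ring, h']
    noncomm_ring
  map_zero' := by simp
  map_add' A B := by noncomm_ring
  commutes' r := by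
    simp only [Matrix.algebraMap_eq_diagonal, Pi.algebraMap_def, Algebra.algebraMap_self_apply]
    rw [show (Matrix.diagonal (fun _ : m => r)) = r • (1 : Matrix m m ℝ) by
      rw [Matrix.smul_one_eq_diagonal]]
    rw [Matrix.mul_smul, Matrix.smul_mul, Matrix.mul_one, h]

lemma conjAH_apply (U : Matrix m m ℝ) (h h') (M : Matrix m m ℝ) :
    conjAH U h h' M = U * M * star U := rfl

lemma aeval_diagonal' (d : m → ℝ) (p : ℝ[X]) :
    aeval (Matrix.diagonal d) p = Matrix.diagonal (fun i => p.eval (d i)) := by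
  have h1 : Matrix.diagonal d = Matrix.diagonalAlgHom (α := ℝ) ℝ d := rfl
  rw [h1, aeval_algHom_apply]
  have h2 : (aeval d p : m → ℝ) = fun i => p.eval (d i) := by
    funext i
    have := aeval_algHom_apply (Pi.evalAlgHom ℝ (fun _ : m => ℝ) i) d p
    simpa [Polynomial.coe_aeval_eq_eval] using this.symm
  show Matrix.diagonal (aeval d p) = _
  rw [h2]

lemma aeval_conj (U : Matrix m m ℝ) (h : U * star U = 1) (h' : star U * U = 1)
    (d : m → ℝ) (p : ℝ[X]) :
    aeval (U * Matrix.diagonal d * star U) p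
      = U * Matrix.diagonal (fun i => p.eval (d i)) * star U := by
  have := aeval_algHom_apply (conjAH U h h') (Matrix.diagonal d) p
  rw [conjAH_apply] at this
  rw [this, aeval_diagonal', conjAH_apply]

lemma sumRankOne (U : Matrix m m ℝ) (d : m → ℝ) :
    U * Matrix.diagonal d * star U
      = ∑ j, d j • vecMulVec (fun i => U i j) (fun i => U i j) := by
  ext i k
  simp only [Matrix.mul_apply, Matrix.diagonal_apply, Matrix.sum_apply, Matrix.smul_apply,
    vecMulVec_apply, smul_eq_mul, Matrix.star_apply, star_trivial, Finset.sum_mul,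
    Finset.mul_sum, mul_ite, ite_mul, mul_zero, zero_mul, Finset.sum_ite_eq,
    Finset.sum_ite_eq', Finset.mem_univ, if_true]
  exact Finset.sum_congr rfl fun j _ => by ring

lemma vecMulVec_conj (e : Matrix m m ℝ) (w : m → ℝ) :
    vecMulVec (e *ᵥ w) (e *ᵥ w) = e * vecMulVec w w * eᵀ := by
  ext i k
  simp only [vecMulVec_apply, Matrix.mul_apply, mulVec, dotProduct, transpose_apply,
    Finset.sum_mul, Finset.mul_sum]
  exact Finset.sum_congr rfl fun b _ => Finset.sum_congr rfl fun a _ => by ring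

lemma vecMulVec_isSymm (v : m → ℝ) : (vecMulVec v v).IsSymm :=
  Matrix.IsSymm.ext fun i j => by simp [vecMulVec_apply, mul_comm]

lemma vecMulVec_psd (v : m → ℝ) : (vecMulVec v v).PosSemidef := by
  refine Matrix.PosSemidef.of_dotProduct_mulVec_nonneg (realHerm.mpr (vecMulVec_isSymm v)) fun x => ?_
  have hmv : vecMulVec v v *ᵥ x = (v ⬝ᵥ x) • v := by
    ext i
    simp only [mulVec, vecMulVec_apply, dotProduct, Pi.smul_apply, smul_eq_mul, Finset.mul_sum]
    rw [Finset.sum_mul]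
    exact Finset.sum_congr rfl fun j _ => by ring
  rw [hmv]
  simp only [star_trivial, dotProduct_smul, smul_eq_mul]
  rw [dotProduct_comm]
  exact mul_self_nonneg _

lemma conj_sum {k : ℕ} (e : Matrix m m ℝ) (f : Fin k → Matrix m m ℝ) (d : Fin k → ℝ) :
    ∑ j, d j • (e * f j * e) = e * (∑ j, d j • f j) * e := by
  simp only [Matrix.mul_sum, Matrix.sum_mul, mul_smul_comm, smul_mul_assoc]

lemma isSymm_aeval {A : Matrix m m ℝ} (hA : A.IsSymm) (p : ℝ[X]) : (aeval A p).IsSymm := by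
  rw [aeval_eq_sum_range]
  unfold Matrix.IsSymm
  rw [Matrix.transpose_sum]
  exact Finset.sum_congr rfl fun i _ => by rw [Matrix.transpose_smul, Matrix.transpose_pow, hA.eq]

lemma dot_sum_smul_mulVec {k : ℕ} (M : Fin k → Matrix m m ℝ) (c : Fin k → ℝ) (u v : m → ℝ) :
    u ⬝ᵥ ((∑ j, c j • M j) *ᵥ v) = ∑ j, c j * (u ⬝ᵥ M j *ᵥ v) := by
  have h1 : (∑ j, c j • M j) *ᵥ v = ∑ j, c j • (M j *ᵥ v) := by
    have h := map_sum (AddMonoidHom.mk' (fun A : Matrix m m ℝ => A *ᵥ v)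
      (fun A B => add_mulVec A B v)) (fun j => c j • M j) Finset.univ
    simp only [AddMonoidHom.mk'_apply] at h
    rw [h]
    exact Finset.sum_congr rfl fun j _ => smul_mulVec (c j) (M j) v
  rw [h1]
  have h2 := map_sum (AddMonoidHom.mk' (fun x : m → ℝ => u ⬝ᵥ x)
    (fun x y => dotProduct_add u x y)) (fun j => c j • (M j *ᵥ v)) Finset.univ
  simp only [AddMonoidHom.mk'_apply] at h2
  rw [h2]
  exact Finset.sum_congr rfl fun j _ => by
    rw [dotProduct_smul]
    simp

end Stmt5Helpers


open Matrix Polynomial Stmt5Helpers in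
/-- Let `S` be a unital subspace of the `n × n` real symmetric matrices and
`P` the orthogonal projection onto `S` with respect to the trace inner product. Then `P`
maps the positive semidefinite cone into itself if and only if `S` is closed under taking
squares. -/
theorem stmt5 {n : ℕ} (S : Submodule ℝ (Matrix (Fin n) (Fin n) ℝ))
    (hS : ∀ X ∈ S, X.IsSymm)
    (hunital : ∃ e ∈ S, ∀ a ∈ S, ((1 : ℝ) / 2) • (e * a + a * e) = a)
    (P : Matrix (Fin n) (Fin n) ℝ →ₗ[ℝ] Matrix (Fin n) (Fin n) ℝ)
    (hrange : ∀ X : Matrix (Fin n) (Fin n) ℝ, X.IsSymm → P X ∈ S)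
    (hfix : ∀ X ∈ S, P X = X)
    (hselfadj : ∀ X Y : Matrix (Fin n) (Fin n) ℝ, X.IsSymm → Y.IsSymm →
      (P X * Y).trace = (X * P Y).trace) :
    (∀ X : Matrix (Fin n) (Fin n) ℝ, X.PosSemidef → (P X).PosSemidef) ↔
      (∀ X ∈ S, X * X ∈ S) := by
  obtain ⟨e, heS, he⟩ := hunital
  have hesymm : e.IsSymm := hS e heS
  have htwosmul : ∀ A : Matrix (Fin n) (Fin n) ℝ, ((1:ℝ)/2) • (A + A) = A := by
    intro A
    rw [← two_smul ℝ A, smul_smul]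
    norm_num
  have hee : e * e = e := by
    have h := he e heS
    rwa [htwosmul (e * e)] at h
  have hXe : ∀ X ∈ S, e * X = X ∧ X * e = X := by
    intro X hX
    have h := he X hX
    have h2 : e * X + X * e = (2 : ℝ) • X := by
      have h' := congrArg (fun M : Matrix (Fin n) (Fin n) ℝ => (2:ℝ) • M) h
      simp only [smul_smul] at h'
      norm_num at h'
      rw [h', two_smul]
    have hl : e * X + e * (X * e) = (2 : ℝ) • (e * X) := by
      have h' := congrArg (fun M : Matrix (Fin n) (Fin n) ℝ => e * M) h2
      simpa [Matrix.mul_add, Matrix.mul_smul, ← Matrix.mul_assoc, hee] using h'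
    have hr : e * X * e + X * e = (2 : ℝ) • (X * e) := by
      have h' := congrArg (fun M : Matrix (Fin n) (Fin n) ℝ => M * e) h2
      simpa [Matrix.add_mul, Matrix.smul_mul, Matrix.mul_assoc, hee] using h'
    have h3 : e * (X * e) = e * X := by
      have hh : e * X + e * (X * e) = e * X + e * X := by rw [hl, two_smul]
      exact add_left_cancel hh
    have h4 : e * X * e = X * e := by
      have hh : e * X * e + X * e = X * e + X * e := by rw [hr, two_smul]
      exact add_right_cancel hh
    have h5 : e * X = X * e := by rw [← h3, ← Matrix.mul_assoc, h4]
    have h6 : e * X = X := by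
      have h7 : (2:ℝ) • (e * X) = (2:ℝ) • X := by
        rw [two_smul]
        nth_rewrite 2 [h5]
        exact h2
      exact smul_right_injective _ (by norm_num : (2:ℝ) ≠ 0) h7
    exact ⟨h6, by rw [← h5]; exact h6⟩
  constructor
  · -- P positive ⇒ closed under squares
    intro hP X hXS
    have hXsymm : X.IsSymm := hS X hXS
    have hXH : Xᴴ = X := by
      rw [conjTranspose_eq_transpose_of_trivial, hXsymm.eq]
    have hXX : (X * X).PosSemidef := by
      have h' := Matrix.posSemidef_conjTranspose_mul_self X
      rwa [hXH] at h'
    have hXXsymm : (X * X).IsSymm := realHerm.mp hXX.1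
    have hXherm : X.IsHermitian := realHerm.mpr hXsymm
    set U : Matrix (Fin n) (Fin n) ℝ := (hXherm.eigenvectorUnitary : Matrix (Fin n) (Fin n) ℝ)
      with hU
    set μ : Fin n → ℝ := hXherm.eigenvalues with hμ
    have hU1 : U * star U = 1 := (Unitary.mem_iff.mp hXherm.eigenvectorUnitary.2).2
    have hU2 : star U * U = 1 := (Unitary.mem_iff.mp hXherm.eigenvectorUnitary.2).1
    have hspec : X = U * Matrix.diagonal μ * star U := by
      have h' := hXherm.spectral_theorem
      simpa using h'
    set w : Fin n → Fin n → ℝ := fun j i => U i j with hw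
    set V : Fin n → Matrix (Fin n) (Fin n) ℝ := fun j => vecMulVec (e *ᵥ w j) (e *ᵥ w j) with hV
    have hVsum : ∀ d : Fin n → ℝ,
        ∑ j, d j • V j = e * (U * Matrix.diagonal d * star U) * e := by
      intro d
      rw [sumRankOne U d]
      have hVj : ∀ j, V j = e * vecMulVec (w j) (w j) * e := by
        intro j
        rw [hV]
        simp only []
        rw [vecMulVec_conj, hesymm.eq]
      calc ∑ j, d j • V j = ∑ j, d j • (e * vecMulVec (w j) (w j) * e) :=
            Finset.sum_congr rfl fun j _ => by rw [hVj j]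
        _ = e * (∑ j, d j • vecMulVec (w j) (w j)) * e := conj_sum e _ d
    have hsum1 : ∑ j, V j = e := by
      have h' := hVsum (fun _ => 1)
      simpa [Matrix.diagonal_one, hU1, hee] using h'
    have hsumX : ∑ j, μ j • V j = X := by
      rw [hVsum μ, ← hspec, (hXe X hXS).1, (hXe X hXS).2]
    have hsumX2 : ∑ j, (μ j)^2 • V j = X * X := by
      have hXX2 : X * X = U * Matrix.diagonal (fun j => μ j ^ 2) * star U := by
        conv_lhs => rw [hspec]
        rw [show U * Matrix.diagonal μ * star U * (U * Matrix.diagonal μ * star U)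
          = U * (Matrix.diagonal μ * (star U * U) * Matrix.diagonal μ) * star U by
            noncomm_ring]
        rw [hU2, Matrix.mul_one, Matrix.diagonal_mul_diagonal,
          show (fun i => μ i * μ i) = (fun j => μ j ^ 2) from funext fun j => (sq (μ j)).symm]
      have hXXe : e * (X * X) = X * X := by rw [← Matrix.mul_assoc, (hXe X hXS).1]
      have hXXe2 : (X * X) * e = X * X := by rw [Matrix.mul_assoc, (hXe X hXS).2]
      rw [hVsum, ← hXX2, hXXe, hXXe2]
    -- apply P
    set Q : Fin n → Matrix (Fin n) (Fin n) ℝ := fun j => P (V j) with hQdef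
    have hVpsd : ∀ j, (V j).PosSemidef := fun j => vecMulVec_psd _
    have hVsymm : ∀ j, (V j).IsSymm := fun j => vecMulVec_isSymm _
    have hQpsd : ∀ j, (Q j).PosSemidef := fun j => hP _ (hVpsd j)
    have hQS : ∀ j, Q j ∈ S := fun j => hrange _ (hVsymm j)
    have hPsum : ∀ d : Fin n → ℝ, ∑ j, d j • Q j = P (∑ j, d j • V j) := by
      intro d
      rw [map_sum]
      exact Finset.sum_congr rfl fun j _ => (P.map_smul (d j) (V j)).symm
    have hQsum1 : ∑ j, Q j = e := by
      have h' := hPsum (fun _ => 1)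
      simpa [hsum1, hfix e heS] using h'
    have hQsumX : ∑ j, μ j • Q j = X := by
      rw [hPsum μ, hsumX, hfix X hXS]
    set C : Matrix (Fin n) (Fin n) ℝ := P (X * X) with hC
    have hQsumX2 : ∑ j, (μ j)^2 • Q j = C := by
      rw [hPsum (fun j => μ j ^ 2), hsumX2]
    have hCS : C ∈ S := hrange _ hXXsymm
    have hCsymm : C.IsSymm := hS _ hCS
    have hCpsd : C.PosSemidef := hP _ hXX
    have h1epsd : ((1 : Matrix (Fin n) (Fin n) ℝ) - e).PosSemidef := by
      have hid : ((1 : Matrix (Fin n) (Fin n) ℝ) - e)ᴴ * (1 - e) = 1 - e := by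
        rw [conjTranspose_eq_transpose_of_trivial, Matrix.transpose_sub,
          Matrix.transpose_one, hesymm.eq]
        simp only [Matrix.sub_mul, Matrix.mul_sub, Matrix.one_mul, Matrix.mul_one, hee]
        abel
      have h' := Matrix.posSemidef_conjTranspose_mul_self
        ((1 : Matrix (Fin n) (Fin n) ℝ) - e)
      rwa [hid] at h'
    have key : ∀ v : Fin n → ℝ, v ⬝ᵥ (X * X) *ᵥ v ≤ v ⬝ᵥ C *ᵥ v := by
      intro v
      set u : Fin n → ℝ := X *ᵥ v with hu
      have huu : v ⬝ᵥ (X * X) *ᵥ v = u ⬝ᵥ u := by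
        rw [← Matrix.mulVec_mulVec, ← hu, symmDot hXsymm u v]
      have hXexp : u ⬝ᵥ u = ∑ j, μ j * (u ⬝ᵥ Q j *ᵥ v) := by
        have h' : u ⬝ᵥ u = u ⬝ᵥ X *ᵥ v := rfl
        rw [h', ← hQsumX, dot_sum_smul_mulVec]
      have hterm : ∀ j, μ j * (u ⬝ᵥ Q j *ᵥ v)
          ≤ Real.sqrt (u ⬝ᵥ Q j *ᵥ u) * Real.sqrt (μ j ^ 2 * (v ⬝ᵥ Q j *ᵥ v)) := by
        intro j
        have hcs := psdCS (hQpsd j) u v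
        have ha : 0 ≤ u ⬝ᵥ Q j *ᵥ u := by
          have h' := (hQpsd j).dotProduct_mulVec_nonneg u; simpa using h'
        have hb : 0 ≤ μ j ^ 2 * (v ⬝ᵥ Q j *ᵥ v) := by
          have h' := (hQpsd j).dotProduct_mulVec_nonneg v
          simp only [star_trivial] at h'
          exact mul_nonneg (sq_nonneg _) h'
        have hsq' : (μ j * (u ⬝ᵥ Q j *ᵥ v))^2
            ≤ (u ⬝ᵥ Q j *ᵥ u) * (μ j ^ 2 * (v ⬝ᵥ Q j *ᵥ v)) := by
          nlinarith [hcs, sq_nonneg (μ j)]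
        calc μ j * (u ⬝ᵥ Q j *ᵥ v) ≤ |μ j * (u ⬝ᵥ Q j *ᵥ v)| := le_abs_self _
          _ = Real.sqrt ((μ j * (u ⬝ᵥ Q j *ᵥ v))^2) := (Real.sqrt_sq_eq_abs _).symm
          _ ≤ Real.sqrt ((u ⬝ᵥ Q j *ᵥ u) * (μ j ^ 2 * (v ⬝ᵥ Q j *ᵥ v))) :=
              Real.sqrt_le_sqrt hsq'
          _ = _ := Real.sqrt_mul ha _
      have hsum1' : ∑ j, u ⬝ᵥ Q j *ᵥ u = u ⬝ᵥ e *ᵥ u := by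
        have h' := dot_sum_smul_mulVec Q (fun _ => (1:ℝ)) u u
        simp only [one_smul, one_mul] at h'
        rw [← h', hQsum1]
      have hsumC : ∑ j, μ j ^ 2 * (v ⬝ᵥ Q j *ᵥ v) = v ⬝ᵥ C *ᵥ v := by
        have h' := dot_sum_smul_mulVec Q (fun j => μ j ^ 2) v v
        rw [hQsumX2] at h'
        exact h'.symm
      have hsumineq : u ⬝ᵥ u ≤ Real.sqrt (u ⬝ᵥ e *ᵥ u) * Real.sqrt (v ⬝ᵥ C *ᵥ v) := by
        rw [hXexp]
        calc ∑ j, μ j * (u ⬝ᵥ Q j *ᵥ v)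
            ≤ ∑ j, Real.sqrt (u ⬝ᵥ Q j *ᵥ u) * Real.sqrt (μ j ^ 2 * (v ⬝ᵥ Q j *ᵥ v)) :=
              Finset.sum_le_sum fun j _ => hterm j
          _ ≤ Real.sqrt (∑ j, u ⬝ᵥ Q j *ᵥ u) * Real.sqrt (∑ j, μ j ^ 2 * (v ⬝ᵥ Q j *ᵥ v)) := by
              apply Real.sum_sqrt_mul_sqrt_le
              · intro j
                have h' := (hQpsd j).dotProduct_mulVec_nonneg u; simpa using h'
              · intro j
                have h' := (hQpsd j).dotProduct_mulVec_nonneg v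
                simp only [star_trivial] at h'
                exact mul_nonneg (sq_nonneg _) h'
          _ = _ := by rw [hsum1', hsumC]
      have heu : u ⬝ᵥ e *ᵥ u ≤ u ⬝ᵥ u := by
        have h' := h1epsd.dotProduct_mulVec_nonneg u
        simp only [star_trivial, Matrix.sub_mulVec, dotProduct_sub, Matrix.one_mulVec] at h'
        linarith
      have hs0 : 0 ≤ u ⬝ᵥ u := Finset.sum_nonneg fun i _ => mul_self_nonneg _
      have ht0 : 0 ≤ v ⬝ᵥ C *ᵥ v := by
        have h' := hCpsd.dotProduct_mulVec_nonneg v; simpa using h'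
      have h2 : u ⬝ᵥ u ≤ Real.sqrt (u ⬝ᵥ u) * Real.sqrt (v ⬝ᵥ C *ᵥ v) := by
        refine le_trans hsumineq ?_
        exact mul_le_mul_of_nonneg_right (Real.sqrt_le_sqrt heu) (Real.sqrt_nonneg _)
      have hfin : u ⬝ᵥ u ≤ v ⬝ᵥ C *ᵥ v := by
        nlinarith [Real.sqrt_nonneg (u ⬝ᵥ u), Real.sqrt_nonneg (v ⬝ᵥ C *ᵥ v),
          Real.sq_sqrt hs0, Real.sq_sqrt ht0,
          sq_nonneg (Real.sqrt (u ⬝ᵥ u) - Real.sqrt (v ⬝ᵥ C *ᵥ v)), h2]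
      rw [huu]; exact hfin
    have hdiffpsd : (C - X * X).PosSemidef := by
      refine Matrix.PosSemidef.of_dotProduct_mulVec_nonneg (realHerm.mpr (hCsymm.sub hXXsymm)) fun v => ?_
      simp only [star_trivial, Matrix.sub_mulVec, dotProduct_sub]
      linarith [key v]
    have htr : (C - X * X).trace = 0 := by
      have h1 : C * e = C := (hXe C hCS).2
      have h2 : (X * X) * e = X * X := by rw [Matrix.mul_assoc, (hXe X hXS).2]
      have h3 := hselfadj (X * X) e hXXsymm hesymm
      rw [hfix e heS] at h3
      rw [← hC] at h3
      rw [h1, h2] at h3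
      rw [Matrix.trace_sub, h3, sub_self]
    have hzero := psdTraceZero hdiffpsd htr
    have hXXC : X * X = C := (sub_eq_zero.mp hzero).symm
    rw [hXXC]
    exact hCS
  · -- closed under squares ⇒ P positive
    intro hsq X hXpsd
    have hXsymm : X.IsSymm := realHerm.mp hXpsd.1
    set A : Matrix (Fin n) (Fin n) ℝ := P X with hA
    have hAS : A ∈ S := hrange X hXsymm
    have hAsymm : A.IsSymm := hS A hAS
    have hAherm : A.IsHermitian := realHerm.mpr hAsymm
    -- Jordan algebra facts
    have hjord : ∀ a ∈ S, ∀ b ∈ S, a * b + b * a ∈ S := by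
      intro a ha b hb
      have h1 := hsq (a + b) (S.add_mem ha hb)
      have h2 : a * b + b * a = (a + b) * (a + b) - a * a - b * b := by noncomm_ring
      rw [h2]
      exact S.sub_mem (S.sub_mem h1 (hsq a ha)) (hsq b hb)
    have hpow : ∀ a ∈ S, ∀ k : ℕ, a ^ (k + 1) ∈ S := by
      intro a ha k
      induction k with
      | zero => simpa [pow_one] using ha
      | succ k ih =>
        have h1 : a * a ^ (k+1) + a ^ (k+1) * a ∈ S := hjord a ha _ ih
        have h2 : a ^ (k + 2) = ((1:ℝ)/2) • (a * a ^ (k+1) + a ^ (k+1) * a) := by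
          rw [← pow_succ, ← pow_succ']
          rw [htwosmul]
        rw [show k + 1 + 1 = k + 2 from rfl, h2]
        exact S.smul_mem _ h1
    have hpoly : ∀ a ∈ S, ∀ p : ℝ[X], p.eval 0 = 0 → aeval a p ∈ S := by
      intro a ha p hp
      rw [aeval_eq_sum_range]
      apply Submodule.sum_mem
      intro i _
      cases i with
      | zero =>
        rw [show p.coeff 0 = 0 by rwa [Polynomial.coeff_zero_eq_eval_zero]]
        simp
      | succ k => exact S.smul_mem _ (hpow a ha k)
    -- spectral data of A
    set U : Matrix (Fin n) (Fin n) ℝ := (hAherm.eigenvectorUnitary : Matrix (Fin n) (Fin n) ℝ)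
      with hU
    set μ : Fin n → ℝ := hAherm.eigenvalues with hμ
    have hU1 : U * star U = 1 := (Unitary.mem_iff.mp hAherm.eigenvectorUnitary.2).2
    have hU2 : star U * U = 1 := (Unitary.mem_iff.mp hAherm.eigenvectorUnitary.2).1
    have hspec : A = U * Matrix.diagonal μ * star U := by
      have h' := hAherm.spectral_theorem
      simpa using h'
    -- interpolation polynomial
    set T : Finset ℝ := insert 0 (Finset.image μ Finset.univ) with hT
    set r : ℝ → ℝ := fun t => if t < 0 then 1 else 0 with hr
    set q : ℝ[X] := Lagrange.interpolate T id r with hq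
    have hinj : Set.InjOn id (T : Set ℝ) := Function.injective_id.injOn
    have heval : ∀ x ∈ T, q.eval x = r x := by
      intro x hx
      have h' := Lagrange.eval_interpolate_at_node r hinj hx
      exact h'
    have hq0 : q.eval 0 = 0 := by
      rw [heval 0 (Finset.mem_insert_self _ _)]
      simp [hr]
    set N : Matrix (Fin n) (Fin n) ℝ := aeval A q with hN
    have hNS : N ∈ S := hpoly A hAS q hq0
    have hNsymm : N.IsSymm := isSymm_aeval hAsymm q
    set B : Matrix (Fin n) (Fin n) ℝ := N * N with hB
    have hBS : B ∈ S := hsq N hNS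
    have hBsymm : B.IsSymm := hS B hBS
    have hBpsd : B.PosSemidef := by
      have hNH : Nᴴ = N := by
        rw [conjTranspose_eq_transpose_of_trivial, hNsymm.eq]
      have h' := Matrix.posSemidef_conjTranspose_mul_self N
      rwa [hNH] at h'
    -- computation of trace (A * B)
    have hAB : A * B = U * Matrix.diagonal
        (fun i => (Polynomial.X * (q * q)).eval (μ i)) * star U := by
      have h1 : A * B = aeval A (Polynomial.X * (q * q)) := by
        rw [_root_.map_mul, _root_.map_mul, Polynomial.aeval_X]
      rw [h1, hspec, aeval_conj U hU1 hU2]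
    have htrAB : (A * B).trace = ∑ i, (if μ i < 0 then μ i else 0) := by
      rw [hAB]
      rw [Matrix.trace_mul_cycle, hU2, Matrix.one_mul, Matrix.trace_diagonal]
      refine Finset.sum_congr rfl fun i _ => ?_
      have hμT : μ i ∈ T := Finset.mem_insert_of_mem (Finset.mem_image_of_mem μ
        (Finset.mem_univ i))
      rw [Polynomial.eval_mul, Polynomial.eval_mul, Polynomial.eval_X, heval _ hμT]
      by_cases hlt : μ i < 0
      · simp [hr, hlt]
      · simp [hr, hlt]
    -- positivity of trace
    have htrpos : 0 ≤ (A * B).trace := by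
      have h' := hselfadj X B hXsymm hBsymm
      rw [hfix B hBS] at h'
      rw [← hA] at h'
      rw [h']
      exact psdTraceMulNonneg hXpsd hBpsd
    -- conclude eigenvalues are nonnegative
    have hev : ∀ i, 0 ≤ μ i := by
      intro i
      by_contra hneg
      push_neg at hneg
      have hterm : ∀ j ∈ (Finset.univ : Finset (Fin n)),
          (if μ j < 0 then μ j else 0) ≤ (0:ℝ) := by
        intro j _
        by_cases h : μ j < 0
        · rw [if_pos h]; linarith
        · rw [if_neg h]
      have hsum0 : ∑ j, (if μ j < 0 then μ j else 0) = (0:ℝ) :=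
        le_antisymm (Finset.sum_nonpos hterm) (by rw [← htrAB]; exact htrpos)
      have hzero := (Finset.sum_eq_zero_iff_of_nonpos hterm).mp hsum0 i (Finset.mem_univ i)
      rw [if_pos hneg] at hzero
      linarith
    exact hAherm.posSemidef_iff_eigenvalues_nonneg.mpr hev
end

section
/- Let S be a linear subspace of the n × n real symmetric matrices that has a basis consisting of entrywise nonnegative matrices with pairwise disjoint supports, and let P_S be the orthogonal projection onto S with respect to the trace inner product. If P_S(𝕊ⁿ₊) ⊆ 𝕊ⁿ₊, then P_S(𝒟ⁿ) ⊆ 𝒟ⁿ. -/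
private lemma tr_eq {n : ℕ} (A C : Matrix (Fin n) (Fin n) ℝ) :
    (A * C).trace = ∑ a, ∑ b, A a b * C b a := by
  simp [Matrix.trace, Matrix.mul_apply]

/-- Let `S` be a subspace of the `n × n` real symmetric matrices with a basis
of entrywise nonnegative matrices with pairwise disjoint supports, and let `P` be the
orthogonal projection onto `S` with respect to the trace inner product. If `P` maps the
positive semidefinite cone into itself, then `P` maps the doubly nonnegative cone into
itself. -/
theorem stmt6 {n : ℕ} (S : Submodule ℝ (Matrix (Fin n) (Fin n) ℝ))
    (hS : ∀ X ∈ S, X.IsSymm)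
    (k : ℕ) (B : Fin k → Matrix (Fin n) (Fin n) ℝ)
    (hBnn : ∀ i, ∀ a b, 0 ≤ B i a b)
    (hBdisj : ∀ i j, i ≠ j → ∀ a b, B i a b = 0 ∨ B j a b = 0)
    (hBli : LinearIndependent ℝ B)
    (hBspan : Submodule.span ℝ (Set.range B) = S)
    (P : Matrix (Fin n) (Fin n) ℝ →ₗ[ℝ] Matrix (Fin n) (Fin n) ℝ)
    (hrange : ∀ X : Matrix (Fin n) (Fin n) ℝ, X.IsSymm → P X ∈ S)
    (hfix : ∀ X ∈ S, P X = X)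
    (hselfadj : ∀ X Y : Matrix (Fin n) (Fin n) ℝ, X.IsSymm → Y.IsSymm →
      (P X * Y).trace = (X * P Y).trace)
    (hpsd : ∀ X : Matrix (Fin n) (Fin n) ℝ, X.PosSemidef → (P X).PosSemidef) :
    ∀ X : Matrix (Fin n) (Fin n) ℝ, X.PosSemidef → (∀ a b, 0 ≤ X a b) →
      (P X).PosSemidef ∧ ∀ a b, 0 ≤ P X a b := by
  have hBmem : ∀ i, B i ∈ S := fun i =>
    hBspan ▸ Submodule.subset_span (Set.mem_range_self i)
  have hBsymm : ∀ i, (B i).IsSymm := fun i => hS _ (hBmem i)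
  -- orthogonality of the basis
  have horth : ∀ i j, i ≠ j → (B i * B j).trace = 0 := by
    intro i j hij
    rw [tr_eq]
    refine Finset.sum_eq_zero fun a _ => Finset.sum_eq_zero fun b _ => ?_
    rw [(hBsymm j).apply]
    rcases hBdisj i j hij a b with h | h <;> simp [h]
  -- positivity of the basis norms
  have hpos : ∀ j, 0 < (B j * B j).trace := by
    intro j
    have hne : B j ≠ 0 := hBli.ne_zero j
    obtain ⟨a, b, hab⟩ : ∃ a b, B j a b ≠ 0 := by
      by_contra h
      push_neg at h
      exact hne (by ext a b; simpa using h a b)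
    rw [tr_eq]
    have hterm : ∀ x : Fin n, ∀ y : Fin n, 0 ≤ B j x y * B j y x := fun x y =>
      mul_nonneg (hBnn j x y) (hBnn j y x)
    have hp : 0 < B j a b := lt_of_le_of_ne (hBnn j a b) (Ne.symm hab)
    have hab' : 0 < B j a b * B j b a := by
      rw [(hBsymm j).apply a b]; exact mul_pos hp hp
    calc (0 : ℝ) < B j a b * B j b a := hab'
      _ ≤ ∑ y, B j a y * B j y a :=
          Finset.single_le_sum (f := fun y => B j a y * B j y a)
            (fun y _ => hterm a y) (Finset.mem_univ b)
      _ ≤ ∑ x, ∑ y, B j x y * B j y x :=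
          Finset.single_le_sum (f := fun x => ∑ y, B j x y * B j y x)
            (fun x _ => Finset.sum_nonneg fun y _ => hterm x y) (Finset.mem_univ a)
  intro X hXpsd hXnn
  have hXsymm : X.IsSymm := by
    have h := hXpsd.1
    rwa [Matrix.IsHermitian, Matrix.conjTranspose_eq_transpose_of_trivial] at h
  refine ⟨hpsd X hXpsd, ?_⟩
  have hPX : P X ∈ Submodule.span ℝ (Set.range B) := by
    rw [hBspan]; exact hrange X hXsymm
  obtain ⟨c, hc⟩ := (Submodule.mem_span_range_iff_exists_fun ℝ).mp hPX
  -- each coefficient is nonnegative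
  have hcnn : ∀ j, 0 ≤ c j := by
    intro j
    have h1 : (P X * B j).trace = c j * (B j * B j).trace := by
      rw [← hc, Finset.sum_mul]
      have : ∀ i, (c i • B i) * B j = c i • (B i * B j) := fun i => smul_mul_assoc _ _ _
      simp_rw [this, Matrix.trace_sum, Matrix.trace_smul, smul_eq_mul]
      rw [Finset.sum_eq_single j (fun i _ hij => by rw [horth i j hij, mul_zero])
        (fun h => absurd (Finset.mem_univ j) h)]
    have h2 : (P X * B j).trace = (X * B j).trace := by
      rw [hselfadj X (B j) hXsymm (hBsymm j), hfix _ (hBmem j)]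
    have h3 : 0 ≤ (X * B j).trace := by
      rw [tr_eq]
      exact Finset.sum_nonneg fun a _ => Finset.sum_nonneg fun b _ =>
        mul_nonneg (hXnn a b) (hBnn j b a)
    have h4 : 0 ≤ c j * (B j * B j).trace := by rw [← h1, h2]; exact h3
    exact le_of_not_gt fun hlt => absurd h4 (not_le.mpr (mul_neg_of_neg_of_pos hlt (hpos j)))
  intro a b
  have := congrFun (congrFun (congrArg (fun M => (M : Matrix (Fin n) (Fin n) ℝ)) hc) a) b
  rw [← hc]
  rw [Matrix.sum_apply]
  exact Finset.sum_nonneg fun i _ => by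
    simpa using mul_nonneg (hcnn i) (hBnn i a b)
end

section
/- Consider a conic optimization problem in 𝕊ⁿ given by a subspace L ⊆ 𝕊ⁿ and matrices X₀, C ∈ 𝕊ⁿ. Let S ⊆ 𝕊ⁿ be a partition subspace that is admissible for the problem with cone K = 𝕊ⁿ₊ (i.e., the orthogonal projection P_S satisfies the CSICs for (𝕊ⁿ₊, X₀ + L, C)). Then S is also admissible for the problem with cone K = 𝒟ⁿ (i.e., P_S satisfies the CSICs for (𝒟ⁿ, X₀ + L, C)). -/
/-- If a partition subspace `S` is admissible for a conic problem in `𝕊ⁿ`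
with the cone `𝕊ⁿ₊` (i.e. the orthogonal projection `P_S` satisfies the CSICs for
`(𝕊ⁿ₊, X₀ + L, C)`), then it is also admissible for the same problem with the doubly
nonnegative cone `𝒟ⁿ` (i.e. `P_S` satisfies the CSICs for `(𝒟ⁿ, X₀ + L, C)`). -/
theorem stmt7 {n : ℕ}
    (S : Submodule ℝ (Matrix (Fin n) (Fin n) ℝ))
    -- `S` is a partition subspace: spanned by symmetric 0/1 matrices with pairwise
    -- disjoint supports summing to the all-ones matrix
    (k : ℕ) (B : Fin k → Matrix (Fin n) (Fin n) ℝ)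
    (hBsymm : ∀ i, (B i).IsSymm)
    (hB01 : ∀ i a b, B i a b = 0 ∨ B i a b = 1)
    (hBdisj : ∀ i j, i ≠ j → ∀ a b, B i a b = 0 ∨ B j a b = 0)
    (hBsum : ∑ i, B i = Matrix.of fun _ _ => (1 : ℝ))
    (hBspan : Submodule.span ℝ (Set.range B) = S)
    -- problem data: a subspace `L` of `𝕊ⁿ` and symmetric matrices `X₀`, `C`
    (L : Submodule ℝ (Matrix (Fin n) (Fin n) ℝ)) (hL : ∀ X ∈ L, X.IsSymm)
    (X₀ C : Matrix (Fin n) (Fin n) ℝ) (hX₀ : X₀.IsSymm) (hC : C.IsSymm)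
    -- `P` is the orthogonal projection onto `S` w.r.t. the trace inner product
    (P : Matrix (Fin n) (Fin n) ℝ →ₗ[ℝ] Matrix (Fin n) (Fin n) ℝ)
    (hrange : ∀ X : Matrix (Fin n) (Fin n) ℝ, X.IsSymm → P X ∈ S)
    (hfix : ∀ X ∈ S, P X = X)
    (hselfadj : ∀ X Y : Matrix (Fin n) (Fin n) ℝ, X.IsSymm → Y.IsSymm →
      (P X * Y).trace = (X * P Y).trace)
    -- the CSICs for the cone 𝕊ⁿ₊
    (hKpsd : ∀ X : Matrix (Fin n) (Fin n) ℝ, X.PosSemidef → (P X).PosSemidef)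
    (haff : ∀ X, X - X₀ ∈ L → P X - X₀ ∈ L)
    (hdual : ∀ Y : Matrix (Fin n) (Fin n) ℝ, Y.IsSymm →
      (∀ X ∈ L, (X * (Y - C)).trace = 0) →
      ((P Y).IsSymm ∧ ∀ X ∈ L, (X * (P Y - C)).trace = 0)) :
    -- the CSICs for the cone 𝒟ⁿ
    (∀ X : Matrix (Fin n) (Fin n) ℝ, X.PosSemidef → (∀ a b, 0 ≤ X a b) →
      ((P X).PosSemidef ∧ ∀ a b, 0 ≤ P X a b)) ∧
    (∀ X, X - X₀ ∈ L → P X - X₀ ∈ L) ∧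
    (∀ Y : Matrix (Fin n) (Fin n) ℝ, Y.IsSymm →
      (∀ X ∈ L, (X * (Y - C)).trace = 0) →
      ((P Y).IsSymm ∧ ∀ X ∈ L, (X * (P Y - C)).trace = 0)) := by
  refine ⟨?_, haff, hdual⟩
  intro X hXpsd hXnn
  have hXsymm : X.IsSymm := by
    have h := hXpsd.1
    simpa [Matrix.IsHermitian, Matrix.IsSymm] using h
  refine ⟨hKpsd X hXpsd, ?_⟩
  have hPX : P X ∈ Submodule.span ℝ (Set.range B) := by
    rw [hBspan]; exact hrange X hXsymm
  obtain ⟨c, hc⟩ := (Submodule.mem_span_range_iff_exists_fun ℝ).mp hPX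
  -- key: for each i, c i * N i = ⟨B i, X⟩ ≥ 0 with N i > 0 on the support
  have hsym : ∀ i p q, B i q p = B i p q := fun i p q => (hBsymm i).apply p q
  have key : ∀ i : Fin k,
      c i * (∑ p, ∑ q, B i p q * B i p q) = (B i * X).trace := by
    intro i
    have hBiS : B i ∈ S := by
      rw [← hBspan]; exact Submodule.subset_span ⟨i, rfl⟩
    have h1 : (P (B i) * X).trace = (B i * P X).trace := hselfadj (B i) X (hBsymm i) hXsymm
    rw [hfix (B i) hBiS] at h1
    rw [h1, ← hc]
    have expand : (B i * ∑ j, c j • B j).trace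
        = ∑ j, c j * (B i * B j).trace := by
      rw [Matrix.mul_sum, Matrix.trace_sum]
      congr 1; ext j
      rw [Matrix.mul_smul, Matrix.trace_smul]
      rfl
    rw [expand]
    have hzero : ∀ j ∈ Finset.univ, j ≠ i → c j * (B i * B j).trace = 0 := by
      intro j _ hji
      have : (B i * B j).trace = 0 := by
        rw [Matrix.trace]
        apply Finset.sum_eq_zero
        intro p _
        rw [Matrix.diag, Matrix.mul_apply]
        apply Finset.sum_eq_zero
        intro q _
        rcases hBdisj i j (fun h => hji h.symm) p q with h | h
        · rw [h, zero_mul]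
        · rw [← hsym j q p, h, mul_zero]
      rw [this, mul_zero]
    rw [Finset.sum_eq_single_of_mem i (Finset.mem_univ i) hzero]
    congr 1
    rw [Matrix.trace]
    simp only [Matrix.diag, Matrix.mul_apply]
    congr 1; ext p; congr 1; ext q
    rw [hsym i q p]
  intro a b
  rw [← hc]
  have hentry : (∑ j, c j • B j) a b = ∑ j, c j * B j a b := by
    simp [Matrix.sum_apply, Matrix.smul_apply]
  rw [hentry]
  apply Finset.sum_nonneg
  intro i _
  rcases hB01 i a b with h0 | h1
  · rw [h0, mul_zero]
  · rw [h1, mul_one]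
    have hN : (0:ℝ) < ∑ p, ∑ q, B i p q * B i p q := by
      have hle : (1:ℝ) ≤ ∑ p, ∑ q, B i p q * B i p q := by
        have h1' : B i a b * B i a b = 1 := by rw [h1]; ring
        calc (1:ℝ) = B i a b * B i a b := h1'.symm
          _ ≤ ∑ q, B i a q * B i a q := by
              apply Finset.single_le_sum (f := fun q => B i a q * B i a q)
              · intro q _; exact mul_self_nonneg _
              · exact Finset.mem_univ b
          _ ≤ ∑ p, ∑ q, B i p q * B i p q := by
              apply Finset.single_le_sum (f := fun p => ∑ q, B i p q * B i p q)
              · intro p _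
                apply Finset.sum_nonneg; intro q _; exact mul_self_nonneg _
              · exact Finset.mem_univ a
      linarith
    have htr : (0:ℝ) ≤ (B i * X).trace := by
      rw [Matrix.trace]
      apply Finset.sum_nonneg
      intro p _
      rw [Matrix.diag, Matrix.mul_apply]
      apply Finset.sum_nonneg
      intro q _
      have hB : (0:ℝ) ≤ B i p q := by
        rcases hB01 i p q with h | h <;> rw [h] <;> norm_num
      exact mul_nonneg hB (hXnn q p)
    have := key i
    nlinarith [key i]
end

section
/- Let P be an n × n real matrix that is symmetric, entrywise nonnegative, and idempotent (P² = P), and let r = rank(P). Then there exists a matrix C ∈ ℝ₊^{n×r} with C^T C = I_r such that P = C C^T. In particular, the columns of C form a nonnegative orthonormal basis of the range of P, and these columns have pairwise disjoint supports. -/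
open Matrix


/-- Transport lemma: once we have such a `C` over any fintype `κ`, we can reindex by `Fin P.rank`. -/
theorem transport8 {n : ℕ} {κ : Type} [Fintype κ] [DecidableEq κ]
    (P : Matrix (Fin n) (Fin n) ℝ) (C : Matrix (Fin n) κ ℝ)
    (h1 : ∀ i j, 0 ≤ C i j) (h2 : Cᵀ * C = 1) (h3 : P = C * Cᵀ)
    (h5 : ∀ j l, j ≠ l → ∀ i, C i j = 0 ∨ C i l = 0) :
    ∃ C : Matrix (Fin n) (Fin P.rank) ℝ,
      (∀ i j, 0 ≤ C i j) ∧
      Cᵀ * C = 1 ∧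
      P = C * Cᵀ ∧
      LinearMap.range P.mulVecLin = Submodule.span ℝ (Set.range fun j => Cᵀ j) ∧
      (∀ j l, j ≠ l → ∀ i, C i j = 0 ∨ C i l = 0) := by
  classical
  have hid : Cᵀ.mulVecLin ∘ₗ C.mulVecLin = LinearMap.id := by
    rw [← Matrix.mulVecLin_mul, h2, Matrix.mulVecLin_one]
  have hlinv : Function.LeftInverse Cᵀ.mulVecLin C.mulVecLin := fun x => by
    have := congrArg (fun f => f x) hid; simpa using this
  have hinj : Function.Injective C.mulVecLin := hlinv.injective
  have hsurj : Function.Surjective Cᵀ.mulVecLin := hlinv.surjective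
  have hrange : LinearMap.range P.mulVecLin = LinearMap.range C.mulVecLin := by
    rw [h3, Matrix.mulVecLin_mul, LinearMap.range_comp,
      LinearMap.range_eq_top.mpr hsurj, Submodule.map_top]
  have hrank : P.rank = Fintype.card κ := by
    have : P.rank = Module.finrank ℝ (LinearMap.range P.mulVecLin) := rfl
    rw [this, hrange, LinearMap.finrank_range_of_inj hinj,
      Module.finrank_fintype_fun_eq_card]
  have e : Fin P.rank ≃ κ := Fintype.equivOfCardEq (by simpa using hrank)
  refine ⟨Matrix.of fun i j => C i (e j), fun i j => h1 _ _, ?_, ?_, ?_, ?_⟩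
  · ext j l
    have := congrFun (congrFun h2 (e j)) (e l)
    simp only [Matrix.mul_apply, Matrix.transpose_apply, Matrix.one_apply, Matrix.of_apply] at this ⊢
    rw [this]
    simp [EmbeddingLike.apply_eq_iff_eq]
  · ext k l
    have h3' := congrFun (congrFun h3 k) l
    rw [h3']
    simp only [Matrix.mul_apply, Matrix.transpose_apply, Matrix.of_apply]
    exact (Fintype.sum_equiv e _ _ (fun j => rfl)).symm
  · rw [hrange, Matrix.range_mulVecLin]
    congr 1
    have : (Set.range fun j => (Matrix.of fun i l => C i (e l))ᵀ j) = Set.range (Cᵀ ∘ e) := rfl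
    rw [this]
    exact (e.surjective.range_comp (show κ → Fin n → ℝ from Cᵀ)).symm
  · intro j l hjl i
    exact h5 (e j) (e l) (fun h => hjl (e.injective h)) i


theorem stmt8' {n : ℕ} (P : Matrix (Fin n) (Fin n) ℝ)
    (hsymm : P.IsSymm) (hnn : ∀ i j, 0 ≤ P i j) (hidem : P * P = P) :
    ∃ (κ : Type) (_ : Fintype κ) (_ : DecidableEq κ) (C : Matrix (Fin n) κ ℝ),
      (∀ i j, 0 ≤ C i j) ∧ Cᵀ * C = 1 ∧ P = C * Cᵀ ∧
      (∀ j l, j ≠ l → ∀ i, C i j = 0 ∨ C i l = 0) := by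
  classical
  have hsym : ∀ i j, P j i = P i j := fun i j => hsymm.apply i j
  have h2 : ∀ a b, ∑ m, P a m * P m b = P a b := fun a b => by
    have := congrFun (congrFun hidem a) b
    rwa [Matrix.mul_apply] at this
  have hpos_diag : ∀ i j, 0 < P i j → 0 < P i i := by
    intro i j hij
    have hle : P i j * P j i ≤ ∑ m, P i m * P m i :=
      Finset.single_le_sum (f := fun m => P i m * P m i)
        (fun m _ => mul_nonneg (hnn _ _) (hnn _ _)) (Finset.mem_univ j)
    have h := h2 i i
    nlinarith [hsym i j]
  have htrans : ∀ i j k, 0 < P i j → 0 < P j k → 0 < P i k := by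
    intro i j k ha hb
    have hle : P i j * P j k ≤ ∑ m, P i m * P m k :=
      Finset.single_le_sum (f := fun m => P i m * P m k)
        (fun m _ => mul_nonneg (hnn _ _) (hnn _ _)) (Finset.mem_univ j)
    have h := h2 i k
    nlinarith
  -- column proportionality
  have hprop : ∀ i j, 0 < P i j → ∀ k, P k j = P i j / P i i * P k i := by
    intro i j hij
    have hii : 0 < P i i := hpos_diag i j hij
    set T := Finset.univ.filter (fun k => 0 < P k i) with hT
    have hiT : i ∈ T := by simp [hT, hii]
    obtain ⟨k₀, hk₀T, hmin⟩ := T.exists_min_image (fun k => P k j / P k i) ⟨i, hiT⟩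
    have hk₀i : 0 < P k₀ i := by simpa [hT] using hk₀T
    set t := P k₀ j / P k₀ i with ht
    set z : Fin n → ℝ := fun k => P k j - t * P k i with hz
    have ht0 : 0 ≤ t := div_nonneg (hnn _ _) (hnn _ _)
    have hznn : ∀ k, 0 ≤ z k := by
      intro k
      by_cases hk : 0 < P k i
      · have hm : t ≤ P k j / P k i := hmin k (by simp [hT, hk])
        rw [le_div_iff₀ hk] at hm
        simp only [hz]; linarith
      · have h0 : P k i = 0 := le_antisymm (not_lt.mp hk) (hnn k i)
        simp [hz, h0, hnn k j]
    have hzk₀ : z k₀ = 0 := by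
      simp only [hz, ht]
      field_simp
      ring
    have hfix : ∑ m, P k₀ m * z m = 0 := by
      have e1 : ∑ m, P k₀ m * z m
          = (∑ m, P k₀ m * P m j) - t * ∑ m, P k₀ m * P m i := by
        rw [Finset.mul_sum, ← Finset.sum_sub_distrib]
        refine Finset.sum_congr rfl fun m _ => by simp [hz]; ring
      rw [e1, h2, h2]
      simpa [hz] using hzk₀
    have hterm : ∀ m, P k₀ m * z m = 0 := fun m =>
      (Finset.sum_eq_zero_iff_of_nonneg
        (fun m _ => mul_nonneg (hnn _ _) (hznn m))).mp hfix m (Finset.mem_univ m)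
    have hzall : ∀ m, z m = 0 := by
      intro m
      by_cases hmi : 0 < P m i
      · have hk₀m : 0 < P k₀ m := htrans k₀ i m hk₀i (by rw [hsym]; exact hmi)
        exact (mul_eq_zero.mp (hterm m)).resolve_left (ne_of_gt hk₀m)
      · have hmi0 : P m i = 0 := le_antisymm (not_lt.mp hmi) (hnn m i)
        have hmj : P m j = 0 := by
          by_contra h
          have hmj' : 0 < P m j := lt_of_le_of_ne (hnn m j) (Ne.symm h)
          exact hmi (htrans m j i hmj' (by rw [hsym]; exact hij))
        simp [hz, hmi0, hmj]
    have hki : ∀ k, P k j = t * P k i := fun k => by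
      have := hzall k; simp only [hz] at this; linarith
    have hti : t = P i j / P i i := by
      have := hki i
      field_simp
      linarith [this]
    intro k
    rw [hki k, hti]
  -- representatives
  set R : Fin n → Prop := fun i => 0 < P i i ∧ ∀ j, 0 < P i j → i ≤ j with hR
  have hrep_unique : ∀ i i', R i → R i' → 0 < P i i' → i = i' := by
    rintro i i' ⟨_, hi⟩ ⟨_, hi'⟩ h
    exact le_antisymm (hi i' h) (hi' i (by rw [hsym]; exact h))
  have hrep_exists : ∀ k l, 0 < P k l → ∃ i, R i ∧ 0 < P k i ∧ 0 < P i l := by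
    intro k l hkl
    set S := Finset.univ.filter (fun j => 0 < P k j) with hS
    have hne : S.Nonempty := ⟨l, by simp [hS, hkl]⟩
    set i₀ := S.min' hne with hi₀
    have hmem : 0 < P k i₀ := by
      have := S.min'_mem hne; simpa [hS] using this
    refine ⟨i₀, ⟨hpos_diag i₀ k (by rw [hsym]; exact hmem), ?_⟩, hmem, ?_⟩
    · intro j hj
      exact S.min'_le j (by simp [hS, htrans k i₀ j hmem hj])
    · exact htrans i₀ k l (by rw [hsym]; exact hmem) hkl
  -- the matrix C
  refine ⟨{i : Fin n // R i}, inferInstance, inferInstance,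
    Matrix.of fun k i => P k i.1 / Real.sqrt (P i.1 i.1), fun k i =>
      div_nonneg (hnn _ _) (Real.sqrt_nonneg _), ?_, ?_, ?_⟩
  · -- CᵀC = 1
    ext i j
    simp only [Matrix.mul_apply, Matrix.transpose_apply, Matrix.one_apply, Matrix.of_apply]
    by_cases hij : i = j
    · subst hij
      have hii : 0 < P i.1 i.1 := i.2.1
      have : ∀ k, P k i.1 / Real.sqrt (P i.1 i.1) * (P k i.1 / Real.sqrt (P i.1 i.1))
          = P k i.1 * P k i.1 / P i.1 i.1 := by
        intro k
        rw [div_mul_div_comm, Real.mul_self_sqrt (le_of_lt hii)]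
      rw [Finset.sum_congr rfl fun k _ => this k, ← Finset.sum_div]
      have : ∑ k, P k i.1 * P k i.1 = P i.1 i.1 := by
        rw [← h2 i.1 i.1]
        exact Finset.sum_congr rfl fun k _ => by rw [hsym i.1 k]
      rw [this, div_self (ne_of_gt hii)]
      simp
    · simp only [hij, if_false]
      refine Finset.sum_eq_zero fun k _ => ?_
      rcases eq_or_lt_of_le (hnn k i.1) with h | h
      · rw [← h]; simp
      rcases eq_or_lt_of_le (hnn k j.1) with h' | h'
      · rw [← h']; simp
      exact absurd (hrep_unique i.1 j.1 i.2 j.2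
        (htrans i.1 k j.1 (by rw [hsym]; exact h) h'))
        (fun hh => hij (Subtype.ext hh))
  · -- P = C Cᵀ
    ext k l
    simp only [Matrix.mul_apply, Matrix.transpose_apply, Matrix.of_apply]
    have hterm : ∀ i : {i : Fin n // R i},
        P k i.1 / Real.sqrt (P i.1 i.1) * (P l i.1 / Real.sqrt (P i.1 i.1))
        = P k i.1 * P l i.1 / P i.1 i.1 := by
      intro i
      rw [div_mul_div_comm, Real.mul_self_sqrt (le_of_lt i.2.1)]
    rw [Finset.sum_congr rfl fun i _ => hterm i]
    by_cases hkl : 0 < P k l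
    · obtain ⟨i₀, hRi₀, hki₀, hi₀l⟩ := hrep_exists k l hkl
      rw [Finset.sum_eq_single_of_mem (⟨i₀, hRi₀⟩ : {i : Fin n // R i})
        (Finset.mem_univ _) ?_]
      · have := hprop i₀ l hi₀l k
        have hii₀ : P i₀ i₀ ≠ 0 := ne_of_gt hRi₀.1
        rw [this, hsym l i₀]
        field_simp
      · intro i _ hne
        rcases eq_or_lt_of_le (hnn k i.1) with h | h
        · rw [← h]; simp
        exact absurd (Subtype.ext (hrep_unique i.1 i₀ i.2 hRi₀
          (htrans i.1 k i₀ (by rw [hsym]; exact h) hki₀))) hne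
    · have hkl0 : P k l = 0 := le_antisymm (not_lt.mp hkl) (hnn k l)
      rw [hkl0]
      refine (Finset.sum_eq_zero fun i _ => ?_).symm
      rcases eq_or_lt_of_le (hnn k i.1) with h | h
      · rw [← h]; simp
      rcases eq_or_lt_of_le (hnn l i.1) with h' | h'
      · rw [← h']; simp
      exact absurd (htrans k i.1 l h (by rw [hsym]; exact h')) (by rw [hkl0]; simp)
  · -- disjoint supports
    intro i j hij k
    rcases eq_or_lt_of_le (hnn k i.1) with h | h
    · left; show P k i.1 / Real.sqrt (P i.1 i.1) = 0; rw [← h]; simp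
    rcases eq_or_lt_of_le (hnn k j.1) with h' | h'
    · right; show P k j.1 / Real.sqrt (P j.1 j.1) = 0; rw [← h']; simp
    exact absurd (Subtype.ext (hrep_unique i.1 j.1 i.2 j.2
      (htrans i.1 k j.1 (by rw [hsym]; exact h) h'))) hij

/-- A symmetric, entrywise nonnegative, idempotent `n × n` real matrix `P`
of rank `r` can be written as `P = C Cᵀ` with `C ∈ ℝ₊^{n×r}` and `Cᵀ C = I`; the columns of
`C` form a nonnegative orthonormal basis of the range of `P` and have pairwise disjoint
supports. -/
theorem stmt8 {n : ℕ} (P : Matrix (Fin n) (Fin n) ℝ)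
    (hsymm : P.IsSymm) (hnn : ∀ i j, 0 ≤ P i j) (hidem : P * P = P) :
    ∃ C : Matrix (Fin n) (Fin P.rank) ℝ,
      (∀ i j, 0 ≤ C i j) ∧
      Cᵀ * C = 1 ∧
      P = C * Cᵀ ∧
      LinearMap.range P.mulVecLin = Submodule.span ℝ (Set.range fun j => Cᵀ j) ∧
      (∀ j l, j ≠ l → ∀ i, C i j = 0 ∨ C i l = 0) := by
  obtain ⟨κ, inst1, inst2, C, h1, h2, h3, h5⟩ := stmt8' P hsymm hnn hidem
  exact transport8 P C h1 h2 h3 h5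
end

section
/- Let S be a linear subspace of the n × n real symmetric matrices and P_S the orthogonal projection onto S with respect to the trace inner product. If P_S(𝒩ⁿ) ⊆ 𝒩ⁿ, then S has a basis consisting of entrywise nonnegative matrices with pairwise disjoint supports. -/
open Matrix Finset

theorem stmt9_core {n : ℕ} (S : Submodule ℝ (Matrix (Fin n) (Fin n) ℝ))
    (F : Fin n × Fin n → Matrix (Fin n) (Fin n) ℝ)
    (hmem : ∀ p, F p ∈ S)
    (hnn : ∀ p a b, 0 ≤ F p a b)
    (hsym : ∀ p q : Fin n × Fin n, F p q.1 q.2 = F q p.1 p.2)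
    (hrecon : ∀ X ∈ S, X = (2:ℝ)⁻¹ • ∑ q : Fin n × Fin n, X q.1 q.2 • F q) :
    ∃ (k : ℕ) (B : Fin k → Matrix (Fin n) (Fin n) ℝ),
      (∀ i, ∀ a b, 0 ≤ B i a b) ∧
      (∀ i j, i ≠ j → ∀ a b, B i a b = 0 ∨ B j a b = 0) ∧
      LinearIndependent ℝ B ∧
      Submodule.span ℝ (Set.range B) = S := by
  classical
  letI : LinearOrder (Fin n × Fin n) :=
    LinearOrder.lift' (Fintype.equivFin (Fin n × Fin n)) (Equiv.injective _)
  -- entrywise reconstruction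
  have hrecE : ∀ p r : Fin n × Fin n,
      F p r.1 r.2 = (2:ℝ)⁻¹ * ∑ q : Fin n × Fin n, F p q.1 q.2 * F q r.1 r.2 := by
    intro p r
    conv_lhs => rw [hrecon (F p) (hmem p)]
    simp [Matrix.smul_apply, Matrix.sum_apply, smul_eq_mul]
  have htrans : ∀ p q r : Fin n × Fin n,
      0 < F p q.1 q.2 → 0 < F q r.1 r.2 → 0 < F p r.1 r.2 := by
    intro p q r h1 h2
    rw [hrecE p r]
    have hle : F p q.1 q.2 * F q r.1 r.2 ≤ ∑ s : Fin n × Fin n, F p s.1 s.2 * F s r.1 r.2 :=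
      Finset.single_le_sum (f := fun s : Fin n × Fin n => F p s.1 s.2 * F s r.1 r.2)
        (fun s _ => mul_nonneg (hnn _ _ _) (hnn _ _ _)) (Finset.mem_univ q)
    have hpos : 0 < ∑ s : Fin n × Fin n, F p s.1 s.2 * F s r.1 r.2 :=
      lt_of_lt_of_le (mul_pos h1 h2) hle
    exact mul_pos (by norm_num) hpos
  have hsymlt : ∀ p q : Fin n × Fin n, 0 < F p q.1 q.2 → 0 < F q p.1 p.2 := by
    intro p q h; rw [hsym q p]; exact h
  have hdiag : ∀ p q : Fin n × Fin n, 0 < F p q.1 q.2 → 0 < F p p.1 p.2 :=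
    fun p q h => htrans p q p h (hsymlt p q h)
  -- classes
  set Cl : (Fin n × Fin n) → Finset (Fin n × Fin n) :=
    fun p => Finset.univ.filter fun s => 0 < F p s.1 s.2 with hCl
  have hClmem : ∀ p s, s ∈ Cl p ↔ 0 < F p s.1 s.2 := by
    intro p s; simp [hCl]
  have hClEq : ∀ p q, 0 < F p q.1 q.2 → Cl p = Cl q := by
    intro p q h; ext s
    simp only [hClmem]
    exact ⟨fun hs => htrans q p s (hsymlt p q h) hs, fun hs => htrans p q s h hs⟩
  set rep : (Fin n × Fin n) → (Fin n × Fin n) :=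
    fun p => if h : (Cl p).Nonempty then (Cl p).min' h else p with hrep
  have hrep_eq : ∀ p q, 0 < F p q.1 q.2 → rep p = rep q := by
    intro p q h
    have h1 : (Cl p).Nonempty := ⟨q, (hClmem p q).2 h⟩
    have h2 : (Cl q).Nonempty := ⟨p, (hClmem q p).2 (hsymlt p q h)⟩
    simp only [hrep, dif_pos h1, dif_pos h2, hClEq p q h]
  have hrep_cl : ∀ p, 0 < F p p.1 p.2 → 0 < F p (rep p).1 (rep p).2 := by
    intro p hp
    have h1 : (Cl p).Nonempty := ⟨p, (hClmem p p).2 hp⟩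
    have hrp : rep p = (Cl p).min' h1 := by simp only [hrep, dif_pos h1]
    rw [hrp]
    exact (hClmem p _).1 (Finset.min'_mem _ _)
  -- proportionality
  have hprop : ∀ p r : Fin n × Fin n, 0 < F p r.1 r.2 → ∃ c : ℝ, F r = c • F p := by
    intro p r hpr
    have hpp : 0 < F p p.1 p.2 := hdiag p r hpr
    have hne : (Cl p).Nonempty := ⟨p, (hClmem p p).2 hpp⟩
    set c := (Cl p).inf' hne (fun s => F r s.1 s.2 / F p s.1 s.2) with hc
    obtain ⟨s0, hs0mem, hs0⟩ := Finset.exists_mem_eq_inf' hne (fun s => F r s.1 s.2 / F p s.1 s.2)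
    have hposF : ∀ s ∈ Cl p, 0 < F p s.1 s.2 := fun s hs => (hClmem p s).1 hs
    have hposR : ∀ s ∈ Cl p, 0 < F r s.1 s.2 :=
      fun s hs => htrans r p s (hsymlt p r hpr) (hposF s hs)
    have hcle : ∀ s ∈ Cl p, c * F p s.1 s.2 ≤ F r s.1 s.2 := by
      intro s hs
      have hle : c ≤ F r s.1 s.2 / F p s.1 s.2 := Finset.inf'_le _ hs
      calc c * F p s.1 s.2 ≤ (F r s.1 s.2 / F p s.1 s.2) * F p s.1 s.2 :=
            mul_le_mul_of_nonneg_right hle (le_of_lt (hposF s hs))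
        _ = F r s.1 s.2 := div_mul_cancel₀ _ (ne_of_gt (hposF s hs))
    set Z : Matrix (Fin n) (Fin n) ℝ := F r - c • F p with hZ
    have hZS : Z ∈ S := Submodule.sub_mem S (hmem r) (Submodule.smul_mem S c (hmem p))
    have hoff : ∀ q : Fin n × Fin n, q ∉ Cl p → Z q.1 q.2 = 0 := by
      intro q hq
      have hnotpos : ¬ 0 < F p q.1 q.2 := by simpa [hClmem] using hq
      have hpq : F p q.1 q.2 = 0 := le_antisymm (not_lt.1 hnotpos) (hnn p q.1 q.2)
      have hrq : F r q.1 q.2 = 0 := by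
        by_contra h
        have h' : 0 < F r q.1 q.2 := lt_of_le_of_ne (hnn r q.1 q.2) (Ne.symm h)
        exact hnotpos (htrans p r q hpr h')
      simp [hZ, Matrix.sub_apply, Matrix.smul_apply, hpq, hrq]
    have hZnn : ∀ q : Fin n × Fin n, 0 ≤ Z q.1 q.2 := by
      intro q
      by_cases hq : q ∈ Cl p
      · have := hcle q hq
        simp only [hZ, Matrix.sub_apply, Matrix.smul_apply, smul_eq_mul]
        linarith
      · rw [hoff q hq]
    have hZs0 : Z s0.1 s0.2 = 0 := by
      have hne0 : F p s0.1 s0.2 ≠ 0 := ne_of_gt (hposF s0 hs0mem)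
      simp only [hZ, Matrix.sub_apply, Matrix.smul_apply, smul_eq_mul, hc, hs0]
      rw [div_mul_cancel₀ _ hne0, sub_self]
    have hsum0 : ∑ q : Fin n × Fin n, Z q.1 q.2 * F q s0.1 s0.2 = 0 := by
      have hv := congrArg (fun M : Matrix (Fin n) (Fin n) ℝ => M s0.1 s0.2) (hrecon Z hZS)
      simp only [Matrix.smul_apply, Matrix.sum_apply, smul_eq_mul] at hv
      rw [hZs0] at hv
      linarith
    have hterm : ∀ q : Fin n × Fin n, Z q.1 q.2 * F q s0.1 s0.2 = 0 := by
      intro q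
      exact (Finset.sum_eq_zero_iff_of_nonneg
        (fun q _ => mul_nonneg (hZnn q) (hnn q _ _))).1 hsum0 q (Finset.mem_univ q)
    have hZzero : Z = 0 := by
      ext a b
      show Z (a, b).1 (a, b).2 = 0
      by_cases hq : (a, b) ∈ Cl p
      · have hqs0 : 0 < F (a, b) s0.1 s0.2 :=
          htrans (a, b) p s0 (hsymlt p (a, b) ((hClmem p (a, b)).1 hq)) ((hClmem p s0).1 hs0mem)
        rcases mul_eq_zero.1 (hterm (a, b)) with h | h
        · exact h
        · exact absurd h (ne_of_gt hqs0)
      · exact hoff (a, b) hq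
    refine ⟨c, ?_⟩
    have := sub_eq_zero.1 hZzero
    rw [← this]
  -- representatives
  set T : Finset (Fin n × Fin n) :=
    (Finset.univ.filter fun p : Fin n × Fin n => 0 < F p p.1 p.2).image rep with hT
  have hT_fix : ∀ p ∈ T, rep p = p := by
    intro p hp
    obtain ⟨p', hp', rfl⟩ := Finset.mem_image.1 hp
    have hp'd : 0 < F p' p'.1 p'.2 := by simpa using hp'
    exact (hrep_eq p' (rep p') (hrep_cl p' hp'd)).symm
  have hT_diag : ∀ p ∈ T, 0 < F p p.1 p.2 := by
    intro p hp
    obtain ⟨p', hp', rfl⟩ := Finset.mem_image.1 hp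
    have hp'd : 0 < F p' p'.1 p'.2 := by simpa using hp'
    exact hdiag (rep p') p' (hsymlt p' (rep p') (hrep_cl p' hp'd))
  have hT_disj : ∀ p ∈ T, ∀ q ∈ T, 0 < F p q.1 q.2 → p = q := by
    intro p hp q hq h
    rw [← hT_fix p hp, ← hT_fix q hq]
    exact hrep_eq p q h
  set e := T.equivFin with he
  refine ⟨T.card, fun i => F ((↑(e.symm i) : Fin n × Fin n)), fun i a b => hnn _ a b, ?_, ?_, ?_⟩
  · -- disjoint supports
    intro i j hij a b
    by_contra hcon
    push_neg at hcon
    obtain ⟨h1, h2⟩ := hcon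
    set p₁ : Fin n × Fin n := (↑(e.symm i) : Fin n × Fin n) with hp₁
    set p₂ : Fin n × Fin n := (↑(e.symm j) : Fin n × Fin n) with hp₂
    have hpos1 : 0 < F p₁ (a, b).1 (a, b).2 := lt_of_le_of_ne (hnn _ _ _) (Ne.symm h1)
    have hpos2 : 0 < F p₂ (a, b).1 (a, b).2 := lt_of_le_of_ne (hnn _ _ _) (Ne.symm h2)
    have h12 : 0 < F p₁ p₂.1 p₂.2 := htrans p₁ (a, b) p₂ hpos1 (hsymlt p₂ (a, b) hpos2)
    have := hT_disj p₁ (e.symm i).2 p₂ (e.symm j).2 h12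
    exact hij (by
      have : e.symm i = e.symm j := Subtype.ext this
      simpa using congrArg e this)
  · -- linear independence
    rw [Fintype.linearIndependent_iff]
    intro g hg i
    set p : Fin n × Fin n := (↑(e.symm i) : Fin n × Fin n) with hp
    have hv := congrArg (fun M : Matrix (Fin n) (Fin n) ℝ => M p.1 p.2) hg
    simp only [Matrix.sum_apply, Matrix.smul_apply, smul_eq_mul, Matrix.zero_apply] at hv
    rw [Finset.sum_eq_single i] at hv
    · exact (mul_eq_zero.1 hv).resolve_right (ne_of_gt (hT_diag p (e.symm i).2))
    · intro j _ hji
      have hz : F ((↑(e.symm j) : Fin n × Fin n)) p.1 p.2 = 0 := by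
        by_contra h
        have hpos : 0 < F ((↑(e.symm j) : Fin n × Fin n)) p.1 p.2 := lt_of_le_of_ne (hnn _ _ _) (Ne.symm h)
        have := hT_disj _ (e.symm j).2 _ (e.symm i).2 hpos
        exact hji (by
          have : e.symm j = e.symm i := Subtype.ext this
          simpa using congrArg e this)
      rw [hz, mul_zero]
    · intro h; exact absurd (Finset.mem_univ i) h
  · -- span
    apply le_antisymm
    · rw [Submodule.span_le]
      rintro _ ⟨i, rfl⟩
      exact hmem _
    · intro X hX
      rw [hrecon X hX]
      refine Submodule.smul_mem _ _ (Submodule.sum_mem _ fun q _ => Submodule.smul_mem _ _ ?_)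
      by_cases hq : F q = 0
      · rw [hq]; exact Submodule.zero_mem _
      · have hex : ∃ a b, F q a b ≠ 0 := by
          by_contra h
          push_neg at h
          exact hq (by ext a b; simpa using h a b)
        obtain ⟨a, b, hab⟩ := hex
        have hqq : 0 < F q q.1 q.2 :=
          hdiag q (a, b) (lt_of_le_of_ne (hnn _ _ _) (Ne.symm hab))
        have hpT : rep q ∈ T :=
          Finset.mem_image.2 ⟨q, Finset.mem_filter.2 ⟨Finset.mem_univ q, hqq⟩, rfl⟩
        have h2 : 0 < F (rep q) q.1 q.2 := hsymlt q (rep q) (hrep_cl q hqq)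
        obtain ⟨c, hcF⟩ := hprop (rep q) q h2
        rw [hcF]
        refine Submodule.smul_mem _ _ (Submodule.subset_span ⟨e ⟨rep q, hpT⟩, ?_⟩)
        simp

/-- If the orthogonal projection `P` onto a subspace `S` of the `n × n`
real symmetric matrices (w.r.t. the trace inner product) maps the cone `𝒩ⁿ` of symmetric
entrywise nonnegative matrices into itself, then `S` has a basis of entrywise nonnegative
matrices with pairwise disjoint supports. -/
theorem stmt9 {n : ℕ} (S : Submodule ℝ (Matrix (Fin n) (Fin n) ℝ))
    (hS : ∀ X ∈ S, X.IsSymm)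
    (P : Matrix (Fin n) (Fin n) ℝ →ₗ[ℝ] Matrix (Fin n) (Fin n) ℝ)
    (hrange : ∀ X : Matrix (Fin n) (Fin n) ℝ, X.IsSymm → P X ∈ S)
    (hfix : ∀ X ∈ S, P X = X)
    (hselfadj : ∀ X Y : Matrix (Fin n) (Fin n) ℝ, X.IsSymm → Y.IsSymm →
      (P X * Y).trace = (X * P Y).trace)
    (hN : ∀ X : Matrix (Fin n) (Fin n) ℝ, X.IsSymm → (∀ a b, 0 ≤ X a b) →
      ∀ a b, 0 ≤ P X a b) :
    ∃ (k : ℕ) (B : Fin k → Matrix (Fin n) (Fin n) ℝ),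
      (∀ i, ∀ a b, 0 ≤ B i a b) ∧
      (∀ i j, i ≠ j → ∀ a b, B i a b = 0 ∨ B j a b = 0) ∧
      LinearIndependent ℝ B ∧
      Submodule.span ℝ (Set.range B) = S := by
  classical
  set E : Fin n × Fin n → Matrix (Fin n) (Fin n) ℝ :=
    fun p => Matrix.single p.1 p.2 1 + Matrix.single p.2 p.1 1 with hE
  have hEsymm : ∀ p, (E p).IsSymm := by
    intro p
    show (E p)ᵀ = E p
    ext a b
    simp [hE, Matrix.single, Matrix.transpose_apply, Matrix.add_apply, and_comm]
    ring
  have hEnn : ∀ p a b, 0 ≤ E p a b := by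
    intro p a b
    simp only [hE, Matrix.add_apply, Matrix.single, Matrix.of_apply]
    split_ifs <;> norm_num
  have htr : ∀ (M : Matrix (Fin n) (Fin n) ℝ) (c d : Fin n),
      (M * Matrix.single c d (1:ℝ)).trace = M d c := by
    intro M c d
    simp only [Matrix.trace, Matrix.diag, Matrix.mul_apply, Matrix.single,
      Matrix.of_apply, mul_ite, mul_one, mul_zero]
    have hinner : ∀ x : Fin n,
        (∑ y : Fin n, if c = y ∧ d = x then M x y else 0) = if d = x then M x c else 0 := by
      intro x
      by_cases h : d = x <;> simp [h]
    rw [Finset.sum_congr rfl fun x _ => hinner x]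
    simp
  have htr2 : ∀ (M : Matrix (Fin n) (Fin n) ℝ), M.IsSymm → ∀ q : Fin n × Fin n,
      (M * E q).trace = 2 * M q.1 q.2 := by
    intro M hM q
    rw [hE]
    simp only [Matrix.mul_add, Matrix.trace_add]
    rw [htr, htr, hM.apply]
    ring
  set F : Fin n × Fin n → Matrix (Fin n) (Fin n) ℝ := fun p => P (E p) with hF
  have hFS : ∀ p, F p ∈ S := fun p => hrange _ (hEsymm p)
  have hFsymm : ∀ p, (F p).IsSymm := fun p => hS _ (hFS p)
  have hFnn : ∀ p a b, 0 ≤ F p a b := fun p => hN _ (hEsymm p) (hEnn p)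
  have hsym : ∀ p q : Fin n × Fin n, F p q.1 q.2 = F q p.1 p.2 := by
    intro p q
    have h := hselfadj (E p) (E q) (hEsymm p) (hEsymm q)
    rw [htr2 (P (E p)) (hFsymm p) q] at h
    rw [Matrix.trace_mul_comm, htr2 (P (E q)) (hFsymm q) p] at h
    linarith
  have hrecon : ∀ X ∈ S, X = (2:ℝ)⁻¹ • ∑ q : Fin n × Fin n, X q.1 q.2 • F q := by
    intro X hX
    have hXs : X.IsSymm := hS X hX
    have h1 : ∑ q : Fin n × Fin n, X q.1 q.2 • Matrix.single q.1 q.2 (1:ℝ) = X := by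
      rw [Fintype.sum_prod_type]
      conv_rhs => rw [matrix_eq_sum_single X]
      refine Finset.sum_congr rfl fun a _ => Finset.sum_congr rfl fun b _ => ?_
      rw [smul_single, smul_eq_mul, mul_one]
    have h2 : ∑ q : Fin n × Fin n, X q.1 q.2 • Matrix.single q.2 q.1 (1:ℝ) = X := by
      rw [← Fintype.sum_equiv (Equiv.prodComm (Fin n) (Fin n))
        (fun q : Fin n × Fin n => X q.2 q.1 • Matrix.single q.1 q.2 (1:ℝ))
        (fun q : Fin n × Fin n => X q.1 q.2 • Matrix.single q.2 q.1 (1:ℝ)) (fun q => rfl)]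
      have : ∀ q : Fin n × Fin n, X q.2 q.1 = X q.1 q.2 := fun q => (hXs.apply q.2 q.1).symm
      calc ∑ q : Fin n × Fin n, X q.2 q.1 • Matrix.single q.1 q.2 (1:ℝ)
          = ∑ q : Fin n × Fin n, X q.1 q.2 • Matrix.single q.1 q.2 (1:ℝ) := by
            refine Finset.sum_congr rfl fun q _ => by rw [this q]
        _ = X := h1
    have hdecomp : ∑ q : Fin n × Fin n, X q.1 q.2 • E q = (2:ℝ) • X := by
      simp only [hE, smul_add, Finset.sum_add_distrib, h1, h2, two_smul]
    have hP := congrArg P hdecomp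
    rw [LinearMap.map_smul, hfix X hX, map_sum] at hP
    simp only [LinearMap.map_smul] at hP
    have hP' : ∑ q : Fin n × Fin n, X q.1 q.2 • F q = (2:ℝ) • X := hP
    rw [hP', smul_smul]
    norm_num
  exact stmt9_core S F hFS hFnn hsym hrecon
end

section
/- Let S be a linear subspace of the n × n real symmetric matrices and P_S the orthogonal projection onto S with respect to the trace inner product. If P_S(𝒩ⁿ) ⊆ 𝒩ⁿ and S contains the all-ones matrix J, then S is a partition subspace, i.e., S has a basis of symmetric 0/1 matrices with pairwise disjoint supports summing to J. -/
open Matrix Finset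
open scoped Classical

/-- Symmetric 0/1 "position" matrix with support `{p, swap p}`. -/
def Epos (n : ℕ) (p : Fin n × Fin n) : Matrix (Fin n) (Fin n) ℝ :=
  Matrix.of fun i j => if (i, j) = p ∨ (j, i) = p then 1 else 0

/-- Weight of a position: 1 on the diagonal, 2 off the diagonal. -/
def wpos {n : ℕ} (p : Fin n × Fin n) : ℝ := if p.1 = p.2 then 1 else 2

lemma wpos_pos {n : ℕ} (p : Fin n × Fin n) : 0 < wpos p := by
  unfold wpos; split <;> norm_num

lemma Epos_symm {n : ℕ} (p : Fin n × Fin n) : (Epos n p).IsSymm := by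
  ext i j
  simp only [Epos, Matrix.transpose_apply, Matrix.of_apply]
  exact if_congr (or_comm) rfl rfl

lemma Epos_nonneg {n : ℕ} (p : Fin n × Fin n) (a b : Fin n) : 0 ≤ Epos n p a b := by
  simp only [Epos, Matrix.of_apply]; split <;> norm_num

lemma sum_ite_or {α : Type*} [Fintype α] [DecidableEq α] (a b : α) (f : α → ℝ) (hab : a ≠ b) :
    (∑ x, if x = a ∨ x = b then f x else 0) = f a + f b := by
  have hsplit : ∀ x, (if x = a ∨ x = b then f x else 0)
      = (if x = a then f x else 0) + (if x = b then f x else 0) := by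
    intro x
    by_cases h1 : x = a
    · subst h1; simp [hab]
    · by_cases h2 : x = b
      · subst h2; simp [h1]
      · simp [h1, h2]
  rw [Finset.sum_congr rfl (fun x _ => hsplit x), Finset.sum_add_distrib]
  simp

/-- Decomposition of a symmetric matrix in the `Epos` system. -/
lemma decomp {n : ℕ} (X : Matrix (Fin n) (Fin n) ℝ) (hX : X.IsSymm) :
    X = ∑ p : Fin n × Fin n, (X p.1 p.2 / wpos p) • Epos n p := by
  ext i j
  rw [Matrix.sum_apply]
  have hterm : ∀ p : Fin n × Fin n, ((X p.1 p.2 / wpos p) • Epos n p) i j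
      = if p = (i, j) ∨ p = (j, i) then X p.1 p.2 / wpos p else 0 := by
    intro p
    simp only [Matrix.smul_apply, Epos, Matrix.of_apply, smul_eq_mul, mul_ite, mul_one, mul_zero]
    exact if_congr (or_congr eq_comm eq_comm) rfl rfl
  rw [Finset.sum_congr rfl (fun p _ => hterm p)]
  by_cases hij : i = j
  · subst hij
    simp [Finset.sum_ite_eq', wpos]
  · have hne : ((i, j) : Fin n × Fin n) ≠ (j, i) := by
      simp [Prod.ext_iff, hij]
    rw [sum_ite_or _ _ _ hne]
    have hsym : X j i = X i j := hX.apply i j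
    simp only [hsym, wpos, hij, Ne.symm hij, if_false]
    ring

lemma trace_mul_Epos {n : ℕ} (Y : Matrix (Fin n) (Fin n) ℝ) (hY : Y.IsSymm)
    (p : Fin n × Fin n) : (Y * Epos n p).trace = wpos p * Y p.1 p.2 := by
  obtain ⟨c, d⟩ := p
  have h1 : (Y * Epos n (c, d)).trace
      = ∑ x : Fin n × Fin n, (if x = (d, c) ∨ x = (c, d) then Y x.1 x.2 else 0) := by
    rw [Matrix.trace]
    simp only [Matrix.diag_apply, Matrix.mul_apply, Epos, Matrix.of_apply]
    rw [Fintype.sum_prod_type]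
    refine Finset.sum_congr rfl fun x _ => Finset.sum_congr rfl fun y _ => ?_
    rw [mul_ite, mul_one, mul_zero]
    refine if_congr ?_ rfl rfl
    simp only [Prod.ext_iff]
    tauto
  rw [h1]
  by_cases hcd : c = d
  · subst hcd
    simp [Finset.sum_ite_eq', wpos]
  · have hne : ((d, c) : Fin n × Fin n) ≠ (c, d) := by
      simp [Prod.ext_iff]; intro h; exact fun _ => hcd h.symm
    rw [sum_ite_or _ _ _ hne]
    have hsym : Y d c = Y c d := hY.apply c d
    simp only [hsym, wpos, hcd, if_false]
    ring

/-- The 0/1 indicator matrix of the "class" of position `p` under the projection `P`. -/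
noncomputable def rowMat {n : ℕ} (P : Matrix (Fin n) (Fin n) ℝ →ₗ[ℝ] Matrix (Fin n) (Fin n) ℝ)
    (p : Fin n × Fin n) : Matrix (Fin n) (Fin n) ℝ :=
  Matrix.of fun a b => if 0 < P (Epos n p) a b then 1 else 0

lemma rowMat_apply {n : ℕ} (P : Matrix (Fin n) (Fin n) ℝ →ₗ[ℝ] Matrix (Fin n) (Fin n) ℝ)
    (p : Fin n × Fin n) (a b : Fin n) :
    rowMat P p a b = if 0 < P (Epos n p) a b then 1 else 0 := rfl

/-- If the orthogonal projection `P` onto a subspace `S` of the `n × n`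
real symmetric matrices (w.r.t. the trace inner product) maps `𝒩ⁿ` into itself and `S`
contains the all-ones matrix `J`, then `S` is a partition subspace: it has a basis of
symmetric 0/1 matrices with pairwise disjoint supports summing to `J`. -/
theorem stmt10 {n : ℕ} (S : Submodule ℝ (Matrix (Fin n) (Fin n) ℝ))
    (hS : ∀ X ∈ S, X.IsSymm)
    (P : Matrix (Fin n) (Fin n) ℝ →ₗ[ℝ] Matrix (Fin n) (Fin n) ℝ)
    (hrange : ∀ X : Matrix (Fin n) (Fin n) ℝ, X.IsSymm → P X ∈ S)
    (hfix : ∀ X ∈ S, P X = X)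
    (hselfadj : ∀ X Y : Matrix (Fin n) (Fin n) ℝ, X.IsSymm → Y.IsSymm →
      (P X * Y).trace = (X * P Y).trace)
    (hN : ∀ X : Matrix (Fin n) (Fin n) ℝ, X.IsSymm → (∀ a b, 0 ≤ X a b) →
      ∀ a b, 0 ≤ P X a b)
    (hJ : (Matrix.of fun _ _ => (1 : ℝ)) ∈ S) :
    ∃ (k : ℕ) (B : Fin k → Matrix (Fin n) (Fin n) ℝ),
      (∀ i, (B i).IsSymm) ∧
      (∀ i a b, B i a b = 0 ∨ B i a b = 1) ∧
      (∀ i j, i ≠ j → ∀ a b, B i a b = 0 ∨ B j a b = 0) ∧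
      (∑ i, B i = Matrix.of fun _ _ => (1 : ℝ)) ∧
      LinearIndependent ℝ B ∧
      Submodule.span ℝ (Set.range B) = S := by
  classical
  -- basic facts about q p r := P (Epos n p) r.1 r.2
  have hq0 : ∀ p r : Fin n × Fin n, 0 ≤ P (Epos n p) r.1 r.2 :=
    fun p r => hN _ (Epos_symm p) (fun a b => Epos_nonneg p a b) r.1 r.2
  have hPE : ∀ p : Fin n × Fin n, P (Epos n p) ∈ S := fun p => hrange _ (Epos_symm p)
  have hPEs : ∀ p : Fin n × Fin n, (P (Epos n p)).IsSymm := fun p => hS _ (hPE p)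
  have hsymm : ∀ p r : Fin n × Fin n,
      wpos r * P (Epos n p) r.1 r.2 = wpos p * P (Epos n r) p.1 p.2 := by
    intro p r
    have h := hselfadj (Epos n p) (Epos n r) (Epos_symm p) (Epos_symm r)
    rw [trace_mul_Epos _ (hPEs p) r, Matrix.trace_mul_comm,
      trace_mul_Epos _ (hPEs r) p] at h
    exact h
  have hflip : ∀ p r : Fin n × Fin n,
      P (Epos n r) p.1 p.2 = wpos r * P (Epos n p) r.1 r.2 / wpos p := by
    intro p r
    have hp := (wpos_pos p).ne'
    field_simp
    linarith [hsymm p r]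
  have happly : ∀ X : Matrix (Fin n) (Fin n) ℝ, X.IsSymm → ∀ s : Fin n × Fin n,
      P X s.1 s.2 = ∑ r : Fin n × Fin n, (X r.1 r.2 / wpos r) * P (Epos n r) s.1 s.2 := by
    intro X hX s
    conv_lhs => rw [decomp X hX]
    simp only [map_sum, _root_.map_smul, Matrix.sum_apply, Matrix.smul_apply, smul_eq_mul]
  have hrow : ∀ p : Fin n × Fin n, (∑ r : Fin n × Fin n, P (Epos n p) r.1 r.2) = wpos p := by
    intro p
    have hJs : ((Matrix.of fun _ _ => (1 : ℝ)) : Matrix (Fin n) (Fin n) ℝ).IsSymm := by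
      ext i j; rfl
    have h2 := happly _ hJs p
    rw [hfix _ hJ] at h2
    simp only [Matrix.of_apply] at h2
    have h3 : ∀ r : Fin n × Fin n, (1 / wpos r) * P (Epos n r) p.1 p.2
        = P (Epos n p) r.1 r.2 / wpos p := by
      intro r
      have hr := (wpos_pos r).ne'
      have hp := (wpos_pos p).ne'
      rw [hflip p r]
      field_simp
    rw [Finset.sum_congr rfl (fun r _ => h3 r), ← Finset.sum_div] at h2
    have hp := (wpos_pos p).ne'
    field_simp at h2
    linarith
  have hidem : ∀ p s : Fin n × Fin n, P (Epos n p) s.1 s.2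
      = ∑ r : Fin n × Fin n, (P (Epos n p) r.1 r.2 / wpos r) * P (Epos n r) s.1 s.2 := by
    intro p s
    have h := happly (P (Epos n p)) (hPEs p) s
    rw [hfix _ (hPE p)] at h
    exact h
  have hrefl : ∀ p : Fin n × Fin n, 0 < P (Epos n p) p.1 p.2 := by
    intro p
    rcases (hq0 p p).eq_or_lt with h | h
    · exfalso
      have hid := hidem p p
      have hterm : ∀ r : Fin n × Fin n, (P (Epos n p) r.1 r.2 / wpos r) * P (Epos n r) p.1 p.2
          = (P (Epos n p) r.1 r.2) ^ 2 / wpos p := by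
        intro r
        have hr := (wpos_pos r).ne'
        have hp := (wpos_pos p).ne'
        rw [hflip p r]
        field_simp
      rw [Finset.sum_congr rfl (fun r _ => hterm r), ← Finset.sum_div, ← h] at hid
      have hp := (wpos_pos p).ne'
      have hsumz : (∑ r : Fin n × Fin n, (P (Epos n p) r.1 r.2) ^ 2) = 0 := by
        field_simp at hid
        linarith
      have hall : ∀ r : Fin n × Fin n, P (Epos n p) r.1 r.2 = 0 := by
        intro r
        have := (Finset.sum_eq_zero_iff_of_nonneg
          (fun r _ => sq_nonneg (P (Epos n p) r.1 r.2))).mp hsumz r (Finset.mem_univ r)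
        exact pow_eq_zero_iff two_ne_zero |>.mp this
      have hr := hrow p
      rw [Finset.sum_eq_zero (fun r _ => hall r)] at hr
      exact (wpos_pos p).ne hr
    · exact h
  have hposflip : ∀ p r : Fin n × Fin n,
      0 < P (Epos n p) r.1 r.2 → 0 < P (Epos n r) p.1 p.2 := by
    intro p r h1
    rw [hflip p r]
    exact div_pos (mul_pos (wpos_pos r) h1) (wpos_pos p)
  have htrans : ∀ p r s : Fin n × Fin n, 0 < P (Epos n p) r.1 r.2 →
      0 < P (Epos n r) s.1 s.2 → 0 < P (Epos n p) s.1 s.2 := by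
    intro p r s h1 h2
    rw [hidem p s]
    calc (0 : ℝ) < (P (Epos n p) r.1 r.2 / wpos r) * P (Epos n r) s.1 s.2 :=
          mul_pos (div_pos h1 (wpos_pos r)) h2
      _ ≤ _ := Finset.single_le_sum
          (fun t _ => mul_nonneg (div_nonneg (hq0 p t) (wpos_pos t).le) (hq0 t s))
          (Finset.mem_univ r)
  -- the class indicator matrices
  have hMsymm : ∀ p : Fin n × Fin n, (rowMat P p).IsSymm := by
    intro p
    ext a b
    simp only [Matrix.transpose_apply, rowMat_apply]
    refine if_congr ?_ rfl rfl
    rw [(hPEs p).apply a b]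
  have hMeq : ∀ p r : Fin n × Fin n, 0 < P (Epos n p) r.1 r.2 → rowMat P p = rowMat P r := by
    intro p r h
    ext a b
    simp only [rowMat_apply]
    refine if_congr ?_ rfl rfl
    constructor
    · intro h1
      exact htrans r p (a, b) (hposflip p r h) h1
    · intro h1
      exact htrans p r (a, b) h h1
  have hMeq_iff : ∀ p r : Fin n × Fin n,
      rowMat P p = rowMat P r ↔ 0 < P (Epos n p) r.1 r.2 := by
    intro p r
    refine ⟨fun h => ?_, hMeq p r⟩
    have h2 : rowMat P p r.1 r.2 = rowMat P r r.1 r.2 := by rw [h]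
    rw [rowMat_apply, rowMat_apply, if_pos (hrefl r)] at h2
    by_contra hc
    rw [if_neg hc] at h2
    norm_num at h2
  have hMfix : ∀ p : Fin n × Fin n, P (rowMat P p) = rowMat P p := by
    intro p
    ext a b
    have h := happly (rowMat P p) (hMsymm p) (a, b)
    dsimp only at h
    rw [h]
    by_cases hs : 0 < P (Epos n p) a b
    · have hterm : ∀ r : Fin n × Fin n, rowMat P p r.1 r.2 / wpos r * P (Epos n r) a b
          = P (Epos n (a, b)) r.1 r.2 / wpos (a, b) := by
        intro r
        rw [rowMat_apply]
        by_cases hr : 0 < P (Epos n p) r.1 r.2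
        · rw [if_pos hr]
          have hfl := hflip (a, b) r
          dsimp only at hfl
          rw [hfl]
          have hwr := (wpos_pos r).ne'
          field_simp
        · rw [if_neg hr]
          have hz : P (Epos n (a, b)) r.1 r.2 = 0 := by
            by_contra hcc
            exact hr (htrans p (a, b) r hs ((hq0 (a, b) r).lt_of_ne (Ne.symm hcc)))
          rw [hz]
          simp
      rw [Finset.sum_congr rfl (fun r _ => hterm r), ← Finset.sum_div, hrow (a, b),
        rowMat_apply, if_pos hs, div_self (wpos_pos (a, b)).ne']
    · rw [rowMat_apply, if_neg hs]
      refine Finset.sum_eq_zero fun r _ => ?_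
      rw [rowMat_apply]
      by_cases hr : 0 < P (Epos n p) r.1 r.2
      · have hz : P (Epos n r) a b = 0 := by
          by_contra hcc
          exact hs (htrans p r (a, b) hr ((hq0 r (a, b)).lt_of_ne (Ne.symm hcc)))
        rw [hz, mul_zero]
      · rw [if_neg hr]
        simp
  have hMinS : ∀ p : Fin n × Fin n, rowMat P p ∈ S :=
    fun p => hMfix p ▸ hrange _ (hMsymm p)
  -- elements of S are constant on classes
  have hconst : ∀ X ∈ S, ∀ p r : Fin n × Fin n,
      0 < P (Epos n p) r.1 r.2 → X p.1 p.2 = X r.1 r.2 := by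
    intro X hXS p r hpr
    have hXs := hS X hXS
    obtain ⟨s₀, hs₀C, hmax⟩ := Finset.exists_max_image
      (Finset.univ.filter (fun t : Fin n × Fin n => 0 < P (Epos n p) t.1 t.2))
      (fun t => X t.1 t.2) ⟨p, by simp [hrefl p]⟩
    have hs0p : 0 < P (Epos n p) s₀.1 s₀.2 := (Finset.mem_filter.mp hs₀C).2
    have key : ∀ t : Fin n × Fin n, 0 < P (Epos n p) t.1 t.2 → X t.1 t.2 = X s₀.1 s₀.2 := by
      intro t htp
      have htC : t ∈ Finset.univ.filter (fun t : Fin n × Fin n => 0 < P (Epos n p) t.1 t.2) := by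
        simp [htp]
      refine le_antisymm (hmax t htC) ?_
      by_contra hlt
      push_neg at hlt
      have heq : X s₀.1 s₀.2
          = ∑ u : Fin n × Fin n, X u.1 u.2 * (P (Epos n s₀) u.1 u.2 / wpos s₀) := by
        have h := happly X hXs s₀
        rw [hfix X hXS] at h
        rw [h]
        refine Finset.sum_congr rfl fun u _ => ?_
        rw [hflip s₀ u]
        have hwu := (wpos_pos u).ne'
        have hws := (wpos_pos s₀).ne'
        field_simp
      have hstrict : X s₀.1 s₀.2
          < ∑ u : Fin n × Fin n, X s₀.1 s₀.2 * (P (Epos n s₀) u.1 u.2 / wpos s₀) := by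
        conv_lhs => rw [heq]
        refine Finset.sum_lt_sum (fun u _ => ?_) ⟨t, Finset.mem_univ t, ?_⟩
        · by_cases hu : 0 < P (Epos n p) u.1 u.2
          · exact mul_le_mul_of_nonneg_right (hmax u (by simp [hu]))
              (div_nonneg (hq0 s₀ u) (wpos_pos s₀).le)
          · have hz : P (Epos n s₀) u.1 u.2 = 0 := by
              by_contra hcc
              exact hu (htrans p s₀ u hs0p ((hq0 s₀ u).lt_of_ne (Ne.symm hcc)))
            rw [hz]
            simp
        · have hst : 0 < P (Epos n s₀) t.1 t.2 := htrans s₀ p t (hposflip p s₀ hs0p) htp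
          exact mul_lt_mul_of_pos_right hlt (div_pos hst (wpos_pos s₀))
      rw [← Finset.mul_sum, ← Finset.sum_div, hrow s₀, div_self (wpos_pos s₀).ne',
        mul_one] at hstrict
      exact lt_irrefl _ hstrict
    rw [key p (hrefl p), key r hpr]
  -- assemble the partition basis from the distinct class indicator matrices
  set 𝓑 : Finset (Matrix (Fin n) (Fin n) ℝ) := Finset.image (rowMat P) Finset.univ with h𝓑
  have hmem𝓑 : ∀ p : Fin n × Fin n, rowMat P p ∈ 𝓑 := by
    intro p
    rw [h𝓑]
    exact Finset.mem_image_of_mem _ (Finset.mem_univ p)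
  have hrep : ∀ m ∈ 𝓑, ∃ p : Fin n × Fin n, rowMat P p = m := by
    intro m hm
    rw [h𝓑] at hm
    simpa using Finset.mem_image.mp hm
  let B : Fin 𝓑.card → Matrix (Fin n) (Fin n) ℝ := fun i => ((𝓑.equivFin.symm i).1)
  have hBmem : ∀ i, B i ∈ 𝓑 := fun i => (𝓑.equivFin.symm i).2
  have hBrep : ∀ i, ∃ p : Fin n × Fin n, rowMat P p = B i := fun i => hrep _ (hBmem i)
  have hBinj : Function.Injective B := by
    intro i j h
    exact 𝓑.equivFin.symm.injective (Subtype.coe_injective h)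
  have hB01 : ∀ i a b, B i a b = 0 ∨ B i a b = 1 := by
    intro i a b
    obtain ⟨p, hp⟩ := hBrep i
    rw [← hp, rowMat_apply]
    split
    · right; rfl
    · left; rfl
  have hBsym : ∀ i, (B i).IsSymm := by
    intro i
    obtain ⟨p, hp⟩ := hBrep i
    rw [← hp]
    exact hMsymm p
  have hBone : ∀ i a b, B i a b = 1 ↔ B i = rowMat P (a, b) := by
    intro i a b
    obtain ⟨p, hp⟩ := hBrep i
    rw [← hp, rowMat_apply]
    constructor
    · intro h1
      by_cases hc : 0 < P (Epos n p) a b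
      · exact hMeq p (a, b) hc
      · rw [if_neg hc] at h1
        norm_num at h1
    · intro h1
      rw [if_pos ((hMeq_iff p (a, b)).mp h1)]
  have hBzero : ∀ i a b, B i ≠ rowMat P (a, b) → B i a b = 0 := by
    intro i a b hne
    rcases hB01 i a b with h | h
    · exact h
    · exact absurd ((hBone i a b).mp h) hne
  have hcollapse : ∀ (a b : Fin n) (f : Fin 𝓑.card → ℝ),
      (∑ i, if B i = rowMat P (a, b) then f i else 0)
        = f (𝓑.equivFin ⟨rowMat P (a, b), hmem𝓑 (a, b)⟩) := by
    intro a b f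
    have hcond : ∀ i, (B i = rowMat P (a, b))
        ↔ i = 𝓑.equivFin ⟨rowMat P (a, b), hmem𝓑 (a, b)⟩ := by
      intro i
      constructor
      · intro h
        have h2 : 𝓑.equivFin.symm i = ⟨rowMat P (a, b), hmem𝓑 (a, b)⟩ :=
          Subtype.coe_injective h
        rw [← h2, Equiv.apply_symm_apply]
      · rintro rfl
        show ((𝓑.equivFin.symm (𝓑.equivFin _)).1 : Matrix (Fin n) (Fin n) ℝ) = _
        rw [Equiv.symm_apply_apply]
    rw [Finset.sum_congr rfl (fun i _ => if_congr (hcond i) rfl rfl)]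
    simp
  refine ⟨𝓑.card, B, hBsym, hB01, ?_, ?_, ?_, ?_⟩
  · -- disjoint supports
    intro i j hij a b
    by_contra hcon
    push_neg at hcon
    have h1 : B i = rowMat P (a, b) := by
      rcases hB01 i a b with h | h
      · exact absurd h hcon.1
      · exact (hBone i a b).mp h
    have h2 : B j = rowMat P (a, b) := by
      rcases hB01 j a b with h | h
      · exact absurd h hcon.2
      · exact (hBone j a b).mp h
    exact hij (hBinj (h1.trans h2.symm))
  · -- sums to the all-ones matrix
    ext a b
    rw [Matrix.sum_apply]
    have h1 : ∀ i, B i a b = if B i = rowMat P (a, b) then (1 : ℝ) else 0 := by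
      intro i
      by_cases hc : B i = rowMat P (a, b)
      · rw [if_pos hc]
        exact (hBone i a b).mpr hc
      · rw [if_neg hc]
        exact hBzero i a b hc
    rw [Finset.sum_congr rfl (fun i _ => h1 i), hcollapse a b (fun _ => (1 : ℝ))]
    rfl
  · -- linear independence
    rw [Fintype.linearIndependent_iff]
    intro g hg i
    obtain ⟨p, hp⟩ := hBrep i
    have h2 : (∑ j, g j • B j) p.1 p.2 = 0 := by
      rw [hg]
      simp
    rw [Matrix.sum_apply] at h2
    have h3 : ∀ j, (g j • B j) p.1 p.2 = if j = i then g j else 0 := by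
      intro j
      rw [Matrix.smul_apply, smul_eq_mul]
      by_cases hc : j = i
      · subst hc
        rw [if_pos rfl]
        have hone : B j p.1 p.2 = 1 := by
          refine (hBone j p.1 p.2).mpr ?_
          rw [Prod.mk.eta]
          exact hp.symm
        rw [hone, mul_one]
      · rw [if_neg hc]
        have hzero : B j p.1 p.2 = 0 := by
          apply hBzero
          intro hcc
          rw [Prod.mk.eta, hp] at hcc
          exact hc (hBinj hcc)
        rw [hzero, mul_zero]
    rw [Finset.sum_congr rfl (fun j _ => h3 j)] at h2
    simpa using h2
  · -- span equals S
    apply le_antisymm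
    · rw [Submodule.span_le]
      rintro m ⟨i, rfl⟩
      obtain ⟨p, hp⟩ := hBrep i
      exact hp ▸ hMinS p
    · intro X hXS
      have hXs := hS X hXS
      have hXeq : X = ∑ i, (X ((hBrep i).choose).1 ((hBrep i).choose).2) • B i := by
        ext a b
        rw [Matrix.sum_apply]
        have h1 : ∀ i, ((X ((hBrep i).choose).1 ((hBrep i).choose).2) • B i) a b
            = if B i = rowMat P (a, b) then X a b else 0 := by
          intro i
          rw [Matrix.smul_apply, smul_eq_mul]
          by_cases hc : B i = rowMat P (a, b)
          · rw [if_pos hc, (hBone i a b).mpr hc, mul_one]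
            have hp₀ : rowMat P ((hBrep i).choose) = B i := (hBrep i).choose_spec
            exact hconst X hXS ((hBrep i).choose) (a, b)
              ((hMeq_iff ((hBrep i).choose) (a, b)).mp (by rw [hp₀, hc]))
          · rw [if_neg hc, hBzero i a b hc, mul_zero]
        rw [Finset.sum_congr rfl (fun i _ => h1 i), hcollapse a b (fun _ => X a b)]
      rw [hXeq]
      exact Submodule.sum_mem _
        (fun i _ => Submodule.smul_mem _ _ (Submodule.subset_span ⟨i, rfl⟩))
end

section
/- Let S be a linear subspace of the n × n real symmetric matrices and P_S the orthogonal projection onto S with respect to the trace inner product. If P_S(𝒩ⁿ) ⊆ 𝒩ⁿ, P_S(𝕊ⁿ₊) ⊆ 𝕊ⁿ₊, and S contains both the all-ones matrix J and the identity matrix I, then S is spanned by a Jordan configuration: a family of symmetric 0/1 matrices with pairwise disjoint supports summing to J, whose span contains I and is closed under taking squares. -/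
open Matrix in
private lemma psd_diag_nonneg {n : ℕ} {M : Matrix (Fin n) (Fin n) ℝ} (hM : M.PosSemidef)
    (i : Fin n) : 0 ≤ M i i := by
  exact hM.diag_nonneg

open Matrix in
private lemma isHermitian_of_isSymm' {n : ℕ} {X : Matrix (Fin n) (Fin n) ℝ} (h : X.IsSymm) :
    X.IsHermitian := by
  rwa [Matrix.IsHermitian, Matrix.conjTranspose_eq_transpose_of_trivial]

open Matrix in
private lemma eq_zero_of_trace_sq {n : ℕ} {Y : Matrix (Fin n) (Fin n) ℝ}
    (hY : Y.IsSymm) (h : (Y * Y).trace = 0) : Y = 0 := by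
  have key : (Y * Y).trace = ∑ i, ∑ j, (Y i j)^2 := by
    simp only [Matrix.trace, Matrix.diag, Matrix.mul_apply]
    refine Finset.sum_congr rfl fun i _ => Finset.sum_congr rfl fun j _ => ?_
    rw [hY.apply i j, sq]
  rw [key] at h
  have h1 : ∀ i ∈ Finset.univ, (0:ℝ) ≤ ∑ j, (Y i j)^2 :=
    fun i _ => Finset.sum_nonneg fun j _ => sq_nonneg _
  ext i j
  have h2 := (Finset.sum_eq_zero_iff_of_nonneg h1).mp h i (Finset.mem_univ i)
  have h3 := (Finset.sum_eq_zero_iff_of_nonneg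
    (fun j _ => sq_nonneg (Y i j))).mp h2 j (Finset.mem_univ j)
  simpa using pow_eq_zero_iff (n := 2) (by norm_num) |>.mp h3

open Matrix in
private lemma sq_mem_of_proj {n : ℕ} (S : Submodule ℝ (Matrix (Fin n) (Fin n) ℝ))
    (hS : ∀ X ∈ S, X.IsSymm)
    (P : Matrix (Fin n) (Fin n) ℝ →ₗ[ℝ] Matrix (Fin n) (Fin n) ℝ)
    (hrange : ∀ X : Matrix (Fin n) (Fin n) ℝ, X.IsSymm → P X ∈ S)
    (hfix : ∀ X ∈ S, P X = X)
    (hselfadj : ∀ X Y : Matrix (Fin n) (Fin n) ℝ, X.IsSymm → Y.IsSymm →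
      (P X * Y).trace = (X * P Y).trace)
    (hpsd : ∀ X : Matrix (Fin n) (Fin n) ℝ, X.PosSemidef → (P X).PosSemidef)
    (hI : (1 : Matrix (Fin n) (Fin n) ℝ) ∈ S)
    {X : Matrix (Fin n) (Fin n) ℝ} (hX : X ∈ S) : X * X ∈ S := by
  have hXs : X.IsSymm := hS X hX
  have hX2s : (X * X).IsSymm := by
    show (X * X)ᵀ = X * X
    rw [Matrix.transpose_mul, hXs]
  set Y : Matrix (Fin n) (Fin n) ℝ := P (X * X) - X * X with hYdef
  have hPX2 : P (X * X) ∈ S := hrange _ hX2s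
  have hperp : ∀ Z ∈ S, (Z * Y).trace = 0 := by
    intro Z hZ
    have h1 : (P (X * X) * Z).trace = (X * X * Z).trace := by
      rw [hselfadj _ _ hX2s (hS Z hZ), hfix Z hZ]
    have h2 : (Z * Y).trace = (Z * P (X*X)).trace - (Z * (X*X)).trace := by
      rw [hYdef, Matrix.mul_sub, Matrix.trace_sub]
    rw [h2, Matrix.trace_mul_comm Z, h1, Matrix.trace_mul_comm Z, sub_self]
  -- spectral decomposition
  have hXh : X.IsHermitian := isHermitian_of_isSymm' hXs
  set U : Matrix (Fin n) (Fin n) ℝ := (hXh.eigenvectorUnitary : Matrix (Fin n) (Fin n) ℝ)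
    with hUdef
  have hU1 : U * star U = 1 := Matrix.mem_unitaryGroup_iff.mp hXh.eigenvectorUnitary.2
  have hU2 : star U * U = 1 := Matrix.mem_unitaryGroup_iff'.mp hXh.eigenvectorUnitary.2
  set ev : Fin n → ℝ := hXh.eigenvalues with hev
  set D : Matrix (Fin n) (Fin n) ℝ := Matrix.diagonal ev with hDdef
  have hD : star U * X * U = D := by
    have := hXh.conjStarAlgAut_star_eigenvectorUnitary
    rw [Unitary.conjStarAlgAut_star_apply] at this
    simpa [hDdef, RCLike.ofReal_real_eq_id] using this
  have hconjmul : ∀ M N : Matrix (Fin n) (Fin n) ℝ,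
      (star U * M * U) * (star U * N * U) = star U * (M * N) * U := by
    intro M N
    calc (star U * M * U) * (star U * N * U)
        = star U * M * ((U * star U) * (N * U)) := by
          simp only [Matrix.mul_assoc]
      _ = star U * M * (N * U) := by rw [hU1, Matrix.one_mul]
      _ = star U * (M * N) * U := by simp only [Matrix.mul_assoc]
  have trconj : ∀ M : Matrix (Fin n) (Fin n) ℝ, (star U * M * U).trace = M.trace := by
    intro M
    rw [Matrix.trace_mul_comm, ← Matrix.mul_assoc, hU1, Matrix.one_mul]
  set W : Matrix (Fin n) (Fin n) ℝ := star U * Y * U with hWdef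
  have hDD : star U * (X * X) * U = D * D := by rw [← hconjmul, hD]
  -- diagonal entries of W are nonnegative
  have hWd : ∀ i, 0 ≤ W i i := by
    intro i
    set c : ℝ := ev i with hc
    set A : Matrix (Fin n) (Fin n) ℝ := X - c • (1 : Matrix (Fin n) (Fin n) ℝ) with hA
    have hAh : Aᴴ = A := by
      rw [hA, Matrix.conjTranspose_eq_transpose_of_trivial, Matrix.transpose_sub, hXs,
        Matrix.transpose_smul, Matrix.transpose_one]
    have hAA : (A * A).PosSemidef := by
      have := Matrix.posSemidef_conjTranspose_mul_self A
      rwa [hAh] at this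
    have hexp : A * A = X * X - (2*c) • X + (c*c) • (1 : Matrix (Fin n) (Fin n) ℝ) := by
      rw [hA]
      simp only [Matrix.sub_mul, Matrix.mul_sub, Matrix.smul_mul, Matrix.mul_smul,
        Matrix.one_mul, Matrix.mul_one, smul_smul]
      module
    have hPexp : P (A * A) = P (X * X) - (2*c) • X + (c*c) • 1 := by
      rw [hexp, map_add, map_sub, _root_.map_smul, _root_.map_smul, hfix X hX, hfix 1 hI]
    have hconj : (star U * P (A*A) * U).PosSemidef := by
      have := (hpsd _ hAA).conjTranspose_mul_mul_same U
      rwa [← Matrix.star_eq_conjTranspose] at this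
    have hent : star U * P (A*A) * U = W + D * D - (2*c) • D + (c*c) • 1 := by
      rw [hPexp]
      have e1 : star U * (P (X*X) - (2*c) • X + (c*c) • 1) * U
          = star U * P (X*X) * U - (2*c) • (star U * X * U)
            + (c*c) • (star U * 1 * U) := by
        simp only [Matrix.mul_add, Matrix.add_mul, Matrix.mul_sub, Matrix.sub_mul,
          Matrix.mul_smul, Matrix.smul_mul]
      rw [e1, hD, Matrix.mul_one, hU2]
      have e2 : star U * P (X*X) * U = W + D * D := by
        rw [hWdef, hYdef]
        simp only [Matrix.mul_sub, Matrix.sub_mul]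
        rw [hDD, sub_add_cancel]
      rw [e2]
    have := psd_diag_nonneg hconj i
    rw [hent] at this
    have e4 : (W + D * D - (2*c) • D + (c*c) • (1:Matrix (Fin n) (Fin n) ℝ)) i i
        = W i i := by
      simp [hDdef, Matrix.diagonal_apply_eq, Matrix.one_apply_eq, hc]
      ring
    rwa [e4] at this
  -- trace of W is zero
  have htrY : Y.trace = 0 := by
    have := hperp 1 hI
    rwa [Matrix.one_mul] at this
  have htrW : ∑ i, W i i = 0 := by
    have : W.trace = 0 := by rw [hWdef, trconj, htrY]
    simpa [Matrix.trace, Matrix.diag] using this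
  have hWzero : ∀ i, W i i = 0 := fun i =>
    (Finset.sum_eq_zero_iff_of_nonneg (fun j _ => hWd j)).mp htrW i (Finset.mem_univ i)
  -- trace (X²·Y) = 0
  have hX2Y : ((X * X) * Y).trace = 0 := by
    have e1 : star U * ((X * X) * Y) * U = (D * D) * W := by
      rw [← hconjmul, hDD]
    have e2 : ((X * X) * Y).trace = ((D * D) * W).trace := by rw [← trconj, e1]
    rw [e2]
    have e3 : ((D * D) * W).trace = ∑ i, (ev i * ev i) * W i i := by
      rw [hDdef, Matrix.diagonal_mul_diagonal]
      simp [Matrix.trace, Matrix.diag, Matrix.diagonal_mul]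
    rw [e3]
    exact Finset.sum_eq_zero fun i _ => by rw [hWzero i, mul_zero]
  -- trace (Y·Y) = 0 and conclude
  have hYY : (Y * Y).trace = 0 := by
    have e1 : Y * Y = P (X*X) * Y - (X*X) * Y := by rw [hYdef, Matrix.sub_mul]
    rw [e1, Matrix.trace_sub, hperp _ hPX2, hX2Y, sub_self]
  have hYs : Y.IsSymm := by
    show Yᵀ = Y
    rw [hYdef, Matrix.transpose_sub, hS _ hPX2, hX2s]
  have hY0 : Y = 0 := eq_zero_of_trace_sq hYs hYY
  have : P (X * X) = X * X := by
    have := sub_eq_zero.mp hY0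
    exact this
  rw [← this]
  exact hPX2

open Matrix Finset

/-- If the orthogonal projection `P` onto a subspace `S` of the `n × n`
real symmetric matrices (w.r.t. the trace inner product) maps `𝒩ⁿ` into itself and maps
`𝕊ⁿ₊` into itself, and `S` contains the all-ones matrix `J` and the identity `I`, then `S`
is spanned by a Jordan configuration: a family of symmetric 0/1 matrices with pairwise
disjoint supports summing to `J`, whose span contains `I` and is closed under taking
squares. -/
theorem stmt11 {n : ℕ} (S : Submodule ℝ (Matrix (Fin n) (Fin n) ℝ))
    (hS : ∀ X ∈ S, X.IsSymm)
    (P : Matrix (Fin n) (Fin n) ℝ →ₗ[ℝ] Matrix (Fin n) (Fin n) ℝ)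
    (hrange : ∀ X : Matrix (Fin n) (Fin n) ℝ, X.IsSymm → P X ∈ S)
    (hfix : ∀ X ∈ S, P X = X)
    (hselfadj : ∀ X Y : Matrix (Fin n) (Fin n) ℝ, X.IsSymm → Y.IsSymm →
      (P X * Y).trace = (X * P Y).trace)
    (hN : ∀ X : Matrix (Fin n) (Fin n) ℝ, X.IsSymm → (∀ a b, 0 ≤ X a b) →
      ∀ a b, 0 ≤ P X a b)
    (hpsd : ∀ X : Matrix (Fin n) (Fin n) ℝ, X.PosSemidef → (P X).PosSemidef)
    (hJ : (Matrix.of fun _ _ => (1 : ℝ)) ∈ S)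
    (hI : (1 : Matrix (Fin n) (Fin n) ℝ) ∈ S) :
    ∃ (k : ℕ) (B : Fin k → Matrix (Fin n) (Fin n) ℝ),
      (∀ i, (B i).IsSymm) ∧
      (∀ i a b, B i a b = 0 ∨ B i a b = 1) ∧
      (∀ i j, i ≠ j → ∀ a b, B i a b = 0 ∨ B j a b = 0) ∧
      (∑ i, B i = Matrix.of fun _ _ => (1 : ℝ)) ∧
      (1 : Matrix (Fin n) (Fin n) ℝ) ∈ Submodule.span ℝ (Set.range B) ∧
      (∀ i j, B i * B j + B j * B i ∈ Submodule.span ℝ (Set.range B)) ∧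
      Submodule.span ℝ (Set.range B) = S := by
  classical
  set E : Fin n × Fin n → Matrix (Fin n) (Fin n) ℝ := fun p =>
    Matrix.of fun c d => (if c = p.1 ∧ d = p.2 then (1:ℝ) else 0)
      + (if c = p.2 ∧ d = p.1 then 1 else 0) with hEdef
  have hEsymm : ∀ p, (E p).IsSymm := by
    intro p
    show (E p)ᵀ = E p
    ext c d
    simp only [Matrix.transpose_apply, hEdef, Matrix.of_apply]
    rw [add_comm]
    congr 1 <;> simp [and_comm]
  have hEnn : ∀ p c d, (0:ℝ) ≤ E p c d := by
    intro p c d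
    simp only [hEdef, Matrix.of_apply]
    split_ifs <;> norm_num
  -- decomposition of a symmetric matrix
  have hdecomp : ∀ X : Matrix (Fin n) (Fin n) ℝ, X.IsSymm →
      (2:ℝ) • X = ∑ p : Fin n × Fin n, X p.1 p.2 • E p := by
    intro X hX
    ext c d
    simp only [Matrix.smul_apply, Matrix.sum_apply, Matrix.of_apply, smul_eq_mul, hEdef,
      mul_add, mul_ite, mul_one, mul_zero]
    rw [Finset.sum_add_distrib]
    have e1 : ∀ p : Fin n × Fin n, (if c = p.1 ∧ d = p.2 then X p.1 p.2 else 0)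
        = (if p = (c, d) then X c d else 0) := by
      intro p
      by_cases h : p = (c, d)
      · subst h; simp
      · rw [if_neg h, if_neg]
        rintro ⟨h1, h2⟩
        exact h (Prod.ext h1.symm h2.symm)
    have e2 : ∀ p : Fin n × Fin n, (if c = p.2 ∧ d = p.1 then X p.1 p.2 else 0)
        = (if p = (d, c) then X d c else 0) := by
      intro p
      by_cases h : p = (d, c)
      · subst h; simp
      · rw [if_neg h, if_neg]
        rintro ⟨h1, h2⟩
        exact h (Prod.ext h2.symm h1.symm)
    rw [Finset.sum_congr rfl (fun p _ => e1 p), Finset.sum_congr rfl (fun p _ => e2 p),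
      Finset.sum_ite_eq' Finset.univ (c, d), Finset.sum_ite_eq' Finset.univ (d, c)]
    simp [hX.apply d c]
    ring
  -- trace formula
  have htr : ∀ (X : Matrix (Fin n) (Fin n) ℝ) (p : Fin n × Fin n), X.IsSymm →
      (X * E p).trace = 2 * X p.1 p.2 := by
    intro X p hX
    simp only [Matrix.trace, Matrix.diag, Matrix.mul_apply, Matrix.of_apply, hEdef,
      mul_add, mul_ite, mul_one, mul_zero]
    rw [← Fintype.sum_prod_type (f := fun q : Fin n × Fin n =>
      ((if q.2 = p.1 ∧ q.1 = p.2 then X q.1 q.2 else 0)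
        + if q.2 = p.2 ∧ q.1 = p.1 then X q.1 q.2 else 0))]
    rw [Finset.sum_add_distrib]
    have e1 : ∀ q : Fin n × Fin n, (if q.2 = p.1 ∧ q.1 = p.2 then X q.1 q.2 else 0)
        = (if q = (p.2, p.1) then X p.2 p.1 else 0) := by
      intro q
      by_cases h : q = (p.2, p.1)
      · subst h; simp
      · rw [if_neg h, if_neg]
        rintro ⟨h1, h2⟩
        exact h (Prod.ext h2 h1)
    have e2 : ∀ q : Fin n × Fin n, (if q.2 = p.2 ∧ q.1 = p.1 then X q.1 q.2 else 0)
        = (if q = (p.1, p.2) then X p.1 p.2 else 0) := by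
      intro q
      by_cases h : q = (p.1, p.2)
      · subst h; simp
      · rw [if_neg h, if_neg]
        rintro ⟨h1, h2⟩
        exact h (Prod.ext h2 h1)
    rw [Finset.sum_congr rfl (fun q _ => e1 q), Finset.sum_congr rfl (fun q _ => e2 q),
      Finset.sum_ite_eq' Finset.univ ((p.2, p.1) : Fin n × Fin n),
      Finset.sum_ite_eq' Finset.univ ((p.1, p.2) : Fin n × Fin n)]
    simp [hX.apply p.1 p.2]
    ring
  -- the projected basis matrices
  set Q : Fin n × Fin n → Matrix (Fin n) (Fin n) ℝ := fun p => P (E p) with hQdef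
  have hQmem : ∀ p, Q p ∈ S := fun p => hrange _ (hEsymm p)
  have hQsymm : ∀ p, (Q p).IsSymm := fun p => hS _ (hQmem p)
  have hQnn : ∀ p c d, (0:ℝ) ≤ Q p c d := fun p => hN _ (hEsymm p) (hEnn p)
  have hPX : ∀ X : Matrix (Fin n) (Fin n) ℝ, X.IsSymm →
      (2:ℝ) • P X = ∑ p : Fin n × Fin n, X p.1 p.2 • Q p := by
    intro X hX
    have := congrArg P (hdecomp X hX)
    rw [_root_.map_smul, map_sum] at this
    simp only [_root_.map_smul] at this
    exact this
  -- self-adjointness in coordinates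
  have hQQ : ∀ p q : Fin n × Fin n, Q p q.1 q.2 = Q q p.1 p.2 := by
    intro p q
    have h := hselfadj (E p) (E q) (hEsymm p) (hEsymm q)
    rw [htr (P (E p)) q (hQsymm p), Matrix.trace_mul_comm,
      htr (P (E q)) p (hQsymm q)] at h
    have := h
    linarith
  -- row sums are 2
  have hJsymm : (Matrix.of fun _ _ => (1:ℝ) : Matrix (Fin n) (Fin n) ℝ).IsSymm := by
    show _ = _
    ext c d
    rfl
  have hrow : ∀ p : Fin n × Fin n, ∑ q : Fin n × Fin n, Q p q.1 q.2 = 2 := by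
    intro p
    have h := hPX _ hJsymm
    rw [hfix _ hJ] at h
    have h2 : ((2:ℝ) • (Matrix.of fun _ _ => (1:ℝ) : Matrix (Fin n) (Fin n) ℝ)) p.1 p.2
        = (∑ q : Fin n × Fin n, (Matrix.of fun _ _ => (1:ℝ) : Matrix (Fin n) (Fin n) ℝ) q.1 q.2 • Q q) p.1 p.2 := by
      rw [h]
    simp only [Matrix.smul_apply, Matrix.sum_apply, Matrix.of_apply, smul_eq_mul, one_mul,
      one_smul] at h2
    rw [← Finset.sum_congr rfl (fun q _ => hQQ p q)] at h2
    rw [← h2]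
    norm_num
  -- idempotency in coordinates
  have hidem : ∀ p q : Fin n × Fin n,
      2 * Q p q.1 q.2 = ∑ r : Fin n × Fin n, Q p r.1 r.2 * Q r q.1 q.2 := by
    intro p q
    have h := hPX (Q p) (hQsymm p)
    rw [hfix _ (hQmem p)] at h
    have h2 : ((2:ℝ) • Q p) q.1 q.2 = (∑ r : Fin n × Fin n, Q p r.1 r.2 • Q r) q.1 q.2 := by
      rw [h]
    simpa only [Matrix.smul_apply, Matrix.sum_apply, smul_eq_mul] using h2
  -- reflexivity
  have hrefl : ∀ p : Fin n × Fin n, 0 < Q p p.1 p.2 := by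
    intro p
    rcases lt_or_eq_of_le (hQnn p p.1 p.2) with h | h
    · exact h
    exfalso
    have h1 : ∑ r : Fin n × Fin n, Q p r.1 r.2 * Q r p.1 p.2 = 0 := by
      rw [← hidem p p, ← h, mul_zero]
    have h2 : ∀ r : Fin n × Fin n, Q p r.1 r.2 = 0 := by
      intro r
      have h3 := (Finset.sum_eq_zero_iff_of_nonneg
        (fun r _ => mul_nonneg (hQnn p r.1 r.2) (hQnn r p.1 p.2))).mp h1 r (Finset.mem_univ r)
      rw [← hQQ p r] at h3
      rcases mul_eq_zero.mp h3 with h4 | h4 <;> exact h4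
    have h5 := hrow p
    rw [Finset.sum_eq_zero (fun r _ => h2 r)] at h5
    norm_num at h5
  -- symmetry and transitivity of the relation
  have htrans : ∀ p q r : Fin n × Fin n, 0 < Q p q.1 q.2 → 0 < Q q r.1 r.2 →
      0 < Q p r.1 r.2 := by
    intro p q r h1 h2
    have h3 : Q p q.1 q.2 * Q q r.1 r.2 ≤ ∑ s : Fin n × Fin n, Q p s.1 s.2 * Q s r.1 r.2 :=
      Finset.single_le_sum (f := fun s : Fin n × Fin n => Q p s.1 s.2 * Q s r.1 r.2)
        (fun s _ => mul_nonneg (hQnn p s.1 s.2) (hQnn s r.1 r.2)) (Finset.mem_univ q)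
    rw [← hidem p r] at h3
    nlinarith
  -- constancy on classes
  have hconst : ∀ p c d, 0 < Q p c d → Q p c d = Q p p.1 p.2 := by
    intro p c d hpcd
    set C : Finset (Fin n × Fin n) := Finset.univ.filter (fun q => 0 < Q p q.1 q.2) with hC
    have hmemC : ∀ q, q ∈ C ↔ 0 < Q p q.1 q.2 := by
      intro q; simp [hC]
    have hpC : p ∈ C := (hmemC p).mpr (hrefl p)
    have hvpos : ∀ x ∈ C, ∀ y ∈ C, 0 < Q x y.1 y.2 := by
      intro x hx y hy
      have h1 : 0 < Q x p.1 p.2 := by rw [← hQQ p x]; exact (hmemC x).mp hx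
      exact htrans x p y h1 ((hmemC y).mp hy)
    have hvzero : ∀ x ∈ C, ∀ y, y ∉ C → Q x y.1 y.2 = 0 := by
      intro x hx y hy
      rcases lt_or_eq_of_le (hQnn x y.1 y.2) with h | h
      · exfalso
        exact hy ((hmemC y).mpr (htrans p x y ((hmemC x).mp hx) h))
      · exact h.symm
    have hrowC : ∀ x ∈ C, ∑ z ∈ C, Q x z.1 z.2 = 2 := by
      intro x hx
      rw [← hrow x]
      exact Finset.sum_subset (Finset.subset_univ C)
        (fun z _ hz => hvzero x hx z hz)
    have hidemC : ∀ x ∈ C, ∀ y ∈ C,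
        2 * Q x y.1 y.2 = ∑ z ∈ C, Q x z.1 z.2 * Q z y.1 y.2 := by
      intro x hx y hy
      rw [hidem x y]
      exact (Finset.sum_subset (Finset.subset_univ C)
        (fun z _ hz => by rw [hvzero x hx z hz, zero_mul])).symm
    -- maximal entry
    obtain ⟨s, hs, hmax⟩ := (C ×ˢ C).exists_max_image (fun s => Q s.1 s.2.1 s.2.2)
      ⟨(p, p), Finset.mk_mem_product hpC hpC⟩
    obtain ⟨hs1, hs2⟩ := Finset.mem_product.mp hs
    set m : ℝ := Q s.1 s.2.1 s.2.2 with hm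
    have hmle : ∀ x ∈ C, ∀ y ∈ C, Q x y.1 y.2 ≤ m := by
      intro x hx y hy
      exact hmax (x, y) (Finset.mk_mem_product hx hy)
    have hmpos : 0 < m := hvpos _ hs1 _ hs2
    -- the column of s.2 is constantly m
    have hcol : ∀ z ∈ C, Q z s.2.1 s.2.2 = m := by
      intro z hz
      have h1 : ∑ z ∈ C, Q s.1 z.1 z.2 * (m - Q z s.2.1 s.2.2) = 0 := by
        rw [Finset.sum_congr rfl (fun z _ => mul_sub (Q s.1 z.1 z.2) m (Q z s.2.1 s.2.2))]
        rw [Finset.sum_sub_distrib, ← Finset.sum_mul, hrowC _ hs1, ← hidemC _ hs1 _ hs2]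
        ring
      have h2 := (Finset.sum_eq_zero_iff_of_nonneg (fun z hz' => mul_nonneg
        (le_of_lt (hvpos _ hs1 _ hz')) (sub_nonneg.mpr (hmle _ hz' _ hs2)))).mp h1 z hz
      rcases mul_eq_zero.mp h2 with h3 | h3
      · exact absurd h3 (ne_of_gt (hvpos _ hs1 _ hz))
      · linarith [sub_eq_zero.mp h3]
    -- card of C times m equals 2
    have hcard : (C.card : ℝ) * m = 2 := by
      have h1 : ∑ z ∈ C, Q s.2 z.1 z.2 = 2 := hrowC _ hs2
      have h2 : ∀ z ∈ C, Q s.2 z.1 z.2 = m := by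
        intro z hz
        rw [hQQ s.2 z]
        exact hcol z hz
      rw [Finset.sum_congr rfl h2, Finset.sum_const, nsmul_eq_mul] at h1
      exact h1
    -- all entries on C × C equal m
    have hall : ∀ x ∈ C, ∀ y ∈ C, Q x y.1 y.2 = m := by
      intro x hx y hy
      by_contra hne
      have hlt : Q x y.1 y.2 < m := lt_of_le_of_ne (hmle _ hx _ hy) hne
      have h1 : ∑ z ∈ C, Q x z.1 z.2 < ∑ _z ∈ C, m :=
        Finset.sum_lt_sum (fun z hz => hmle _ hx _ hz) ⟨y, hy, hlt⟩
      rw [hrowC _ hx, Finset.sum_const, nsmul_eq_mul, hcard] at h1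
      exact lt_irrefl _ h1
    have hcdC : ((c, d) : Fin n × Fin n) ∈ C := (hmemC (c, d)).mpr hpcd
    rw [hall p hpC (c, d) hcdC, hall p hpC p hpC]
  -- indicator matrices of classes
  set Bc : Fin n × Fin n → Matrix (Fin n) (Fin n) ℝ := fun p =>
    Matrix.of fun c d => if 0 < Q p c d then (1:ℝ) else 0 with hBcdef
  have hQB : ∀ p, Q p = Q p p.1 p.2 • Bc p := by
    intro p
    ext c d
    simp only [Matrix.smul_apply, hBcdef, Matrix.of_apply, smul_eq_mul, mul_ite, mul_one,
      mul_zero]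
    by_cases h : 0 < Q p c d
    · rw [if_pos h]; exact hconst p c d h
    · rw [if_neg h]
      exact le_antisymm (hQnn p c d) (not_lt.mp h) |>.symm ▸ rfl
  have hBcS : ∀ p, Bc p ∈ S := by
    intro p
    have hq := hQB p
    have hmne : Q p p.1 p.2 ≠ 0 := ne_of_gt (hrefl p)
    generalize hmd : Q p p.1 p.2 = m at hq hmne
    have h : Bc p = m⁻¹ • Q p := by
      rw [hq, smul_smul, inv_mul_cancel₀ hmne, one_smul]
    rw [h]
    exact Submodule.smul_mem S _ (hQmem p)
  have hBceq : ∀ p q : Fin n × Fin n, 0 < Q p q.1 q.2 → Bc p = Bc q := by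
    intro p q h
    have hqp : 0 < Q q p.1 p.2 := by rw [hQQ q p]; exact h
    ext c d
    simp only [hBcdef, Matrix.of_apply]
    exact if_congr ⟨fun h2 => htrans q p (c,d) hqp h2, fun h2 => htrans p q (c,d) h h2⟩ rfl rfl
  set T : Finset (Matrix (Fin n) (Fin n) ℝ) := Finset.univ.image Bc with hT
  refine ⟨T.card, fun i => ((T.equivFin.symm i : T) : Matrix (Fin n) (Fin n) ℝ), ?_⟩
  set B : Fin T.card → Matrix (Fin n) (Fin n) ℝ :=
    fun i => ((T.equivFin.symm i : T) : Matrix (Fin n) (Fin n) ℝ) with hBdef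
  have hBel : ∀ i, ∃ p, B i = Bc p := by
    intro i
    have h : (T.equivFin.symm i : Matrix (Fin n) (Fin n) ℝ) ∈ Finset.univ.image Bc :=
      (T.equivFin.symm i).2
    obtain ⟨p, _, hp⟩ := Finset.mem_image.mp h
    exact ⟨p, hp.symm⟩
  have hBsur : ∀ p, ∃ i, B i = Bc p := by
    intro p
    refine ⟨T.equivFin ⟨Bc p, by rw [hT]; exact Finset.mem_image_of_mem Bc (Finset.mem_univ p)⟩, ?_⟩
    simp [hBdef]
  have hBinj : Function.Injective B :=
    fun i j h => T.equivFin.symm.injective (Subtype.coe_injective h)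
  have hBval : ∀ (i) (p : Fin n × Fin n) c d, B i = Bc p → B i c d ≠ 0 → 0 < Q p c d := by
    intro i p c d hp h0
    by_contra h1
    apply h0
    rw [hp]
    simp only [hBcdef, Matrix.of_apply]
    rw [if_neg h1]
  have hBsym : ∀ i, (B i).IsSymm := by
    intro i
    obtain ⟨p, hp⟩ := hBel i
    rw [hp]
    show (Bc p)ᵀ = Bc p
    ext c d
    simp only [Matrix.transpose_apply, hBcdef, Matrix.of_apply]
    rw [(hQsymm p).apply c d]
  have hB01 : ∀ i c d, B i c d = 0 ∨ B i c d = 1 := by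
    intro i c d
    obtain ⟨p, hp⟩ := hBel i
    rw [hp]
    simp only [hBcdef, Matrix.of_apply]
    split_ifs <;> simp
  have hdisj : ∀ i j, i ≠ j → ∀ c d, B i c d = 0 ∨ B j c d = 0 := by
    intro i j hne c d
    by_contra h
    push_neg at h
    obtain ⟨h1, h2⟩ := h
    obtain ⟨p, hp⟩ := hBel i
    obtain ⟨q, hq⟩ := hBel j
    have hp1 : 0 < Q p c d := hBval i p c d hp h1
    have hq1 : 0 < Q q c d := hBval j q c d hq h2
    have heq : B i = B j := by
      rw [hp, hq, hBceq p (c,d) hp1, ← hBceq q (c,d) hq1]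
    exact hne (hBinj heq)
  have hsum : ∑ i, B i = Matrix.of fun _ _ => (1:ℝ) := by
    ext c d
    rw [Matrix.sum_apply]
    obtain ⟨i0, hi0⟩ := hBsur (c, d)
    rw [Finset.sum_eq_single i0]
    · rw [hi0]
      simp only [hBcdef, Matrix.of_apply]
      rw [if_pos (hrefl (c,d))]
    · intro i _ hne
      by_contra h0
      obtain ⟨p, hp⟩ := hBel i
      have hp1 : 0 < Q p c d := hBval i p c d hp h0
      have heq : B i = B i0 := by rw [hp, hi0, hBceq p (c,d) hp1]
      exact hne (hBinj heq)
    · intro h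
      exact absurd (Finset.mem_univ i0) h
  have hspan : Submodule.span ℝ (Set.range B) = S := by
    apply le_antisymm
    · rw [Submodule.span_le]
      rintro _ ⟨i, rfl⟩
      obtain ⟨p, hp⟩ := hBel i
      rw [hp]
      exact hBcS p
    · intro X hX
      have h2 : (2:ℝ) • X ∈ Submodule.span ℝ (Set.range B) := by
        rw [show (2:ℝ) • X = (2:ℝ) • P X by rw [hfix X hX], hPX X (hS X hX)]
        apply Submodule.sum_mem
        intro p _
        apply Submodule.smul_mem
        obtain ⟨i, hi⟩ := hBsur p
        rw [hQB p, ← hi]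
        exact Submodule.smul_mem _ _ (Submodule.subset_span (Set.mem_range_self i))
      have h3 := Submodule.smul_mem _ (2⁻¹ : ℝ) h2
      rwa [smul_smul, inv_mul_cancel₀ (by norm_num), one_smul] at h3
  have hsq : ∀ Z ∈ S, Z * Z ∈ S := fun Z hZ =>
    sq_mem_of_proj S hS P hrange hfix hselfadj hpsd hI hZ
  have hjordan : ∀ i j, B i * B j + B j * B i ∈ Submodule.span ℝ (Set.range B) := by
    intro i j
    rw [hspan]
    have hBiS : B i ∈ S := by
      rw [← hspan]; exact Submodule.subset_span (Set.mem_range_self i)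
    have hBjS : B j ∈ S := by
      rw [← hspan]; exact Submodule.subset_span (Set.mem_range_self j)
    have h1 := hsq _ (Submodule.add_mem S hBiS hBjS)
    have h2 := hsq _ hBiS
    have h3 := hsq _ hBjS
    have e : B i * B j + B j * B i = (B i + B j) * (B i + B j) - B i * B i - B j * B j := by
      noncomm_ring
    rw [e]
    exact Submodule.sub_mem S (Submodule.sub_mem S h1 h2) h3
  exact ⟨hBsym, hB01, hdisj, hsum, by rw [hspan]; exact hI, hjordan, hspan⟩
end

section
/- Let S be a linear subspace of the n × n real symmetric matrices and P_S the orthogonal projection onto S with respect to the trace inner product. If P_S(𝒟ⁿ) ⊆ 𝒟ⁿ and the identity matrix I belongs to S, then P_S(𝒩ⁿ) ⊆ 𝒩ⁿ. -/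
/-- If the orthogonal projection `P` onto a subspace `S` of the `n × n`
real symmetric matrices (w.r.t. the trace inner product) maps the doubly nonnegative cone
`𝒟ⁿ` into itself and the identity matrix belongs to `S`, then `P` maps the cone `𝒩ⁿ` of
symmetric entrywise nonnegative matrices into itself. -/
theorem stmt12 {n : ℕ} (S : Submodule ℝ (Matrix (Fin n) (Fin n) ℝ))
    (hS : ∀ X ∈ S, X.IsSymm)
    (P : Matrix (Fin n) (Fin n) ℝ →ₗ[ℝ] Matrix (Fin n) (Fin n) ℝ)
    (hrange : ∀ X : Matrix (Fin n) (Fin n) ℝ, X.IsSymm → P X ∈ S)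
    (hfix : ∀ X ∈ S, P X = X)
    (hselfadj : ∀ X Y : Matrix (Fin n) (Fin n) ℝ, X.IsSymm → Y.IsSymm →
      (P X * Y).trace = (X * P Y).trace)
    (hD : ∀ X : Matrix (Fin n) (Fin n) ℝ, X.PosSemidef → (∀ a b, 0 ≤ X a b) →
      (P X).PosSemidef ∧ ∀ a b, 0 ≤ P X a b)
    (hI : (1 : Matrix (Fin n) (Fin n) ℝ) ∈ S) :
    ∀ X : Matrix (Fin n) (Fin n) ℝ, X.IsSymm → (∀ a b, 0 ≤ X a b) →
      (P X).IsSymm ∧ ∀ a b, 0 ≤ P X a b := by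
  intro X hX hXpos
  have hPXsymm : (P X).IsSymm := hS _ (hrange X hX)
  refine ⟨hPXsymm, ?_⟩
  intro a b
  rcases eq_or_ne a b with rfl | hab
  · -- diagonal entry via E = stdBasisMatrix a a 1
    set E : Matrix (Fin n) (Fin n) ℝ := Matrix.single a a 1 with hE
    have hEsymm : E.IsSymm := by
      ext i j
      simp [hE, Matrix.single, and_comm]
    have hEnn : ∀ i j, 0 ≤ E i j := by
      intro i j
      simp only [hE, Matrix.single, Matrix.of_apply]
      split <;> norm_num
    have hEpsd : E.PosSemidef := by
      rw [Matrix.posSemidef_iff_dotProduct_mulVec]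
      constructor
      · rw [Matrix.IsHermitian, Matrix.conjTranspose_eq_transpose_of_trivial]
        exact hEsymm
      · intro v
        have : dotProduct (star v) (E.mulVec v) = v a * v a := by
          simp [hE, Matrix.mulVec, dotProduct, Matrix.single,
            Finset.mul_sum, mul_ite, ite_and, Finset.sum_ite_eq]
        rw [this]
        exact mul_self_nonneg _
    obtain ⟨_, hPEnn⟩ := hD E hEpsd hEnn
    have htrace : (P X) a a = (P X * E).trace := by
      simp [hE, Matrix.trace, Matrix.mul_apply, Matrix.single,
        Matrix.diag, mul_ite, ite_and, Finset.sum_ite_eq]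
    rw [htrace, hselfadj X E hX hEsymm]
    have : (X * P E).trace = ∑ i, ∑ j, X i j * (P E) j i := by
      simp [Matrix.trace, Matrix.mul_apply, Matrix.diag]
    rw [this]
    refine Finset.sum_nonneg fun i _ => Finset.sum_nonneg fun j _ => ?_
    exact mul_nonneg (hXpos i j) (hPEnn j i)
  · -- off-diagonal entry via X + t • 1
    set t : ℝ := ∑ i, ∑ j, X i j with ht
    have ht0 : 0 ≤ t :=
      Finset.sum_nonneg fun i _ => Finset.sum_nonneg fun j _ => hXpos i j
    set Y : Matrix (Fin n) (Fin n) ℝ := X + t • (1 : Matrix (Fin n) (Fin n) ℝ) with hY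
    have hYsymm : Y.IsSymm := by
      ext i j
      simp [hY, Matrix.transpose_apply, Matrix.one_apply, hX.apply, eq_comm]
    have hYnn : ∀ i j, 0 ≤ Y i j := by
      intro i j
      simp only [hY, Matrix.add_apply, Matrix.smul_apply, Matrix.one_apply, smul_eq_mul]
      split
      · have := hXpos i j; linarith
      · simpa using hXpos i j
    have hYpsd : Y.PosSemidef := by
      rw [Matrix.posSemidef_iff_dotProduct_mulVec]
      constructor
      · rw [Matrix.IsHermitian, Matrix.conjTranspose_eq_transpose_of_trivial]
        exact hYsymm
      · intro v
        have e1 : Y.mulVec v = X.mulVec v + t • v := by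
          rw [hY, Matrix.add_mulVec, Matrix.smul_mulVec, Matrix.one_mulVec]
        have e2 : dotProduct (star v) (Y.mulVec v)
            = dotProduct v (X.mulVec v) + t * dotProduct v v := by
          rw [star_trivial, e1, dotProduct_add, dotProduct_smul, smul_eq_mul]
        have h2 : dotProduct v (X.mulVec v) = ∑ i, ∑ j, v i * (X i j * v j) := by
          simp [dotProduct, Matrix.mulVec, Finset.mul_sum]
        have h3 : t * dotProduct v v = ∑ i, ∑ j, X i j * dotProduct v v := by
          rw [ht, Finset.sum_mul]
          exact Finset.sum_congr rfl fun i _ => Finset.sum_mul _ _ _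
        have hs : ∀ i : Fin n, v i * v i ≤ dotProduct v v := by
          intro i
          rw [dotProduct]
          exact Finset.single_le_sum (fun c _ => mul_self_nonneg (v c)) (Finset.mem_univ i)
        rw [e2, h2, h3, ← Finset.sum_add_distrib]
        refine Finset.sum_nonneg fun i _ => ?_
        rw [← Finset.sum_add_distrib]
        refine Finset.sum_nonneg fun j _ => ?_
        have h1 := hs i
        have h2' := hs j
        have h3' := hXpos i j
        nlinarith [sq_nonneg (v i + v j), sq_nonneg (v i - v j)]
    obtain ⟨_, hPYnn⟩ := hD Y hYpsd hYnn
    have hPY : P Y = P X + t • (1 : Matrix (Fin n) (Fin n) ℝ) := by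
      rw [hY, map_add, map_smul, hfix 1 hI]
    have h := hPYnn a b
    rw [hPY] at h
    simpa [Matrix.add_apply, Matrix.smul_apply, Matrix.one_apply_ne hab] using h
end

section
/- Fix an integer n > 2 and let M := (1/(n² − n))(J_{n²} − Iₙ ⊗ Jₙ − Jₙ ⊗ Iₙ) + (1/(n − 1)) I_{n²} in 𝕊^{n²}. Let S be a linear subspace of 𝕊^{n²} containing M that is closed under taking squares, and suppose the orthogonal projection P_S onto S satisfies P_S(𝒟^{n²}) ⊆ 𝒟^{n²}. Then S is spanned by a Jordan configuration: a family of symmetric 0/1 matrices with pairwise disjoint supports summing to J_{n²}, whose span contains I_{n²} and is closed under taking squares. -/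
open Kronecker

/-- The `n × n` all-ones matrix. -/
def Jn (n : ℕ) : Matrix (Fin n) (Fin n) ℝ := Matrix.of fun _ _ => 1

/-- The `n² × n²` all-ones matrix. -/
def JJ (n : ℕ) : Matrix (Fin n × Fin n) (Fin n × Fin n) ℝ := Matrix.of fun _ _ => 1

/-- The matrix `M = (1/(n²−n))(J_{n²} − Iₙ ⊗ Jₙ − Jₙ ⊗ Iₙ) + (1/(n−1)) I_{n²}`. -/
noncomputable def Mqap (n : ℕ) : Matrix (Fin n × Fin n) (Fin n × Fin n) ℝ :=
  (((n : ℝ) ^ 2 - n)⁻¹) •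
      (JJ n - (1 : Matrix (Fin n) (Fin n) ℝ) ⊗ₖ Jn n - Jn n ⊗ₖ (1 : Matrix (Fin n) (Fin n) ℝ))
    + (((n : ℝ) - 1)⁻¹) • (1 : Matrix (Fin n × Fin n) (Fin n × Fin n) ℝ)

section aux
open Matrix


lemma frob_zero {m : Type*} [Fintype m] (A : Matrix m m ℝ) (h : (Aᵀ * A).trace = 0) :
    A = 0 := by
  have h' : ∑ j, ∑ i, (A i j)^2 = 0 := by
    rw [← h]
    simp only [Matrix.trace, Matrix.diag, Matrix.mul_apply, Matrix.transpose_apply]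
    exact Finset.sum_congr rfl fun j _ => Finset.sum_congr rfl fun i _ => (sq (A i j)).symm ▸ rfl
  ext i j
  have h1 := (Finset.sum_eq_zero_iff_of_nonneg (fun j _ => Finset.sum_nonneg
    (fun i _ => sq_nonneg (A i j)))).mp h' j (Finset.mem_univ j)
  have h2 := (Finset.sum_eq_zero_iff_of_nonneg (fun i _ => sq_nonneg (A i j))).mp h1 i
    (Finset.mem_univ i)
  simpa using pow_eq_zero_iff (n := 2) (by norm_num) |>.mp h2

lemma mulVec_abs_fixed {ι : Type*} [Fintype ι] (R : Matrix ι ι ℝ)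
    (hnn : ∀ p q, 0 ≤ R p q) (hsym : R.IsSymm) (hid : R * R = R)
    (f : ι → ℝ) (hf : R *ᵥ f = f) :
    R *ᵥ (fun k => |f k|) = fun k => |f k| := by
  set a : ι → ℝ := fun k => |f k| with ha
  set g : ι → ℝ := R *ᵥ a with hg
  have hga : ∀ i, a i ≤ g i := by
    intro i
    have : |f i| = |(R *ᵥ f) i| := by rw [hf]
    rw [ha]
    simp only [this, Matrix.mulVec, dotProduct]
    calc |∑ k, R i k * f k| ≤ ∑ k, |R i k * f k| := Finset.abs_sum_le_sum_abs _ _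
      _ = ∑ k, R i k * |f k| := by
          refine Finset.sum_congr rfl fun k _ => ?_
          rw [abs_mul, abs_of_nonneg (hnn i k)]
  have hag : ∀ i, 0 ≤ a i := fun i => abs_nonneg _
  have hgfix : R *ᵥ g = g := by
    rw [hg, Matrix.mulVec_mulVec, hid]
  have key : ∑ i, (g i - a i) * g i = 0 := by
    have h1 : ∑ i, g i * g i = ∑ i, a i * g i := by
      have e1 : g ⬝ᵥ g = a ⬝ᵥ g := by
        calc g ⬝ᵥ g = (R *ᵥ a) ⬝ᵥ g := by rw [← hg]
          _ = a ᵥ* R ⬝ᵥ g := by rw [← Matrix.vecMul_transpose, hsym.eq]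
          _ = a ⬝ᵥ (R *ᵥ g) := (dotProduct_mulVec a R g).symm
          _ = a ⬝ᵥ g := by rw [hgfix]
      simpa [dotProduct] using e1
    have : ∑ i, (g i - a i) * g i = ∑ i, g i * g i - ∑ i, a i * g i := by
      rw [← Finset.sum_sub_distrib]; exact Finset.sum_congr rfl fun i _ => by ring
    rw [this, h1, sub_self]
  have heach : ∀ i, g i = a i := by
    intro i
    have hnn' : ∀ i ∈ Finset.univ, 0 ≤ (g i - a i) * g i := fun i _ =>
      mul_nonneg (sub_nonneg.mpr (hga i)) ((hag i).trans (hga i))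
    have := (Finset.sum_eq_zero_iff_of_nonneg hnn').mp key i (Finset.mem_univ i)
    rcases mul_eq_zero.mp this with h | h
    · linarith [sub_eq_zero.mp h]
    · have : a i ≤ 0 := h ▸ hga i
      have : a i = 0 := le_antisymm this (hag i)
      rw [this, h]
  funext i
  exact heach i

lemma ratio_lemma {ι : Type*} [Fintype ι] (R : Matrix ι ι ℝ)
    (hnn : ∀ p q, 0 ≤ R p q) (hsym : R.IsSymm) (hid : R * R = R)
    {p q : ι} (hpq : R p q ≠ 0)
    (f : ι → ℝ) (hf : R *ᵥ f = f) :
    R p p * f q = R p q * f p := by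
  have hRpq : 0 < R p q := lt_of_le_of_ne (hnn p q) (Ne.symm hpq)
  -- column p is fixed
  have hcol : R *ᵥ (fun k => R k p) = fun k => R k p := by
    funext j
    have : (R * R) j p = R j p := by rw [hid]
    simpa [Matrix.mulVec, dotProduct, Matrix.mul_apply] using this
  -- the vector u
  set u : ι → ℝ := fun k => R p p * f k - f p * R k p with hu
  have hufix : R *ᵥ u = u := by
    have : u = (R p p • f) - (f p • fun k => R k p) := by
      funext k; simp [hu, smul_eq_mul]
    rw [this, Matrix.mulVec_sub, Matrix.mulVec_smul, Matrix.mulVec_smul, hf, hcol]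
  have habs := mulVec_abs_fixed R hnn hsym hid u hufix
  have hvp : |u p| = 0 := by simp [hu, mul_comm]
  have hsum : ∑ k, R p k * |u k| = 0 := by
    have : (R *ᵥ fun k => |u k|) p = |u p| := by rw [habs]
    rw [hvp] at this
    simpa [Matrix.mulVec, dotProduct] using this
  have hterm : R p q * |u q| = 0 := by
    have hnn' : ∀ k ∈ Finset.univ, 0 ≤ R p k * |u k| := fun k _ =>
      mul_nonneg (hnn p k) (abs_nonneg _)
    exact (Finset.sum_eq_zero_iff_of_nonneg hnn').mp hsum q (Finset.mem_univ q)
  have huq : u q = 0 := by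
    rcases mul_eq_zero.mp hterm with h | h
    · exact absurd h hpq
    · exact abs_eq_zero.mp h
  have : R p p * f q - f p * R q p = 0 := huq
  have hqp : R q p = R p q := hsym.apply q p ▸ rfl
  rw [hqp] at this
  linarith [this]

noncomputable def Km (n : ℕ) : Matrix (Fin n) (Fin n) ℝ := 1 - ((n:ℝ)⁻¹) • Jn n

noncomputable def E2 (n : ℕ) : Matrix (Fin n × Fin n) (Fin n × Fin n) ℝ := Km n ⊗ₖ Km n

lemma Jn_mul_Jn (n : ℕ) : Jn n * Jn n = (n:ℝ) • Jn n := by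
  ext i j
  simp [Jn, Matrix.mul_apply, Finset.sum_const, Finset.card_univ]

lemma Jn_mul_Km {n : ℕ} (hn : (n:ℝ) ≠ 0) : Jn n * Km n = 0 := by
  unfold Km
  rw [mul_sub, mul_one, Matrix.mul_smul, Jn_mul_Jn, smul_smul, inv_mul_cancel₀ hn, one_smul,
    sub_self]

lemma Km_mul_Jn {n : ℕ} (hn : (n:ℝ) ≠ 0) : Km n * Jn n = 0 := by
  unfold Km
  rw [sub_mul, one_mul, Matrix.smul_mul, Jn_mul_Jn, smul_smul, inv_mul_cancel₀ hn, one_smul,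
    sub_self]

lemma Km_mul_Km {n : ℕ} (hn : (n:ℝ) ≠ 0) : Km n * Km n = Km n := by
  conv_lhs => rw [show Km n * Km n = Km n * (1 - (n:ℝ)⁻¹ • Jn n) from rfl]
  rw [mul_sub, mul_one, Matrix.mul_smul, Km_mul_Jn hn, smul_zero, sub_zero]

lemma JJ_eq_kron (n : ℕ) : JJ n = Jn n ⊗ₖ Jn n := by
  ext p q
  simp [JJ, Jn, Matrix.kroneckerMap_apply]

lemma JJ_mul_JJ (n : ℕ) : JJ n * JJ n = ((n:ℝ)^2) • JJ n := by
  rw [JJ_eq_kron, ← Matrix.mul_kronecker_mul, Jn_mul_Jn, Matrix.smul_kronecker,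
    Matrix.kronecker_smul, smul_smul, ← JJ_eq_kron, sq]

lemma JJ_mul_E2 {n : ℕ} (hn : (n:ℝ) ≠ 0) : JJ n * E2 n = 0 := by
  rw [JJ_eq_kron, E2, ← Matrix.mul_kronecker_mul, Jn_mul_Km hn]
  simp

lemma E2_mul_JJ {n : ℕ} (hn : (n:ℝ) ≠ 0) : E2 n * JJ n = 0 := by
  rw [JJ_eq_kron, E2, ← Matrix.mul_kronecker_mul, Km_mul_Jn hn]
  simp

lemma E2_mul_E2 {n : ℕ} (hn : (n:ℝ) ≠ 0) : E2 n * E2 n = E2 n := by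
  rw [E2, ← Matrix.mul_kronecker_mul, Km_mul_Km hn]

lemma Mqap_eq {n : ℕ} (hn : 2 < n) :
    Mqap n = ((n:ℝ)^2)⁻¹ • JJ n + (((n:ℝ)) - 1)⁻¹ • E2 n := by
  have hn3 : (3:ℝ) ≤ (n:ℝ) := by exact_mod_cast hn
  have hn0 : (n:ℝ) ≠ 0 := by linarith
  have hn1 : (n:ℝ) - 1 ≠ 0 := by linarith
  have hα : ((n:ℝ)^2 - n)⁻¹ = ((n:ℝ) - 1)⁻¹ * (n:ℝ)⁻¹ := by
    rw [← mul_inv]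
    congr 1
    ring
  have hβ : ((n:ℝ)^2)⁻¹ = ((n:ℝ) - 1)⁻¹ * (n:ℝ)⁻¹ - ((n:ℝ) - 1)⁻¹ * (n:ℝ)⁻¹ * (n:ℝ)⁻¹ := by
    have h1 : (1 - (n:ℝ)⁻¹) = ((n:ℝ) - 1) * (n:ℝ)⁻¹ := by
      rw [sub_mul, mul_inv_cancel₀ hn0, one_mul]
    have h2 : ((n:ℝ) - 1)⁻¹ * (n:ℝ)⁻¹ - ((n:ℝ) - 1)⁻¹ * (n:ℝ)⁻¹ * (n:ℝ)⁻¹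
        = ((n:ℝ) - 1)⁻¹ * (n:ℝ)⁻¹ * (1 - (n:ℝ)⁻¹) := by ring
    rw [h2, h1, show ((n:ℝ) - 1)⁻¹ * (n:ℝ)⁻¹ * (((n:ℝ) - 1) * (n:ℝ)⁻¹)
      = (((n:ℝ) - 1)⁻¹ * ((n:ℝ) - 1)) * ((n:ℝ)⁻¹ * (n:ℝ)⁻¹) from by ring,
      inv_mul_cancel₀ hn1, one_mul, ← mul_inv, ← sq]
  have hKm : Km n = 1 + (-(n:ℝ)⁻¹) • Jn n := by
    rw [Km, neg_smul, ← sub_eq_add_neg]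
  unfold Mqap E2
  rw [hα, hβ, JJ_eq_kron, hKm]
  simp only [Matrix.add_kronecker, Matrix.kronecker_add, Matrix.smul_kronecker,
    Matrix.kronecker_smul, Matrix.one_kronecker_one]
  module

lemma Mqap_sq {n : ℕ} (hn : 2 < n) :
    Mqap n * Mqap n = ((n:ℝ)^2)⁻¹ • JJ n + ((((n:ℝ)) - 1)⁻¹)^2 • E2 n := by
  have hn3 : (3:ℝ) ≤ (n:ℝ) := by exact_mod_cast hn
  have hn0 : (n:ℝ) ≠ 0 := by linarith
  rw [Mqap_eq hn]
  rw [add_mul, mul_add, mul_add, Matrix.smul_mul, Matrix.smul_mul, Matrix.smul_mul,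
    Matrix.smul_mul, Matrix.mul_smul, Matrix.mul_smul, Matrix.mul_smul, Matrix.mul_smul,
    JJ_mul_JJ, JJ_mul_E2 hn0, E2_mul_JJ hn0, E2_mul_E2 hn0]
  have h : ((n:ℝ)^2)⁻¹ * (((n:ℝ)^2)⁻¹ * (n:ℝ)^2) = ((n:ℝ)^2)⁻¹ := by
    rw [inv_mul_cancel₀ (by positivity), mul_one]
  simp only [smul_zero, add_zero, zero_add, smul_smul]
  rw [h, pow_two (((n:ℝ)) - 1)⁻¹]

lemma Km_apply {n : ℕ} (i j : Fin n) :
    Km n i j = (if i = j then 1 else 0) - (n:ℝ)⁻¹ := by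
  simp [Km, Jn, Matrix.one_apply]

lemma E2_apply {n : ℕ} (p q : Fin n × Fin n) :
    E2 n p q = ((if p.1 = q.1 then 1 else 0) - (n:ℝ)⁻¹) *
      ((if p.2 = q.2 then 1 else 0) - (n:ℝ)⁻¹) := by
  rw [E2, Matrix.kroneckerMap_apply, Km_apply, Km_apply]

lemma E2_ne_diag {n : ℕ} (hn : 2 < n) {p q : Fin n × Fin n} (hpq : p ≠ q) :
    E2 n p q ≠ E2 n q q := by
  have hn3 : (3:ℝ) ≤ (n:ℝ) := by exact_mod_cast hn
  have hn0 : (0:ℝ) < (n:ℝ) := by linarith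
  have ha0 : 0 < (n:ℝ)⁻¹ := inv_pos.mpr hn0
  have ha3 : (n:ℝ)⁻¹ ≤ 1/3 := by
    rw [inv_le_comm₀ hn0 (by norm_num)]
    linarith
  set a : ℝ := (n:ℝ)⁻¹
  have hd : E2 n q q = (1 - a) * (1 - a) := by
    rw [E2_apply]
    simp
    rfl
  rcases eq_or_ne p.1 q.1 with h1' | h1' <;> rcases eq_or_ne p.2 q.2 with h2' | h2'
  · exact absurd (Prod.ext h1' h2') hpq
  · rw [E2_apply, if_pos h1', if_neg h2', hd]
    intro h
    nlinarith
  · rw [E2_apply, if_neg h1', if_pos h2', hd]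
    intro h
    nlinarith
  · rw [E2_apply, if_neg h1', if_neg h2', hd]
    intro h
    nlinarith


variable {m : Type*} [Fintype m] [DecidableEq m]

lemma stdBasis_transpose (i j : m) :
    (Matrix.single i j (1:ℝ))ᵀ = Matrix.single j i (1:ℝ) := by
  ext a b
  simp [Matrix.single, Matrix.transpose_apply, and_comm]

lemma trace_stdBasis_mul (i j : m) (B : Matrix m m ℝ) :
    (Matrix.single i j (1:ℝ) * B).trace = B j i := by
  simp [Matrix.trace, Matrix.diag, Matrix.mul_apply, Matrix.single, ite_and,
    Finset.sum_ite_eq]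

lemma dot_stdBasis (a b : m) (x : m → ℝ) :
    x ⬝ᵥ ((Matrix.single a b (1:ℝ)) *ᵥ x) = x a * x b := by
  rw [Matrix.single_mulVec]
  simp [dotProduct, Function.update_apply, Finset.sum_ite_eq]

lemma psd_stdBasis_diag (a : m) : (Matrix.single a a (1:ℝ)).PosSemidef := by
  rw [Matrix.posSemidef_iff_dotProduct_mulVec]
  constructor
  · unfold Matrix.IsHermitian
    rw [Matrix.conjTranspose_eq_transpose_of_trivial, stdBasis_transpose]
  · intro x
    rw [show star x = x from rfl, dot_stdBasis]
    exact mul_self_nonneg _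

lemma psd_G {a b : m} (hab : a ≠ b) :
    ((2⁻¹:ℝ) • (Matrix.single a b (1:ℝ) + Matrix.single b a (1:ℝ))
      + 1).PosSemidef := by
  rw [Matrix.posSemidef_iff_dotProduct_mulVec]
  constructor
  · unfold Matrix.IsHermitian
    rw [Matrix.conjTranspose_eq_transpose_of_trivial]
    rw [Matrix.transpose_add, Matrix.transpose_smul, Matrix.transpose_add,
      stdBasis_transpose, stdBasis_transpose, Matrix.transpose_one, add_comm
        (Matrix.single b a (1:ℝ))]
  · intro x
    rw [show star x = x from rfl]
    rw [Matrix.add_mulVec, Matrix.smul_mulVec, Matrix.add_mulVec, Matrix.one_mulVec,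
      dotProduct_add, dotProduct_smul, dotProduct_add,
      dot_stdBasis, dot_stdBasis]
    have h1 : x ⬝ᵥ x = ∑ i, x i * x i := rfl
    have h2 : x a * x a + x b * x b ≤ ∑ i, x i * x i := by
      have : ∑ i ∈ ({a, b} : Finset m), x i * x i ≤ ∑ i, x i * x i := by
        apply Finset.sum_le_sum_of_subset_of_nonneg (Finset.subset_univ _)
        intro i _ _
        exact mul_self_nonneg _
      rwa [Finset.sum_insert (by simpa using hab), Finset.sum_singleton] at this
    rw [h1]
    simp only [smul_eq_mul]
    nlinarith [sq_nonneg (x a + x b)]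

end aux

open Matrix

/-- For `n > 2`, let `S` be a subspace of `𝕊^{n²}` containing `M`, closed
under taking squares, such that the orthogonal projection `P` onto `S` (w.r.t. the trace
inner product) maps the doubly nonnegative cone `𝒟^{n²}` into itself. Then `S` is spanned
by a Jordan configuration: symmetric 0/1 matrices with pairwise disjoint supports summing
to `J_{n²}`, whose span contains `I_{n²}` and is closed under taking squares. -/
theorem stmt16 {n : ℕ} (hn : 2 < n)
    (S : Submodule ℝ (Matrix (Fin n × Fin n) (Fin n × Fin n) ℝ))
    (hS : ∀ X ∈ S, X.IsSymm)
    (hM : Mqap n ∈ S)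
    (hsq : ∀ X ∈ S, X * X ∈ S)
    (P : Matrix (Fin n × Fin n) (Fin n × Fin n) ℝ →ₗ[ℝ]
      Matrix (Fin n × Fin n) (Fin n × Fin n) ℝ)
    (hrange : ∀ X : Matrix (Fin n × Fin n) (Fin n × Fin n) ℝ, X.IsSymm → P X ∈ S)
    (hfix : ∀ X ∈ S, P X = X)
    (hselfadj : ∀ X Y : Matrix (Fin n × Fin n) (Fin n × Fin n) ℝ, X.IsSymm → Y.IsSymm →
      (P X * Y).trace = (X * P Y).trace)
    (hD : ∀ X : Matrix (Fin n × Fin n) (Fin n × Fin n) ℝ,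
      X.PosSemidef → (∀ a b, 0 ≤ X a b) → (P X).PosSemidef ∧ ∀ a b, 0 ≤ P X a b) :
    ∃ (k : ℕ) (B : Fin k → Matrix (Fin n × Fin n) (Fin n × Fin n) ℝ),
      (∀ i, (B i).IsSymm) ∧
      (∀ i a b, B i a b = 0 ∨ B i a b = 1) ∧
      (∀ i j, i ≠ j → ∀ a b, B i a b = 0 ∨ B j a b = 0) ∧
      (∑ i, B i = JJ n) ∧
      (1 : Matrix (Fin n × Fin n) (Fin n × Fin n) ℝ) ∈ Submodule.span ℝ (Set.range B) ∧
      (∀ i j, B i * B j + B j * B i ∈ Submodule.span ℝ (Set.range B)) ∧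
      Submodule.span ℝ (Set.range B) = S := by
  classical
  have hn3 : (3:ℝ) ≤ (n:ℝ) := by exact_mod_cast hn
  have hn0 : (n:ℝ) ≠ 0 := by linarith
  have hn1 : (n:ℝ) - 1 ≠ 0 := by linarith
  -- E2 and JJ belong to S
  have hM' : ((n:ℝ)^2)⁻¹ • JJ n + ((n:ℝ) - 1)⁻¹ • E2 n ∈ S := by
    rw [← Mqap_eq hn]; exact hM
  have hM2' : ((n:ℝ)^2)⁻¹ • JJ n + (((n:ℝ) - 1)⁻¹)^2 • E2 n ∈ S := by
    rw [← Mqap_sq hn]; exact hsq _ hM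
  have hcpos : 0 < ((n:ℝ) - 1)⁻¹ := inv_pos.mpr (by linarith)
  have hclt : ((n:ℝ) - 1)⁻¹ < 1 := by
    rw [inv_lt_one_iff₀]
    right; linarith
  have hcne : ((n:ℝ) - 1)⁻¹ - (((n:ℝ) - 1)⁻¹)^2 ≠ 0 := by nlinarith
  have hE2S : E2 n ∈ S := by
    have h := S.sub_mem hM' hM2'
    have heq : (((n:ℝ)^2)⁻¹ • JJ n + ((n:ℝ) - 1)⁻¹ • E2 n) -
        (((n:ℝ)^2)⁻¹ • JJ n + (((n:ℝ) - 1)⁻¹)^2 • E2 n)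
        = (((n:ℝ) - 1)⁻¹ - (((n:ℝ) - 1)⁻¹)^2) • E2 n := by module
    rw [heq] at h
    have h2 := S.smul_mem (((n:ℝ) - 1)⁻¹ - (((n:ℝ) - 1)⁻¹)^2)⁻¹ h
    rwa [smul_smul, inv_mul_cancel₀ hcne, one_smul] at h2
  have hJJS : JJ n ∈ S := by
    have h := S.sub_mem hM' (S.smul_mem (((n:ℝ) - 1)⁻¹) hE2S)
    have heq : (((n:ℝ)^2)⁻¹ • JJ n + ((n:ℝ) - 1)⁻¹ • E2 n) - ((n:ℝ) - 1)⁻¹ • E2 n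
        = ((n:ℝ)^2)⁻¹ • JJ n := by module
    rw [heq] at h
    have h2 := S.smul_mem ((n:ℝ)^2) h
    rwa [smul_smul, mul_inv_cancel₀ (by positivity), one_smul] at h2
  -- the projection of the identity
  have hNS : P 1 ∈ S := hrange 1 Matrix.isSymm_one
  have hNsymm : (P 1).IsSymm := hS _ hNS
  have htrN : ∀ X ∈ S, (P 1 * X).trace = X.trace := by
    intro X hX
    have h := hselfadj 1 X Matrix.isSymm_one (hS X hX)
    rwa [one_mul, hfix X hX] at h
  set N := P 1 with hNdef
  have hN2S : N * N ∈ S := hsq N hNS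
  have hN3S : N * N * N ∈ S := by
    have h1 : (N + N * N) * (N + N * N) ∈ S := hsq _ (S.add_mem hNS hN2S)
    have h2 : (N * N) * (N * N) ∈ S := hsq _ hN2S
    have hmem : (N + N * N) * (N + N * N) - N * N - (N * N) * (N * N) ∈ S :=
      S.sub_mem (S.sub_mem h1 hN2S) h2
    have heq : (N + N * N) * (N + N * N) - N * N - (N * N) * (N * N)
        = N * N * N + N * N * N := by noncomm_ring
    rw [heq] at hmem
    have h3 := S.smul_mem (2⁻¹ : ℝ) hmem
    have heq2 : (2⁻¹ : ℝ) • (N * N * N + N * N * N) = N * N * N := by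
      rw [show N * N * N + N * N * N = (2:ℝ) • (N * N * N) from (two_smul ℝ _).symm,
        smul_smul, inv_mul_cancel₀ (by norm_num : (2:ℝ) ≠ 0), one_smul]
    rwa [heq2] at h3
  have hNN : N * N = N := by
    have t1 : (N * N).trace = N.trace := htrN N hNS
    have t2 : (N * (N * N)).trace = (N * N).trace := htrN _ hN2S
    have t3 : (N * (N * N * N)).trace = (N * N * N).trace := htrN _ hN3S
    have hfr : ((N * N - N)ᵀ * (N * N - N)).trace = 0 := by
      rw [Matrix.transpose_sub, Matrix.transpose_mul, hNsymm.eq]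
      have heq : (N * N - N) * (N * N - N)
          = N * (N * N * N) - N * (N * N) - N * (N * N) + N * N := by noncomm_ring
      rw [heq, Matrix.trace_add, Matrix.trace_sub, Matrix.trace_sub, t3, t2, t1]
      have t2' : (N * N * N).trace = N.trace := by
        rw [show N * N * N = N * (N * N) from by noncomm_ring, t2, t1]
      rw [t2']
      ring
    have := frob_zero _ hfr
    exact sub_eq_zero.mp this
  have hNfix : ∀ X ∈ S, N * X = X := by
    intro X hX
    have hXs : Xᵀ = X := (hS X hX).eq
    have hXX : X * X ∈ S := hsq X hX
    have hfr : ((N * X - X)ᵀ * (N * X - X)).trace = 0 := by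
      rw [Matrix.transpose_sub, Matrix.transpose_mul, hNsymm.eq, hXs]
      have heq : (X * N - X) * (N * X - X)
          = X * (N * N) * X - X * N * X - X * N * X + X * X := by noncomm_ring
      rw [heq, hNN]
      have hcyc : (X * N * X).trace = (X * X).trace := by
        rw [Matrix.trace_mul_cycle, ← Matrix.trace_mul_comm, htrN _ hXX]
      rw [Matrix.trace_add, Matrix.trace_sub, Matrix.trace_sub, hcyc]
      ring
    have := frob_zero _ hfr
    exact sub_eq_zero.mp this
  -- N is entrywise nonnegative
  have hD1 := hD 1 Matrix.PosDef.one.posSemidef (by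
    intro a b
    by_cases h : a = b <;> simp [Matrix.one_apply, h])
  have hNnn : ∀ p q : Fin n × Fin n, 0 ≤ N p q := hD1.2
  -- N = 1
  have hNone : N = (1 : Matrix (Fin n × Fin n) (Fin n × Fin n) ℝ) := by
    have hones : N *ᵥ (fun _ : Fin n × Fin n => (1:ℝ)) = fun _ => (1:ℝ) := by
      have hJ := hNfix (JJ n) hJJS
      funext j
      have := congrFun (congrFun hJ j) j
      rw [Matrix.mul_apply] at this
      simpa [JJ, Matrix.mulVec, dotProduct] using this
    have hoff : ∀ p q : Fin n × Fin n, p ≠ q → N p q = 0 := by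
      intro p q hpq
      by_contra hne
      have hE2fix : N *ᵥ (fun k => E2 n k q) = fun k => E2 n k q := by
        have hE := hNfix (E2 n) hE2S
        funext j
        have := congrFun (congrFun hE j) q
        rw [Matrix.mul_apply] at this
        simpa [Matrix.mulVec, dotProduct] using this
      have r1 := ratio_lemma N hNnn hNsymm hNN hne (fun _ => (1:ℝ)) hones
      have r2 := ratio_lemma N hNnn hNsymm hNN hne (fun k => E2 n k q) hE2fix
      simp only [mul_one] at r1
      rw [r1] at r2
      have hE2eq : E2 n q q = E2 n p q := mul_left_cancel₀ (r1 ▸ hne) r2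
      exact E2_ne_diag hn hpq hE2eq.symm
    have hdiag : ∀ p : Fin n × Fin n, N p p = 1 := by
      intro p
      have hself : N p p * N p p = N p p := by
        have h := congrFun (congrFun hNN p) p
        rw [Matrix.mul_apply] at h
        rwa [Finset.sum_eq_single p (fun k _ hk => by rw [hoff p k (Ne.symm hk), zero_mul])
          (fun h => absurd (Finset.mem_univ p) h)] at h
      have hrow : N p p ≠ 0 := by
        intro h0
        have := congrFun hones p
        simp only [Matrix.mulVec, dotProduct, mul_one] at this
        rw [Finset.sum_eq_single p (fun k _ hk => hoff p k (Ne.symm hk))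
          (fun h => absurd (Finset.mem_univ p) h), h0] at this
        exact one_ne_zero this.symm
      have : N p p * N p p - N p p = 0 := by rw [hself, sub_self]
      have hfac : N p p * (N p p - 1) = 0 := by ring_nf; linarith [this]
      rcases mul_eq_zero.mp hfac with h | h
      · exact absurd h hrow
      · linarith [sub_eq_zero.mp h]
    ext p q
    by_cases h : p = q
    · subst h; rw [hdiag, Matrix.one_apply_eq]
    · rw [hoff p q h, Matrix.one_apply_ne h]
  have h1S : (1 : Matrix (Fin n × Fin n) (Fin n × Fin n) ℝ) ∈ S := hNone ▸ hNS
  have hP1 : P (1 : Matrix (Fin n × Fin n) (Fin n × Fin n) ℝ) = 1 := by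
    rw [← hNdef]; exact hNone
  -- the symmetrization linear map and the projection matrix R
  set symLM : Matrix (Fin n × Fin n) (Fin n × Fin n) ℝ →ₗ[ℝ]
      Matrix (Fin n × Fin n) (Fin n × Fin n) ℝ :=
    { toFun := fun X => (2⁻¹:ℝ) • (X + Xᵀ)
      map_add' := by
        intro X Y
        rw [Matrix.transpose_add]
        module
      map_smul' := by
        intro c X
        rw [Matrix.transpose_smul, RingHom.id_apply]
        module } with hsymLM
  have hsymLM_apply : ∀ X, symLM X = (2⁻¹:ℝ) • (X + Xᵀ) := fun X => rfl
  have hsymLM_isSymm : ∀ X, (symLM X).IsSymm := by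
    intro X
    apply Matrix.IsSymm.ext
    intro i j
    rw [hsymLM_apply]
    simp [Matrix.smul_apply, Matrix.add_apply, Matrix.transpose_apply, add_comm]
  have hsymLM_fix : ∀ X ∈ S, symLM X = X := by
    intro X hX
    rw [hsymLM_apply, (hS X hX).eq, ← two_smul ℝ X, smul_smul,
      inv_mul_cancel₀ (by norm_num : (2:ℝ) ≠ 0), one_smul]
  set PS := P.comp symLM with hPS
  have hPS_mem : ∀ X, PS X ∈ S := fun X => hrange _ (hsymLM_isSymm X)
  have hPS_fix : ∀ X ∈ S, PS X = X := by
    intro X hX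
    rw [hPS, LinearMap.comp_apply, hsymLM_fix X hX]
    exact hfix X hX
  set E : (Fin n × Fin n) × (Fin n × Fin n) → Matrix (Fin n × Fin n) (Fin n × Fin n) ℝ :=
    fun q => Matrix.single q.1 q.2 (1:ℝ) with hE
  set R : Matrix ((Fin n × Fin n) × (Fin n × Fin n)) ((Fin n × Fin n) × (Fin n × Fin n)) ℝ :=
    Matrix.of (fun p q => PS (E q) p.1 p.2) with hR
  -- decomposition of a matrix in the standard basis
  have hbasis : ∀ X : Matrix (Fin n × Fin n) (Fin n × Fin n) ℝ,
      X = ∑ q : (Fin n × Fin n) × (Fin n × Fin n), X q.1 q.2 • E q := by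
    intro X
    rw [Fintype.sum_prod_type]
    conv_lhs => rw [Matrix.matrix_eq_sum_single X]
    refine Finset.sum_congr rfl fun i _ => Finset.sum_congr rfl fun j _ => ?_
    rw [hE, Matrix.smul_single, smul_eq_mul, mul_one]
  -- action of R on coordinate vectors
  have hRmul : ∀ X : Matrix (Fin n × Fin n) (Fin n × Fin n) ℝ,
      R *ᵥ (fun k => X k.1 k.2) = fun k => PS X k.1 k.2 := by
    intro X
    funext p
    have expand : PS X = ∑ q : (Fin n × Fin n) × (Fin n × Fin n), X q.1 q.2 • PS (E q) := by
      conv_lhs => rw [hbasis X]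
      rw [map_sum]
      exact Finset.sum_congr rfl fun q _ => by rw [_root_.map_smul]
    calc (R *ᵥ fun k => X k.1 k.2) p = ∑ q, PS (E q) p.1 p.2 * X q.1 q.2 := rfl
      _ = (∑ q : (Fin n × Fin n) × (Fin n × Fin n), X q.1 q.2 • PS (E q)) p.1 p.2 := by
          rw [Matrix.sum_apply]
          exact Finset.sum_congr rfl fun q _ => by
            rw [Matrix.smul_apply, smul_eq_mul, mul_comm]
      _ = PS X p.1 p.2 := by rw [← expand]
  have hRfix : ∀ X ∈ S, R *ᵥ (fun k => X k.1 k.2) = fun k => X k.1 k.2 := by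
    intro X hX
    rw [hRmul X, hPS_fix X hX]
  have hRid : R * R = R := by
    ext p q
    have h1 : (R * R) p q = (R *ᵥ fun k => PS (E q) k.1 k.2) p := by
      rw [Matrix.mul_apply]
      rfl
    rw [h1, hRfix _ (hPS_mem (E q))]
    rfl
  -- trace picks out entries
  have htr_entry : ∀ (p : (Fin n × Fin n) × (Fin n × Fin n))
      (B : Matrix (Fin n × Fin n) (Fin n × Fin n) ℝ), B.IsSymm →
      (symLM (E p) * B).trace = B p.1 p.2 := by
    intro p B hB
    rw [hsymLM_apply, hE, Matrix.smul_mul, Matrix.trace_smul, Matrix.add_mul,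
      Matrix.trace_add, stdBasis_transpose, trace_stdBasis_mul, trace_stdBasis_mul,
      hB.apply p.1 p.2, smul_eq_mul]
    ring
  have hPSE : ∀ q, PS (E q) = P (symLM (E q)) := fun q => rfl
  have hRsym : R.IsSymm := by
    apply Matrix.IsSymm.ext
    intro p q
    show PS (E p) q.1 q.2 = PS (E q) p.1 p.2
    rw [← htr_entry q (PS (E p)) (hS _ (hPS_mem _)), hPSE p,
      (hselfadj (symLM (E q)) (symLM (E p)) (hsymLM_isSymm _) (hsymLM_isSymm _)).symm,
      ← hPSE q, Matrix.trace_mul_comm, htr_entry p (PS (E q)) (hS _ (hPS_mem _))]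
  -- entrywise nonnegativity of R
  have hWdiag_nn : ∀ (c : Fin n × Fin n) (a b : Fin n × Fin n), 0 ≤ PS (E (c, c)) a b := by
    intro c a b
    have hEsym : symLM (E (c, c)) = E (c, c) := by
      rw [hsymLM_apply, hE]
      show (2⁻¹:ℝ) • (Matrix.single c c (1:ℝ) + (Matrix.single c c (1:ℝ))ᵀ) = _
      rw [stdBasis_transpose, ← two_smul ℝ, smul_smul,
        inv_mul_cancel₀ (by norm_num : (2:ℝ) ≠ 0), one_smul]
    have hEnn : ∀ a b : Fin n × Fin n, 0 ≤ Matrix.single c c (1:ℝ) a b := by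
      intro a b
      rw [Matrix.single]
      dsimp only [Matrix.of_apply]
      split <;> norm_num
    have hh := hD (E (c, c)) (psd_stdBasis_diag c) hEnn
    rw [hPSE, hEsym]
    exact hh.2 a b
  have hRnn : ∀ p q, 0 ≤ R p q := by
    have hdiagcase : ∀ (q : (Fin n × Fin n) × (Fin n × Fin n)), q.1 = q.2 →
        ∀ p, 0 ≤ R p q := by
      intro q hq p
      show 0 ≤ PS (E q) p.1 p.2
      have : E q = E (q.1, q.1) := by rw [hE]; dsimp only; rw [← hq]
      rw [this]
      exact hWdiag_nn q.1 p.1 p.2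
    intro p q
    rcases eq_or_ne q.1 q.2 with hq | hq
    · exact hdiagcase q hq p
    · rcases eq_or_ne p.1 p.2 with hp | hp
      · rw [← hRsym.apply]
        exact hdiagcase p hp q
      · -- both off-diagonal
        set G := (2⁻¹:ℝ) • (Matrix.single q.1 q.2 (1:ℝ) +
          Matrix.single q.2 q.1 (1:ℝ)) + 1 with hG
        have hGnn : ∀ a b : Fin n × Fin n, 0 ≤ G a b := by
          intro a b
          rw [hG]
          simp only [Matrix.add_apply, Matrix.smul_apply, Matrix.single,
            Matrix.one_apply, Matrix.of_apply, smul_eq_mul]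
          split_ifs <;> norm_num
        have hDG := hD G (psd_G hq) hGnn
        have hGsym : G = symLM (E q) + 1 := by
          rw [hsymLM_apply, hE, hG]
          show _ = (2⁻¹:ℝ) • (Matrix.single q.1 q.2 (1:ℝ) +
            (Matrix.single q.1 q.2 (1:ℝ))ᵀ) + 1
          rw [stdBasis_transpose]
        have hPG : P G = PS (E q) + 1 := by
          rw [hGsym, map_add, ← hPSE q, hP1]
        have h := hDG.2 p.1 p.2
        rw [hPG, Matrix.add_apply, Matrix.one_apply_ne hp, add_zero] at h
        exact h
  -- key separation property
  have hvecJJ : (fun k : (Fin n × Fin n) × (Fin n × Fin n) => JJ n k.1 k.2) =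
      fun _ => (1:ℝ) := rfl
  have hkey : ∀ p q : (Fin n × Fin n) × (Fin n × Fin n), R p q ≠ 0 →
      ∀ X ∈ S, X q.1 q.2 = X p.1 p.2 := by
    intro p q hne X hX
    have r1 := ratio_lemma R hRnn hRsym hRid hne _ (hRfix (JJ n) hJJS)
    have r1' : R p p = R p q := by simpa [JJ] using r1
    have r2 := ratio_lemma R hRnn hRsym hRid hne _ (hRfix X hX)
    rw [r1'] at r2
    exact mul_left_cancel₀ hne r2
  have hRqq : ∀ q : (Fin n × Fin n) × (Fin n × Fin n), R q q ≠ 0 := by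
    intro q h0
    have hrow : ∀ k, R q k = 0 := by
      intro k
      have h := congrFun (congrFun hRid q) q
      rw [Matrix.mul_apply] at h
      rw [h0] at h
      have hterms : ∀ i ∈ Finset.univ, 0 ≤ R q i * R i q := by
        intro i _
        rw [hRsym.apply i q]
        exact mul_self_nonneg _
      have := (Finset.sum_eq_zero_iff_of_nonneg hterms).mp h k (Finset.mem_univ k)
      rw [hRsym.apply k q] at this
      have h2 : R k q = 0 := mul_self_eq_zero.mp this
      rw [hRsym.apply k q]
      exact h2
    have h1 := congrFun (hRfix (JJ n) hJJS) q
    simp only [Matrix.mulVec, dotProduct, JJ, Matrix.of_apply, mul_one] at h1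
    rw [Finset.sum_eq_zero (fun k _ => hrow k)] at h1
    exact one_ne_zero h1.symm
  -- indicator matrices of equivalence classes lie in S
  have hBmem : ∀ q : (Fin n × Fin n) × (Fin n × Fin n),
      (Matrix.of fun a b => if (∀ X ∈ S, X a b = X q.1 q.2) then (1:ℝ) else 0) ∈ S := by
    intro q
    have hW : PS (E q) ∈ S := hPS_mem (E q)
    have hBval : (Matrix.of fun a b => if (∀ X ∈ S, X a b = X q.1 q.2) then (1:ℝ) else 0)
        = (R q q)⁻¹ • PS (E q) := by
      ext a b
      simp only [Matrix.smul_apply, Matrix.of_apply, smul_eq_mul]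
      by_cases hr : ∀ X ∈ S, X a b = X q.1 q.2
      · have h1 : PS (E q) a b = R q q := hr (PS (E q)) hW
        rw [if_pos hr, h1, inv_mul_cancel₀ (hRqq q)]
      · have h0 : R (a, b) q = 0 := by
          by_contra hne
          exact hr fun X hX => (hkey (a, b) q hne X hX).symm
        rw [if_neg hr, show PS (E q) a b = R (a, b) q from rfl, h0, mul_zero]
    rw [hBval]
    exact S.smul_mem _ hW
  -- every element of S is constant on classes; build the partition
  let sd : Setoid ((Fin n × Fin n) × (Fin n × Fin n)) :=
    ⟨fun p q => ∀ X ∈ S, X p.1 p.2 = X q.1 q.2,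
      ⟨fun p X _ => rfl, fun h X hX => (h X hX).symm,
        fun h1 h2 X hX => (h1 X hX).trans (h2 X hX)⟩⟩
  letI : Fintype (Quotient sd) := Fintype.ofFinite _
  refine ⟨Fintype.card (Quotient sd), ?_⟩
  set e : Quotient sd ≃ Fin (Fintype.card (Quotient sd)) := Fintype.equivFin _ with he
  refine ⟨fun i => Matrix.of fun a b => if e (Quotient.mk sd (a, b)) = i then (1:ℝ) else 0,
    ?_, ?_, ?_, ?_, ?_, ?_, ?_⟩
  case _ => -- symmetry
    intro i
    apply Matrix.IsSymm.ext
    intro a b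
    simp only [Matrix.of_apply]
    have hq : Quotient.mk sd (b, a) = Quotient.mk sd (a, b) :=
      Quotient.sound fun X hX => (hS X hX).apply a b
    rw [hq]
  case _ => -- 0/1 entries
    intro i a b
    simp only [Matrix.of_apply]
    by_cases h : e (Quotient.mk sd (a, b)) = i
    · right; rw [if_pos h]
    · left; rw [if_neg h]
  case _ => -- disjoint supports
    intro i j hij a b
    simp only [Matrix.of_apply]
    by_cases h : e (Quotient.mk sd (a, b)) = i
    · right; rw [if_neg (by rw [h]; exact hij)]
    · left; rw [if_neg h]
  case _ => -- sum of the indicators is the all-ones matrix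
    ext a b
    rw [Matrix.sum_apply]
    simp only [Matrix.of_apply]
    rw [Finset.sum_ite_eq Finset.univ (e (Quotient.mk sd (a, b)))
      (fun _ : Fin (Fintype.card (Quotient sd)) => (1:ℝ)), if_pos (Finset.mem_univ _)]
    simp [JJ]
  all_goals {
  have hBclass : ∀ i, (Matrix.of fun a b =>
      if e (Quotient.mk sd (a, b)) = i then (1:ℝ) else 0)
      = Matrix.of fun a b => if (∀ X ∈ S, X a b =
          X ((e.symm i).out).1 ((e.symm i).out).2) then (1:ℝ) else 0 := by
    intro i
    ext a b
    simp only [Matrix.of_apply]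
    refine if_congr ⟨?_, ?_⟩ rfl rfl
    · intro h X hX
      have h1 : Quotient.mk sd (a, b) = e.symm i := by
        rw [← h]; exact (e.symm_apply_apply _).symm
      have h2 : Quotient.mk sd (a, b) = Quotient.mk sd ((e.symm i).out) := by
        rw [h1, Quotient.out_eq]
      exact Quotient.exact h2 X hX
    · intro h
      have h2 : Quotient.mk sd (a, b) = Quotient.mk sd ((e.symm i).out) := Quotient.sound h
      rw [h2, Quotient.out_eq, e.apply_symm_apply]
  have hBiS : ∀ i, (Matrix.of fun a b =>
      if e (Quotient.mk sd (a, b)) = i then (1:ℝ) else 0) ∈ S := by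
    intro i
    rw [hBclass i]
    exact hBmem ((e.symm i).out)
  have hspanS : ∀ X ∈ S, X ∈ Submodule.span ℝ
      (Set.range fun i => Matrix.of fun a b =>
        if e (Quotient.mk sd (a, b)) = i then (1:ℝ) else 0) := by
    intro X hX
    have hXsum : X = ∑ i, X ((e.symm i).out).1 ((e.symm i).out).2 •
        (Matrix.of fun a b => if e (Quotient.mk sd (a, b)) = i then (1:ℝ) else 0) := by
      ext a b
      rw [Matrix.sum_apply]
      rw [Finset.sum_eq_single (e (Quotient.mk sd (a, b)))
        (fun i _ hi => by
          simp only [Matrix.smul_apply, Matrix.of_apply, smul_eq_mul]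
          rw [if_neg (fun hh => hi hh.symm), mul_zero])
        (fun h => absurd (Finset.mem_univ _) h)]
      simp only [Matrix.smul_apply, Matrix.of_apply, smul_eq_mul, eq_self_iff_true, if_true,
        mul_one]
      have h2 : Quotient.mk sd ((e.symm (e (Quotient.mk sd (a, b)))).out)
          = Quotient.mk sd (a, b) := by
        rw [e.symm_apply_apply, Quotient.out_eq]
      exact (Quotient.exact h2 X hX).symm
    have hmem : (∑ i, X ((e.symm i).out).1 ((e.symm i).out).2 •
        (Matrix.of fun a b => if e (Quotient.mk sd (a, b)) = i then (1:ℝ) else 0)) ∈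
        Submodule.span ℝ (Set.range fun i => Matrix.of fun a b =>
          if e (Quotient.mk sd (a, b)) = i then (1:ℝ) else 0) :=
      Submodule.sum_mem _ fun i _ =>
        Submodule.smul_mem _ _ (Submodule.subset_span ⟨i, rfl⟩)
    rwa [← hXsum] at hmem
  first
  | -- identity in the span
    exact hspanS 1 h1S
  | -- products
    (intro i j
     have hmem : ((Matrix.of fun a b => if e (Quotient.mk sd (a, b)) = i then (1:ℝ) else 0) +
          (Matrix.of fun a b => if e (Quotient.mk sd (a, b)) = j then (1:ℝ) else 0)) *
         ((Matrix.of fun a b => if e (Quotient.mk sd (a, b)) = i then (1:ℝ) else 0) +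
          (Matrix.of fun a b => if e (Quotient.mk sd (a, b)) = j then (1:ℝ) else 0)) -
         (Matrix.of fun a b => if e (Quotient.mk sd (a, b)) = i then (1:ℝ) else 0) *
         (Matrix.of fun a b => if e (Quotient.mk sd (a, b)) = i then (1:ℝ) else 0) -
         (Matrix.of fun a b => if e (Quotient.mk sd (a, b)) = j then (1:ℝ) else 0) *
         (Matrix.of fun a b => if e (Quotient.mk sd (a, b)) = j then (1:ℝ) else 0) ∈ S := by
       exact S.sub_mem (S.sub_mem (hsq _ (S.add_mem (hBiS i) (hBiS j))) (hsq _ (hBiS i)))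
         (hsq _ (hBiS j))
     have heq : ((Matrix.of fun a b => if e (Quotient.mk sd (a, b)) = i then (1:ℝ) else 0) +
          (Matrix.of fun a b => if e (Quotient.mk sd (a, b)) = j then (1:ℝ) else 0)) *
         ((Matrix.of fun a b => if e (Quotient.mk sd (a, b)) = i then (1:ℝ) else 0) +
          (Matrix.of fun a b => if e (Quotient.mk sd (a, b)) = j then (1:ℝ) else 0)) -
         (Matrix.of fun a b => if e (Quotient.mk sd (a, b)) = i then (1:ℝ) else 0) *
         (Matrix.of fun a b => if e (Quotient.mk sd (a, b)) = i then (1:ℝ) else 0) -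
         (Matrix.of fun a b => if e (Quotient.mk sd (a, b)) = j then (1:ℝ) else 0) *
         (Matrix.of fun a b => if e (Quotient.mk sd (a, b)) = j then (1:ℝ) else 0)
         = (Matrix.of fun a b => if e (Quotient.mk sd (a, b)) = i then (1:ℝ) else 0) *
           (Matrix.of fun a b => if e (Quotient.mk sd (a, b)) = j then (1:ℝ) else 0) +
           (Matrix.of fun a b => if e (Quotient.mk sd (a, b)) = j then (1:ℝ) else 0) *
           (Matrix.of fun a b => if e (Quotient.mk sd (a, b)) = i then (1:ℝ) else 0) := by
       noncomm_ring
     rw [heq] at hmem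
     exact hspanS _ hmem)
  | -- span equals S
    (apply le_antisymm
     · rw [Submodule.span_le]
       rintro Y ⟨i, rfl⟩
       exact hBiS i
     · intro X hX
       exact hspanS X hX)
  }
end
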